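/- arXiv:1401.3263 — 15 statements merged into one kernel-verified Lean document; each statement's English description precedes it below -/
import Mathlib

section
/- Let (X,⋆) be a topological quasigroup on a nonempty compact Hausdorff, totally disconnected, second-countable space, and let T : X → X be an expansive automorphism of (X,⋆). Then there exist a finite type A, a nonempty closed shift-invariant subset Λ ⊆ (ℤ → A), and a homeomorphism ζ : X → Λ with ζ ∘ T = σ ∘ ζ on Λ, such that the transported operation x * y := ζ(ζ⁻¹(x) ⋆ ζ⁻¹(y)) on Λ is a block operation: there exist ℓ, r ≥ 0 and a local rule ρ : (Fin (ℓ+r+1) → A) → (Fin (ℓ+r+1) → A) → A such that for all x, y ∈ Λ and all j ∈ ℤ, (x * y) j = ρ (fun m => x (j - ℓ + m)) (fun m => y (j - ℓ + m)). -/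
theorem statement0 {X : Type*} [TopologicalSpace X] [CompactSpace X] [T2Space X]
    [TotallyDisconnectedSpace X] [SecondCountableTopology X] [Nonempty X]
    (star : X → X → X)
    (hcont : Continuous fun p : X × X => star p.1 p.2)
    (hleft : ∀ a b c : X, star a b = star a c → b = c)
    (hright : ∀ a b c : X, star b a = star c a → b = c)
    (T : X ≃ₜ X)
    (hhom : ∀ x y : X, T (star x y) = star (T x) (T y))
    (𝒰 : Finset (Set X))
    (h𝒰clopen : ∀ U ∈ 𝒰, IsClopen U)
    (h𝒰cover : ∀ x : X, ∃ U ∈ 𝒰, x ∈ U)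
    (h𝒰disj : ∀ U ∈ 𝒰, ∀ V ∈ 𝒰, U ≠ V → Disjoint U V)
    (h𝒰exp : ∀ x y : X, x ≠ y → ∃ n : ℤ, ∀ U ∈ 𝒰,
      ¬ ((T.toEquiv ^ n) x ∈ U ∧ (T.toEquiv ^ n) y ∈ U)) :
    ∃ (N : ℕ) (Λ : Set (ℤ → Fin N)),
      Λ.Nonempty ∧ IsClosed Λ ∧
      (fun x : ℤ → Fin N => (fun i => x (i + 1) : ℤ → Fin N)) '' Λ = Λ ∧
      ∃ ζ : X ≃ₜ Λ,
        (∀ x : X, ((ζ (T x) : ℤ → Fin N)) = fun i => (ζ x : ℤ → Fin N) (i + 1)) ∧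
        ∃ (ℓ r : ℕ) (ρ : (Fin (ℓ + r + 1) → Fin N) → (Fin (ℓ + r + 1) → Fin N) → Fin N),
          ∀ (x y : Λ) (j : ℤ),
            ((ζ (star (ζ.symm x) (ζ.symm y)) : ℤ → Fin N)) j =
              ρ (fun m => (x : ℤ → Fin N) (j - (ℓ : ℤ) + (m : ℤ)))
                (fun m => (y : ℤ → Fin N) (j - (ℓ : ℤ) + (m : ℤ))) := by
  classical
  clear hleft hright
  -- choose the member of the partition containing each point
  choose Uof hUof hmemU using h𝒰cover
  have hUeq : ∀ (x : X) (V : Set X), V ∈ 𝒰 → x ∈ V → Uof x = V := by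
    intro x V hV hxV
    by_contra hne
    exact Set.disjoint_left.mp (h𝒰disj _ (hUof x) _ hV hne) (hmemU x) hxV
  -- the symbol map
  set N := Fintype.card {U // U ∈ 𝒰} with hNdef
  obtain ⟨idx, hidx_cont, hidx_eq, hidx_mem⟩ :
      ∃ idx : X → Fin N,
        Continuous idx ∧ (∀ x y : X, x ∈ Uof y → idx x = idx y) ∧
        (∀ x y : X, idx x = idx y → y ∈ Uof x) := by
    refine ⟨fun x => Fintype.equivFin {U // U ∈ 𝒰} ⟨Uof x, hUof x⟩, ?_, ?_, ?_⟩
    · apply IsLocallyConstant.continuous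
      rw [IsLocallyConstant.iff_exists_open]
      intro x
      refine ⟨Uof x, (h𝒰clopen _ (hUof x)).isOpen, hmemU x, fun y hy => ?_⟩
      have : Uof y = Uof x := hUeq y (Uof x) (hUof x) hy
      simp [this]
    · intro x y hx
      have : Uof x = Uof y := hUeq x (Uof y) (hUof y) hx
      simp [this]
    · intro x y h
      have h2 : Uof x = Uof y :=
        congrArg Subtype.val ((Fintype.equivFin {U // U ∈ 𝒰}).injective h)
      rw [h2]; exact hmemU y
  -- iterates
  have hTz_add : ∀ (m n : ℤ) (x : X),
      (T.toEquiv ^ (m + n)) x = (T.toEquiv ^ m) ((T.toEquiv ^ n) x) := by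
    intro m n x
    rw [zpow_add]; rfl
  have hTz_one : ∀ x : X, (T.toEquiv ^ (1 : ℤ)) x = T x := by intro x; rw [zpow_one]; rfl
  have hTz_negone : ∀ x : X, (T.toEquiv ^ (-1 : ℤ)) x = T.symm x := by
    intro x; rw [zpow_neg_one]; rfl
  have hTz_cont : ∀ n : ℤ, Continuous fun x : X => (T.toEquiv ^ n) x := by
    intro n
    induction n using Int.induction_on with
    | zero => simpa using continuous_id'
    | succ k ih =>
        have e : (fun x : X => (T.toEquiv ^ ((k : ℤ) + 1)) x)
            = fun x : X => (T.toEquiv ^ (k : ℤ)) (T x) := by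
          funext x; rw [hTz_add, hTz_one]
        rw [e]; exact ih.comp T.continuous
    | pred k ih =>
        have e : (fun x : X => (T.toEquiv ^ (-(k : ℤ) - 1)) x)
            = fun x : X => (T.toEquiv ^ (-(k : ℤ))) (T.symm x) := by
          funext x
          rw [show -(k : ℤ) - 1 = -(k : ℤ) + (-1) from by ring, hTz_add, hTz_negone]
        rw [e]; exact ih.comp T.symm.continuous
  have hsymm_hom : ∀ a b : X, T.symm (star a b) = star (T.symm a) (T.symm b) := by
    intro a b
    apply T.injective
    rw [hhom, T.apply_symm_apply, T.apply_symm_apply, T.apply_symm_apply]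
  have hTz_hom : ∀ (n : ℤ) (a b : X),
      (T.toEquiv ^ n) (star a b) = star ((T.toEquiv ^ n) a) ((T.toEquiv ^ n) b) := by
    intro n
    induction n using Int.induction_on with
    | zero => intro a b; simp
    | succ k ih =>
        intro a b
        rw [show (k : ℤ) + 1 = 1 + (k : ℤ) from by ring, hTz_add, hTz_add, hTz_add,
          hTz_one, hTz_one, hTz_one, ih, hhom]
    | pred k ih =>
        intro a b
        rw [show -(k : ℤ) - 1 = -1 + (-(k : ℤ)) from by ring, hTz_add, hTz_add, hTz_add,
          hTz_negone, hTz_negone, hTz_negone, ih, hsymm_hom]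
  -- the itinerary map
  set zeta0 : X → ℤ → Fin N := fun x i => idx ((T.toEquiv ^ i) x) with hzeta0
  have hz_cont : Continuous zeta0 :=
    continuous_pi fun i => hidx_cont.comp (hTz_cont i)
  have hz_inj : Function.Injective zeta0 := by
    intro x y hxy
    by_contra hne
    obtain ⟨n, hn⟩ := h𝒰exp x y hne
    have h1 : idx ((T.toEquiv ^ n) x) = idx ((T.toEquiv ^ n) y) := congrFun hxy n
    exact hn (Uof ((T.toEquiv ^ n) x)) (hUof _) ⟨hmemU _, hidx_mem _ _ h1⟩
  have hemb : Topology.IsClosedEmbedding zeta0 := hz_cont.isClosedEmbedding hz_inj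
  have hshift : ∀ x : X, (fun i => zeta0 x (i + 1)) = zeta0 (T x) := by
    intro x; funext i
    show idx ((T.toEquiv ^ (i + 1)) x) = idx ((T.toEquiv ^ i) (T x))
    rw [hTz_add i 1, hTz_one]
  refine ⟨N, Set.range zeta0,
    ⟨zeta0 (Classical.arbitrary X), Set.mem_range_self _⟩, hemb.isClosed_range, ?_, ?_⟩
  · ext z
    constructor
    · rintro ⟨w, ⟨a, rfl⟩, rfl⟩
      exact ⟨T a, (hshift a).symm⟩
    · rintro ⟨a, rfl⟩
      refine ⟨zeta0 (T.symm a), ⟨_, rfl⟩, ?_⟩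
      show (fun i => zeta0 (T.symm a) (i + 1)) = zeta0 a
      rw [hshift (T.symm a), T.apply_symm_apply]
  · refine ⟨hemb.toIsEmbedding.toHomeomorph, fun x => (hshift x).symm, ?_⟩
    set ζ := hemb.toIsEmbedding.toHomeomorph with hζ
    have hζ_apply : ∀ x : X, ((ζ x : ℤ → Fin N)) = zeta0 x := fun x => rfl
    have hζ_symm : ∀ u : Set.range zeta0, zeta0 (ζ.symm u) = (u : ℤ → Fin N) := by
      intro u
      have := ζ.apply_symm_apply u
      exact congrArg Subtype.val this
    -- cylinders
    set cyl : ℕ → (ℤ → Fin N) → Set (ℤ → Fin N) :=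
      fun n z => {w | ∀ i : ℤ, |i| ≤ (n : ℤ) → w i = z i} with hcyl
    have hcyl_open : ∀ (n : ℕ) (z : ℤ → Fin N), IsOpen (cyl n z) := by
      intro n z
      have e : cyl n z = ⋂ i ∈ Finset.Icc (-(n : ℤ)) n, {w : ℤ → Fin N | w i = z i} := by
        ext w
        simp only [hcyl, Set.mem_setOf_eq, Set.mem_iInter, Finset.mem_Icc, abs_le]
      rw [e]
      refine isOpen_biInter_finset fun i _ => ?_
      have e2 : {w : ℤ → Fin N | w i = z i} = (fun w : ℤ → Fin N => w i) ⁻¹' {z i} := rfl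
      rw [e2]
      exact IsOpen.preimage (continuous_apply i) (isOpen_discrete {z i})
    have hcyl_mono : ∀ (m n : ℕ) (z : ℤ → Fin N), m ≤ n → cyl n z ⊆ cyl m z := by
      intro m n z hmn w hw i hi
      exact hw i (hi.trans (by exact_mod_cast hmn))
    have hA : ∀ (z : ℤ → Fin N) (W : Set (ℤ → Fin N)), IsOpen W → z ∈ W →
        ∃ n : ℕ, cyl n z ⊆ W := by
      intro z W hW hz
      obtain ⟨I, u, hu, hsub⟩ := isOpen_pi_iff.mp hW z hz
      refine ⟨I.sup fun i => i.natAbs, fun w hw => hsub fun i hi => ?_⟩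
      have hiI : i ∈ I := hi
      have habs : |i| ≤ ((I.sup fun i => i.natAbs : ℕ) : ℤ) := by
        rw [Int.abs_eq_natAbs]
        exact_mod_cast Finset.le_sup (f := fun i : ℤ => i.natAbs) hiI
      rw [hw i habs]
      exact (hu i hiI).2
    -- the local rule via compactness
    have hkey : ∀ p : X × X, ∃ n : ℕ, ∀ q : X × X,
        zeta0 q.1 ∈ cyl n (zeta0 p.1) → zeta0 q.2 ∈ cyl n (zeta0 p.2) →
        idx (star q.1 q.2) = idx (star p.1 p.2) := by
      intro p
      have hGcont : Continuous fun q : X × X => idx (star q.1 q.2) := hidx_cont.comp hcont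
      have hfib : IsOpen {q : X × X | idx (star q.1 q.2) = idx (star p.1 p.2)} :=
        hGcont.isOpen_preimage {idx (star p.1 p.2)} (isOpen_discrete _)
      have hind : Topology.IsInducing (Prod.map zeta0 zeta0) :=
        hemb.toIsInducing.prodMap hemb.toIsInducing
      obtain ⟨W, hWopen, hWpre⟩ := hind.isOpen_iff.mp hfib
      have hpW : (zeta0 p.1, zeta0 p.2) ∈ W := by
        have : p ∈ Prod.map zeta0 zeta0 ⁻¹' W := by rw [hWpre]; exact rfl
        exact this
      obtain ⟨U, V, hUo, hVo, hU, hV, hUVsub⟩ := isOpen_prod_iff.mp hWopen _ _ hpW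
      obtain ⟨n1, hn1⟩ := hA _ U hUo hU
      obtain ⟨n2, hn2⟩ := hA _ V hVo hV
      refine ⟨max n1 n2, fun q h1 h2 => ?_⟩
      have hqW : (zeta0 q.1, zeta0 q.2) ∈ W :=
        hUVsub ⟨hn1 (hcyl_mono n1 (max n1 n2) _ (le_max_left _ _) h1),
          hn2 (hcyl_mono n2 (max n1 n2) _ (le_max_right _ _) h2)⟩
      have : q ∈ Prod.map zeta0 zeta0 ⁻¹' W := hqW
      rw [hWpre] at this
      exact this
    choose np hnp using hkey
    have hOopen : ∀ p : X × X, IsOpen ((fun q : X × X => zeta0 q.1) ⁻¹' cyl (np p) (zeta0 p.1)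
        ∩ (fun q : X × X => zeta0 q.2) ⁻¹' cyl (np p) (zeta0 p.2)) := fun p =>
      ((hcyl_open _ _).preimage (hz_cont.comp continuous_fst)).inter
        ((hcyl_open _ _).preimage (hz_cont.comp continuous_snd))
    have hcover : Set.univ ⊆ ⋃ p : X × X,
        ((fun q : X × X => zeta0 q.1) ⁻¹' cyl (np p) (zeta0 p.1)
          ∩ (fun q : X × X => zeta0 q.2) ⁻¹' cyl (np p) (zeta0 p.2)) := by
      intro p _
      exact Set.mem_iUnion.mpr ⟨p, fun i _ => rfl, fun i _ => rfl⟩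
    obtain ⟨F, hF⟩ := isCompact_univ.elim_finite_subcover _ hOopen hcover
    set n := F.sup np with hn
    have star_key : ∀ a b a' b' : X,
        (∀ i : ℤ, |i| ≤ (n : ℤ) → zeta0 a' i = zeta0 a i) →
        (∀ i : ℤ, |i| ≤ (n : ℤ) → zeta0 b' i = zeta0 b i) →
        idx (star a' b') = idx (star a b) := by
      intro a b a' b' ha hb
      obtain ⟨c, hcF, hc1, hc2⟩ : ∃ c ∈ F,
          zeta0 a ∈ cyl (np c) (zeta0 c.1) ∧ zeta0 b ∈ cyl (np c) (zeta0 c.2) := by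
        have := hF (Set.mem_univ ((a, b) : X × X))
        simp only [Set.mem_iUnion, Set.mem_inter_iff, Set.mem_preimage] at this
        obtain ⟨c, hcF, h1, h2⟩ := this
        exact ⟨c, hcF, h1, h2⟩
      have hcn : (np c : ℤ) ≤ (n : ℤ) := by exact_mod_cast Finset.le_sup hcF
      have e1 : idx (star a b) = idx (star c.1 c.2) := hnp c (a, b) hc1 hc2
      have e2 : idx (star a' b') = idx (star c.1 c.2) := by
        refine hnp c (a', b') ?_ ?_
        · intro i hi
          rw [ha i (hi.trans hcn)]; exact hc1 i hi
        · intro i hi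
          rw [hb i (hi.trans hcn)]; exact hc2 i hi
      rw [e1, e2]
    -- the block map
    obtain ⟨ρ, hρ⟩ : ∃ ρ : (Fin (n + n + 1) → Fin N) → (Fin (n + n + 1) → Fin N) → Fin N,
        ∀ (u v : Fin (n + n + 1) → Fin N) (a b : X),
          (∀ m : Fin (n + n + 1), zeta0 a ((m : ℤ) - n) = u m) →
          (∀ m : Fin (n + n + 1), zeta0 b ((m : ℤ) - n) = v m) →
          ρ u v = idx (star a b) := by
      refine ⟨fun u v =>
        if h : ∃ p : X × X, (∀ m : Fin (n + n + 1), zeta0 p.1 ((m : ℤ) - n) = u m) ∧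
            (∀ m : Fin (n + n + 1), zeta0 p.2 ((m : ℤ) - n) = v m)
        then idx (star h.choose.1 h.choose.2)
        else idx (star (Classical.arbitrary X) (Classical.arbitrary X)), ?_⟩
      intro u v a b hu hv
      have h : ∃ p : X × X, (∀ m : Fin (n + n + 1), zeta0 p.1 ((m : ℤ) - n) = u m) ∧
          (∀ m : Fin (n + n + 1), zeta0 p.2 ((m : ℤ) - n) = v m) := ⟨(a, b), hu, hv⟩
      beta_reduce
      rw [dif_pos h]
      refine star_key a b h.choose.1 h.choose.2 ?_ ?_
      · intro i hi
        rw [abs_le] at hi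
        have hmlt : (i + n).toNat < n + n + 1 := by omega
        have hmi : ((⟨(i + n).toNat, hmlt⟩ : Fin (n + n + 1)) : ℤ) - n = i := by
          simp only []
          omega
        have e1 := h.choose_spec.1 ⟨(i + n).toNat, hmlt⟩
        have e2 := hu ⟨(i + n).toNat, hmlt⟩
        rw [hmi] at e1 e2
        rw [e1, e2]
      · intro i hi
        rw [abs_le] at hi
        have hmlt : (i + n).toNat < n + n + 1 := by omega
        have hmi : ((⟨(i + n).toNat, hmlt⟩ : Fin (n + n + 1)) : ℤ) - n = i := by
          simp only []
          omega
        have e1 := h.choose_spec.2 ⟨(i + n).toNat, hmlt⟩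
        have e2 := hv ⟨(i + n).toNat, hmlt⟩
        rw [hmi] at e1 e2
        rw [e1, e2]
    refine ⟨n, n, ρ, ?_⟩
    intro x y j
    have hL : ((ζ (star (ζ.symm x) (ζ.symm y)) : ℤ → Fin N)) j
        = idx (star ((T.toEquiv ^ j) (ζ.symm x)) ((T.toEquiv ^ j) (ζ.symm y))) := by
      rw [hζ_apply]
      show idx ((T.toEquiv ^ j) (star (ζ.symm x) (ζ.symm y))) = _
      rw [hTz_hom]
    rw [hL]
    refine (hρ _ _ ((T.toEquiv ^ j) (ζ.symm x)) ((T.toEquiv ^ j) (ζ.symm y)) ?_ ?_).symm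
    · intro m
      show idx ((T.toEquiv ^ ((m : ℤ) - n)) ((T.toEquiv ^ j) (ζ.symm x))) = _
      rw [← hTz_add]
      have : zeta0 (ζ.symm x) ((m : ℤ) - n + j) = (x : ℤ → Fin N) ((m : ℤ) - n + j) := by
        rw [hζ_symm]
      rw [show idx ((T.toEquiv ^ ((m : ℤ) - n + j)) (ζ.symm x))
          = zeta0 (ζ.symm x) ((m : ℤ) - n + j) from rfl, this,
        show (m : ℤ) - n + j = j - n + m from by ring]
    · intro m
      show idx ((T.toEquiv ^ ((m : ℤ) - n)) ((T.toEquiv ^ j) (ζ.symm y))) = _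
      rw [← hTz_add]
      have : zeta0 (ζ.symm y) ((m : ℤ) - n + j) = (y : ℤ → Fin N) ((m : ℤ) - n + j) := by
        rw [hζ_symm]
      rw [show idx ((T.toEquiv ^ ((m : ℤ) - n + j)) (ζ.symm y))
          = zeta0 (ζ.symm y) ((m : ℤ) - n + j) from rfl, this,
        show (m : ℤ) - n + j = j - n + m from by ring]
end

section
/- Let (X,⋆) be a topological quasigroup on a nonempty compact Hausdorff, totally disconnected, second-countable space, such that: ⋆ is commutative; ⋆ has period 2 (a ⋆ (a ⋆ x) = x for all a, x ∈ X); ⋆ satisfies the medial property ((a⋆b)⋆(c⋆d) = (a⋆c)⋆(b⋆d) for all a,b,c,d ∈ X); and there is a point e ∈ X admitting a decreasing sequence (V_n) of clopen neighborhoods forming a neighborhood basis at e with ⋂_n V_n = {e} and e ⋆ V_n ⊆ V_n for all n. Then for every neighborhood U of e there exists a clopen set Q with e ∈ Q ⊆ U such that the family {a ⋆ Q : a ∈ X} is a finite partition of X and for all a, b ∈ X, (a ⋆ Q) ⋆ (b ⋆ Q) = (a ⋆ b) ⋆ Q (the partition is compatible with ⋆). -/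
theorem statement1 {X : Type*} [TopologicalSpace X] [CompactSpace X] [T2Space X]
    [TotallyDisconnectedSpace X] [SecondCountableTopology X] [Nonempty X]
    (star : X → X → X)
    (hcont : Continuous fun p : X × X => star p.1 p.2)
    (hleft : ∀ a b c : X, star a b = star a c → b = c)
    (hright : ∀ a b c : X, star b a = star c a → b = c)
    (hcomm : ∀ a b : X, star a b = star b a)
    (hper : ∀ a x : X, star a (star a x) = x)
    (hmed : ∀ a b c d : X, star (star a b) (star c d) = star (star a c) (star b d))
    (e : X) (V : ℕ → Set X)
    (hVclopen : ∀ n, IsClopen (V n))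
    (hVmem : ∀ n, e ∈ V n)
    (hVdec : ∀ n, V (n + 1) ⊆ V n)
    (hVbasis : (nhds e).HasBasis (fun _ : ℕ => True) V)
    (hVinter : ⋂ n, V n = {e})
    (hVabs : ∀ n, (fun x => star e x) '' V n ⊆ V n) :
    ∀ U ∈ nhds e, ∃ Q : Set X,
      IsClopen Q ∧ e ∈ Q ∧ Q ⊆ U ∧
      {S : Set X | ∃ a : X, S = (fun q => star a q) '' Q}.Finite ∧
      ⋃₀ {S : Set X | ∃ a : X, S = (fun q => star a q) '' Q} = Set.univ ∧
      (∀ S ∈ {S : Set X | ∃ a : X, S = (fun q => star a q) '' Q},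
        ∀ S' ∈ {S : Set X | ∃ a : X, S = (fun q => star a q) '' Q},
          S ≠ S' → Disjoint S S') ∧
      (∀ a b : X, Set.image2 star ((fun q => star a q) '' Q) ((fun q => star b q) '' Q) =
        (fun q => star (star a b) q) '' Q) := by
  -- Step 0 : star e e = e
  have hee : star e e = e := by
    have h1 : star e e ∈ ⋂ n, V n :=
      Set.mem_iInter.mpr fun n => hVabs n ⟨e, hVmem n, rfl⟩
    rw [hVinter] at h1
    exact h1
  -- group structure
  letI : CommGroup X :=
  { mul := fun a b => star e (star a b)
    one := e
    inv := fun a => star e a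
    div := fun a b => star e (star a (star e b))
    div_eq_mul_inv := fun a b => rfl
    mul_assoc := by
      intro a b c
      show star e (star (star e (star a b)) c) = star e (star a (star e (star b c)))
      congr 1
      calc star (star e (star a b)) c
          = star (star e (star a b)) (star e (star e c)) := by rw [hper]
        _ = star (star e e) (star (star a b) (star e c)) := hmed _ _ _ _
        _ = star e (star (star a e) (star b c)) := by rw [hee, hmed]
        _ = star e (star (star e a) (star b c)) := by rw [hcomm a e]
        _ = star (star e e) (star (star e a) (star b c)) := by rw [hee]
        _ = star (star e (star e a)) (star e (star b c)) := (hmed _ _ _ _).symm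
        _ = star a (star e (star b c)) := by rw [hper]
    one_mul := fun a => hper e a
    mul_one := by
      intro a
      show star e (star a e) = a
      rw [hcomm a e, hper]
    inv_mul_cancel := by
      intro a
      show star e (star (star e a) a) = e
      rw [hcomm (star e a) a, hcomm e a, hper, hee]
    mul_comm := by
      intro a b
      show star e (star a b) = star e (star b a)
      rw [hcomm a b] }
  have hmul : ∀ a b : X, a * b = star e (star a b) := fun _ _ => rfl
  have hone : (1 : X) = e := rfl
  letI : IsTopologicalGroup X :=
  { continuous_mul := by
      show Continuous fun p : X × X => star e (star p.1 p.2)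
      exact hcont.comp (continuous_const.prodMk hcont)
    continuous_inv := by
      show Continuous fun a : X => star e a
      exact hcont.comp (continuous_const.prodMk continuous_id) }
  -- star in group language
  have hkey : ∀ a b : X, star a b = a⁻¹ * b⁻¹ := by
    intro a b
    have h1 : star a b = (a * b)⁻¹ := by
      show star a b = star e (star e (star a b))
      rw [hper]
    rw [h1, mul_inv]
  intro U hU
  obtain ⟨n, -, hnU⟩ := hVbasis.mem_iff.mp hU
  obtain ⟨H, hH⟩ := IsTopologicalGroup.exist_openSubgroup_sub_clopen_nhds_of_one
    (hVclopen n) (hVmem n : (1 : X) ∈ V n)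
  set Q : Set X := (H : Set X) with hQdef
  have hQmem : (1 : X) ∈ Q := H.one_mem
  -- translates are cosets
  have himg : ∀ a : X, (fun q => star a q) '' Q = (fun q => a⁻¹ * q) '' Q := by
    intro a
    ext x
    constructor
    · rintro ⟨q, hq, rfl⟩
      exact ⟨q⁻¹, H.inv_mem hq, (hkey a q).symm⟩
    · rintro ⟨q, hq, rfl⟩
      refine ⟨q⁻¹, H.inv_mem hq, ?_⟩
      show star a q⁻¹ = a⁻¹ * q
      rw [hkey, inv_inv]
  -- cosets that meet are equal
  have hcoseq : ∀ a b x : X, x ∈ (fun q => a * q) '' Q → x ∈ (fun q => b * q) '' Q →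
      (fun q => a * q) '' Q = (fun q => b * q) '' Q := by
    rintro a b x ⟨q, hq, hxq⟩ ⟨q', hq', hxq'⟩
    have h1 : a * q = b * q' := by
      simpa using hxq.trans hxq'.symm
    have hba : b = a * (q * q'⁻¹) := by
      rw [← mul_assoc, h1, mul_inv_cancel_right]
    ext y
    constructor
    · rintro ⟨r, hr, rfl⟩
      refine ⟨q' * q⁻¹ * r, H.mul_mem (H.mul_mem hq' (H.inv_mem hq)) hr, ?_⟩
      show b * (q' * q⁻¹ * r) = a * r
      rw [hba]; group
    · rintro ⟨r, hr, rfl⟩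
      refine ⟨q * q'⁻¹ * r, H.mul_mem (H.mul_mem hq (H.inv_mem hq')) hr, ?_⟩
      show a * (q * q'⁻¹ * r) = b * r
      rw [hba]; group
  have hmemself : ∀ a : X, a ∈ (fun q => a * q) '' Q := fun a => ⟨1, hQmem, mul_one a⟩
  have hopen : ∀ b : X, IsOpen ((fun q => b * q) '' Q) := by
    intro b
    have himgpre : (fun q => b * q) '' Q = (fun x => b⁻¹ * x) ⁻¹' Q := by
      ext x
      constructor
      · rintro ⟨q, hq, rfl⟩
        show b⁻¹ * (b * q) ∈ Q
        rwa [inv_mul_cancel_left]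
      · intro hx
        exact ⟨b⁻¹ * x, hx, show b * (b⁻¹ * x) = x by rw [mul_inv_cancel_left]⟩
    rw [himgpre]
    exact H.isOpen.preimage (continuous_const.mul continuous_id)
  refine ⟨Q, ⟨H.isClosed, H.isOpen⟩, hQmem, fun x hx => hnU (hH hx), ?_, ?_, ?_, ?_⟩
  · -- finiteness via compactness
    obtain ⟨t, ht⟩ := isCompact_univ.elim_finite_subcover (fun b : X => (fun q => b * q) '' Q)
      hopen (fun x _ => Set.mem_iUnion.mpr ⟨x, hmemself x⟩)
    refine Set.Finite.subset (t.finite_toSet.image fun b => (fun q => star b⁻¹ q) '' Q) ?_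
    rintro S ⟨a, rfl⟩
    have hainv : a⁻¹ ∈ ⋃ b ∈ t, (fun q => b * q) '' Q := ht (Set.mem_univ a⁻¹)
    rw [Set.mem_iUnion₂] at hainv
    obtain ⟨b, hbt, hab⟩ := hainv
    refine ⟨b, hbt, ?_⟩
    show (fun q => star b⁻¹ q) '' Q = (fun q => star a q) '' Q
    rw [himg b⁻¹, inv_inv, himg a]
    exact hcoseq b a⁻¹ a⁻¹ hab (hmemself a⁻¹)
  · apply Set.eq_univ_of_forall
    intro x
    refine ⟨(fun q => star (star e x) q) '' Q, ⟨star e x, rfl⟩, ⟨(1 : X), hQmem, ?_⟩⟩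
    show star (star e x) 1 = x
    show star (star e x) e = x
    rw [hcomm, hper]
  · rintro S ⟨a, rfl⟩ S' ⟨b, rfl⟩ hne
    by_contra hdis
    rw [Set.not_disjoint_iff] at hdis
    obtain ⟨x, hx1, hx2⟩ := hdis
    rw [himg a] at hx1
    rw [himg b] at hx2
    exact hne ((himg a).trans ((hcoseq a⁻¹ b⁻¹ x hx1 hx2).trans (himg b).symm))
  · intro a b
    rw [himg a, himg b, himg (star a b)]
    ext x
    constructor
    · rintro ⟨u, ⟨q, hq, rfl⟩, v, ⟨q', hq', rfl⟩, rfl⟩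
      refine ⟨q⁻¹ * q'⁻¹, H.mul_mem (H.inv_mem hq) (H.inv_mem hq'), ?_⟩
      show (star a b)⁻¹ * (q⁻¹ * q'⁻¹) = star (a⁻¹ * q) (b⁻¹ * q')
      rw [hkey a b, hkey]
      simp [mul_comm, mul_left_comm, mul_assoc]
    · rintro ⟨q, hq, rfl⟩
      refine ⟨a⁻¹ * q⁻¹, ⟨q⁻¹, H.inv_mem hq, rfl⟩, b⁻¹ * 1, ⟨1, hQmem, rfl⟩, ?_⟩
      show star (a⁻¹ * q⁻¹) (b⁻¹ * 1) = (star a b)⁻¹ * q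
      rw [hkey, hkey a b]
      simp [mul_comm, mul_left_comm, mul_assoc]
end

section
/- Let (X,⋆) be a topological quasigroup on a nonempty compact Hausdorff, totally disconnected, second-countable space, such that: ⋆ is commutative; ⋆ has period 2 (a ⋆ (a ⋆ x) = x for all a, x ∈ X); ⋆ satisfies the medial property ((a⋆b)⋆(c⋆d) = (a⋆c)⋆(b⋆d) for all a,b,c,d ∈ X); and there is a point e ∈ X admitting a decreasing sequence (V_n) of clopen neighborhoods forming a neighborhood basis at e with ⋂_n V_n = {e} and e ⋆ V_n ⊆ V_n for all n. Let T : X → X be an expansive automorphism of (X,⋆). Then there exist a finite type A, a nonempty closed shift-invariant subset Λ ⊆ (ℤ → A), a map ρ : A → A → A, and a homeomorphism ζ : X → Λ such that ζ ∘ T = σ ∘ ζ and for all x, y ∈ X and all i ∈ ℤ, ζ(x ⋆ y) i = ρ (ζ(x) i) (ζ(y) i); that is, (X,⋆,T) is isomorphic to a shift space with a 1-block quasigroup operation. -/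
theorem statement2 {X : Type*} [TopologicalSpace X] [CompactSpace X] [T2Space X]
    [TotallyDisconnectedSpace X] [SecondCountableTopology X] [Nonempty X]
    (star : X → X → X)
    (hcont : Continuous fun p : X × X => star p.1 p.2)
    (hleft : ∀ a b c : X, star a b = star a c → b = c)
    (hright : ∀ a b c : X, star b a = star c a → b = c)
    (hcomm : ∀ a b : X, star a b = star b a)
    (hper : ∀ a x : X, star a (star a x) = x)
    (hmed : ∀ a b c d : X, star (star a b) (star c d) = star (star a c) (star b d))
    (e : X) (V : ℕ → Set X)
    (hVclopen : ∀ n, IsClopen (V n))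
    (hVmem : ∀ n, e ∈ V n)
    (hVdec : ∀ n, V (n + 1) ⊆ V n)
    (hVbasis : (nhds e).HasBasis (fun _ : ℕ => True) V)
    (hVinter : ⋂ n, V n = {e})
    (hVabs : ∀ n, (fun x => star e x) '' V n ⊆ V n)
    (T : X ≃ₜ X)
    (hhom : ∀ x y : X, T (star x y) = star (T x) (T y))
    (𝒰 : Finset (Set X))
    (h𝒰clopen : ∀ U ∈ 𝒰, IsClopen U)
    (h𝒰cover : ∀ x : X, ∃ U ∈ 𝒰, x ∈ U)
    (h𝒰disj : ∀ U ∈ 𝒰, ∀ V' ∈ 𝒰, U ≠ V' → Disjoint U V')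
    (h𝒰exp : ∀ x y : X, x ≠ y → ∃ n : ℤ, ∀ U ∈ 𝒰,
      ¬ ((T.toEquiv ^ n) x ∈ U ∧ (T.toEquiv ^ n) y ∈ U)) :
    ∃ (N : ℕ) (Λ : Set (ℤ → Fin N)) (ρ : Fin N → Fin N → Fin N),
      Λ.Nonempty ∧ IsClosed Λ ∧
      (fun x : ℤ → Fin N => (fun i => x (i + 1) : ℤ → Fin N)) '' Λ = Λ ∧
      ∃ ζ : X ≃ₜ Λ,
        (∀ x : X, ((ζ (T x) : ℤ → Fin N)) = fun i => (ζ x : ℤ → Fin N) (i + 1)) ∧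
        (∀ x y : X, ∀ i : ℤ,
          (ζ (star x y) : ℤ → Fin N) i = ρ ((ζ x : ℤ → Fin N) i) ((ζ y : ℤ → Fin N) i)) := by
  classical
  -- ## Step 1: abelian group structure  x + y := e ⋆ (x ⋆ y)
  have hassoc : ∀ x y z : X,
      star e (star (star e (star x y)) z) = star e (star x (star e (star y z))) := by
    intro x y z
    have h1 : star (star e (star x y)) z
        = star (star e e) (star (star x e) (star y z)) := by
      calc star (star e (star x y)) z
          = star (star e (star x y)) (star e (star e z)) := by rw [hper e z]
        _ = star (star e e) (star (star x y) (star e z)) :=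
            hmed e (star x y) e (star e z)
        _ = star (star e e) (star (star x e) (star y z)) := by rw [hmed x y e z]
    have h2 : star x (star e (star y z))
        = star (star e e) (star (star e x) (star y z)) := by
      calc star x (star e (star y z))
          = star (star e (star e x)) (star e (star y z)) := by rw [hper e x]
        _ = star (star e e) (star (star e x) (star y z)) :=
            hmed e (star e x) e (star y z)
    rw [h1, h2, hcomm x e]
  have hx1 : ∀ x : X, star x (star (star e e) x) = star e e := by
    intro x
    calc star x (star (star e e) x)
        = star (star e (star e x)) (star (star e e) x) := by rw [hper e x]
      _ = star (star e (star e e)) (star (star e x) x) :=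
          hmed e (star e x) (star e e) x
      _ = star e (star (star e x) x) := by rw [hper e e]
      _ = star e (star x (star e x)) := by rw [hcomm (star e x) x]
      _ = star e (star x (star x e)) := by rw [hcomm e x]
      _ = star e e := by rw [hper x e]
  have hnegadd : ∀ x : X, star e (star (star (star e e) x) x) = e := by
    intro x
    rw [hcomm (star (star e e) x) x, hx1 x]
    exact hper e e
  letI : Zero X := ⟨e⟩
  letI : Add X := ⟨fun x y => star e (star x y)⟩
  letI : Neg X := ⟨fun x => star (star e e) x⟩
  letI : AddCommGroup X :=
  { add := (· + ·)
    zero := 0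
    neg := (- ·)
    add_assoc := hassoc
    zero_add := fun x => hper e x
    add_zero := fun x => by
      show star e (star x e) = x
      rw [hcomm x e]; exact hper e x
    neg_add_cancel := hnegadd
    nsmul := nsmulRec
    zsmul := zsmulRec
    add_comm := fun x y => by
      show star e (star x y) = star e (star y x)
      rw [hcomm x y] }
  letI : IsTopologicalAddGroup X :=
  { continuous_add := hcont.comp (continuous_const.prodMk hcont)
    continuous_neg := hcont.comp (continuous_const.prodMk continuous_id) }
  -- ## Step 2: the key compatibility identity
  have hR : ∀ p q : X,
      star e (star p (star (star e e) (star e q))) = star (star e e) (star p q) := by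
    intro p q
    calc star e (star p (star (star e e) (star e q)))
        = star e (star (star e (star e p)) (star (star e e) (star e q))) := by
          rw [hper e p]
      _ = star e (star (star e (star e e)) (star (star e p) (star e q))) := by
          rw [hmed e (star e p) (star e e) (star e q)]
      _ = star e (star e (star (star e p) (star e q))) := by rw [hper e e]
      _ = star (star e p) (star e q) := hper e _
      _ = star (star e e) (star p q) := hmed e p e q
  have KI : ∀ x u y v : X, star (x + u) (y + v) = star x y + -(u + v) := by
    intro x u y v
    show star (star e (star x u)) (star e (star y v))
        = star e (star (star x y) (star (star e e) (star e (star u v))))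
    rw [hmed e (star x u) e (star y v), hmed x u y v, hR (star x y) (star u v)]
  -- ## Step 3: a clopen finite-index subgroup refining 𝒰
  choose U hU1 hU2 using h𝒰cover
  have hWclopen : ∀ x : X, IsClopen ((fun h : X => x + h) ⁻¹' U x) := fun x =>
    (h𝒰clopen _ (hU1 x)).preimage (continuous_const.add continuous_id)
  have h0W : ∀ x : X, (0 : X) ∈ (fun h : X => x + h) ⁻¹' U x := by
    intro x
    show x + 0 ∈ U x
    rw [add_zero]
    exact hU2 x
  choose Hx hHx using fun x : X =>
    IsTopologicalAddGroup.exist_openAddSubgroup_sub_clopen_nhds_of_zero (hWclopen x) (h0W x)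
  have hcopen : ∀ x : X, IsOpen ((fun y : X => -x + y) ⁻¹' (Hx x : Set X)) := fun x =>
    (Hx x).isOpen.preimage (continuous_const.add continuous_id)
  obtain ⟨s, hs⟩ := isCompact_univ.elim_finite_subcover
    (fun x : X => (fun y : X => -x + y) ⁻¹' (Hx x : Set X)) hcopen
    (fun y _ => Set.mem_iUnion.2 ⟨y, by
      show -y + y ∈ (Hx y : Set X)
      rw [neg_add_cancel]
      exact (Hx y).zero_mem⟩)
  set K : AddSubgroup X := ⨅ i : {x // x ∈ s}, (Hx i.1).toAddSubgroup with hK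
  have hKopen : IsOpen (K : Set X) := by
    rw [hK, AddSubgroup.coe_iInf]
    exact isOpen_iInter_of_finite fun i => (Hx i.1).isOpen
  have hKmem : ∀ z : X, z ∈ K → ∀ i : {x // x ∈ s}, z ∈ Hx i.1 := by
    intro z hz i
    exact (AddSubgroup.mem_iInf.mp hz) i
  -- every K-coset lies in a single member of 𝒰
  have hcoset : ∀ a b : X, -a + b ∈ K → ∃ U' ∈ 𝒰, a ∈ U' ∧ b ∈ U' := by
    intro a b hab
    have ha : a ∈ ⋃ x ∈ s, (fun y : X => -x + y) ⁻¹' (Hx x : Set X) := hs (Set.mem_univ a)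
    obtain ⟨x, hxs, hax⟩ := Set.mem_iUnion₂.mp ha
    have h1 : -x + a ∈ Hx x := hax
    refine ⟨U x, hU1 x, ?_, ?_⟩
    · have h4 : x + (-x + a) ∈ U x := hHx x h1
      rwa [add_neg_cancel_left] at h4
    · have h2 : -a + b ∈ Hx x := hKmem _ hab ⟨x, hxs⟩
      have h3 : -x + b ∈ Hx x := by
        have := add_mem h1 h2
        have heq : (-x + a) + (-a + b) = -x + b := by
          rw [add_assoc, add_neg_cancel_left]
        rwa [heq] at this
      have h4 : x + (-x + b) ∈ U x := hHx x h3
      rwa [add_neg_cancel_left] at h4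
  -- star descends to K-cosets
  have hcong : ∀ a b a' b' : X, -a + a' ∈ K → -b + b' ∈ K →
      -(star a b) + star a' b' ∈ K := by
    intro a b a' b' h1 h2
    have ea : a' = a + (-a + a') := (add_neg_cancel_left a a').symm
    have eb : b' = b + (-b + b') := (add_neg_cancel_left b b').symm
    have hstar : star a' b' = star a b + -((-a + a') + (-b + b')) := by
      conv_lhs => rw [ea, eb]
      exact KI a (-a + a') b (-b + b')
    rw [hstar, neg_add_cancel_left]
    exact neg_mem (add_mem h1 h2)
  -- ## Step 4: the finite quotient
  haveI hfin : Finite (X ⧸ K) := K.quotient_finite_of_isOpen hKopen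
  letI : Fintype (X ⧸ K) := Fintype.ofFinite _
  set N := Fintype.card (X ⧸ K) with hN
  let eqv : (X ⧸ K) ≃ Fin N := Fintype.equivFin _
  -- ## Step 5: powers of T
  have hsymm : ∀ x y : X, T.symm (star x y) = star (T.symm x) (T.symm y) := by
    intro x y
    apply T.injective
    rw [hhom, T.apply_symm_apply, T.apply_symm_apply, T.apply_symm_apply]
  have hTn_succ : ∀ (n : ℤ) (x : X), (T.toEquiv ^ (n + 1)) x = (T.toEquiv ^ n) (T x) := by
    intro n x
    rw [zpow_add_one]
    rfl
  have hTn_pred : ∀ (n : ℤ) (x : X), (T.toEquiv ^ (n - 1)) x = (T.toEquiv ^ n) (T.symm x) := by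
    intro n x
    rw [zpow_sub_one]
    rfl
  have hTn_cont : ∀ n : ℤ, Continuous fun x : X => (T.toEquiv ^ n) x := by
    intro n
    induction n using Int.induction_on with
    | zero =>
      have : (fun x : X => (T.toEquiv ^ (0 : ℤ)) x) = id := by
        funext x; rw [zpow_zero]; rfl
      rw [this]; exact continuous_id
    | succ n ih =>
      have : (fun x : X => (T.toEquiv ^ ((n : ℤ) + 1)) x)
          = (fun x : X => (T.toEquiv ^ (n : ℤ)) x) ∘ ⇑T := by
        funext x; exact hTn_succ n x
      rw [this]; exact ih.comp T.continuous
    | pred n ih =>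
      have : (fun x : X => (T.toEquiv ^ (-(n : ℤ) - 1)) x)
          = (fun x : X => (T.toEquiv ^ (-(n : ℤ))) x) ∘ ⇑T.symm := by
        funext x; exact hTn_pred (-(n : ℤ)) x
      rw [this]; exact ih.comp T.symm.continuous
  have hTn_hom : ∀ (n : ℤ) (x y : X),
      (T.toEquiv ^ n) (star x y) = star ((T.toEquiv ^ n) x) ((T.toEquiv ^ n) y) := by
    intro n
    induction n using Int.induction_on with
    | zero => intro x y; rw [zpow_zero]; rfl
    | succ n ih =>
      intro x y
      rw [hTn_succ n (star x y), hTn_succ n x, hTn_succ n y, hhom x y, ih (T x) (T y)]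
    | pred n ih =>
      intro x y
      rw [hTn_pred (-(n : ℤ)) (star x y), hTn_pred (-(n : ℤ)) x, hTn_pred (-(n : ℤ)) y,
        hsymm x y, ih (T.symm x) (T.symm y)]
  -- ## Step 6: the coding map
  let ζ₀ : X → (ℤ → Fin N) := fun x i => eqv (QuotientAddGroup.mk ((T.toEquiv ^ i) x))
  have hfiber : ∀ q : X ⧸ K, IsOpen {y : X | (QuotientAddGroup.mk y : X ⧸ K) = q} := by
    intro q
    have hset : {y : X | (QuotientAddGroup.mk y : X ⧸ K) = q}
        = (fun y : X => -q.out + y) ⁻¹' (K : Set X) := by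
      ext y
      simp only [Set.mem_setOf_eq, Set.mem_preimage, SetLike.mem_coe]
      rw [← QuotientAddGroup.eq, QuotientAddGroup.out_eq']
      exact eq_comm
    rw [hset]
    exact hKopen.preimage (continuous_const.add continuous_id)
  have hζcont : Continuous ζ₀ := by
    refine continuous_pi fun i => continuous_discrete_rng.mpr fun b => ?_
    have hset : (fun x : X => ζ₀ x i) ⁻¹' {b}
        = (fun x : X => (T.toEquiv ^ i) x) ⁻¹'
            {y : X | (QuotientAddGroup.mk y : X ⧸ K) = eqv.symm b} := by
      ext x
      simp only [Set.mem_preimage, Set.mem_singleton_iff, Set.mem_setOf_eq, ζ₀]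
      constructor
      · intro h; rw [← h]; simp
      · intro h; rw [h]; simp
    rw [hset]
    exact (hfiber _).preimage (hTn_cont i)
  have hinj : Function.Injective ζ₀ := by
    intro x y hxy
    by_contra hne
    obtain ⟨n, hn⟩ := h𝒰exp x y hne
    have h1 : eqv (QuotientAddGroup.mk ((T.toEquiv ^ n) x))
        = eqv (QuotientAddGroup.mk ((T.toEquiv ^ n) y)) := congrFun hxy n
    have hq : (QuotientAddGroup.mk ((T.toEquiv ^ n) x) : X ⧸ K)
        = QuotientAddGroup.mk ((T.toEquiv ^ n) y) := eqv.injective h1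
    obtain ⟨U', hU', ha, hb⟩ := hcoset _ _ (QuotientAddGroup.eq.mp hq)
    exact hn U' hU' ⟨ha, hb⟩
  -- ## Step 7: the 1-block operation
  let ρ : Fin N → Fin N → Fin N := fun i j =>
    eqv (QuotientAddGroup.mk (star (eqv.symm i).out (eqv.symm j).out))
  have hρ : ∀ a b : X,
      ρ (eqv (QuotientAddGroup.mk a)) (eqv (QuotientAddGroup.mk b))
        = eqv (QuotientAddGroup.mk (star a b)) := by
    intro a b
    apply congrArg eqv
    refine QuotientAddGroup.eq.mpr ?_
    apply hcong
    · apply QuotientAddGroup.eq.mp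
      rw [Equiv.symm_apply_apply, QuotientAddGroup.out_eq']
    · apply QuotientAddGroup.eq.mp
      rw [Equiv.symm_apply_apply, QuotientAddGroup.out_eq']
  -- ## Step 8: assemble
  let Λ : Set (ℤ → Fin N) := Set.range ζ₀
  let ee : X ≃ Λ := Equiv.ofInjective ζ₀ hinj
  have hee : Continuous ⇑ee := hζcont.subtype_mk _
  let ζ : X ≃ₜ Λ := hee.homeoOfEquivCompactToT2
  have hζcoe : ∀ x : X, (ζ x : ℤ → Fin N) = ζ₀ x := fun x => rfl
  have hshift : ∀ x : X, (fun i : ℤ => ζ₀ x (i + 1)) = ζ₀ (T x) := by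
    intro x
    funext i
    show eqv (QuotientAddGroup.mk ((T.toEquiv ^ (i + 1)) x))
        = eqv (QuotientAddGroup.mk ((T.toEquiv ^ i) (T x)))
    rw [hTn_succ i x]
  refine ⟨N, Λ, ρ, Set.range_nonempty _, (isCompact_range hζcont).isClosed, ?_, ζ, ?_, ?_⟩
  · -- shift invariance
    ext z
    constructor
    · rintro ⟨w, ⟨x, rfl⟩, rfl⟩
      exact ⟨T x, (hshift x).symm⟩
    · rintro ⟨x, rfl⟩
      refine ⟨ζ₀ (T.symm x), ⟨T.symm x, rfl⟩, ?_⟩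
      show (fun i : ℤ => ζ₀ (T.symm x) (i + 1)) = ζ₀ x
      rw [hshift (T.symm x), T.apply_symm_apply]
  · intro x
    rw [hζcoe, hζcoe, ← hshift x]
  · intro x y i
    rw [hζcoe, hζcoe, hζcoe]
    show eqv (QuotientAddGroup.mk ((T.toEquiv ^ i) (star x y)))
        = ρ (ζ₀ x i) (ζ₀ y i)
    rw [hTn_hom i x y]
    exact (hρ _ _).symm
end

section
/- Let Λ ⊆ (ℤ → A) be a shift space over a finite type A, let ρ : A → A → A, and let * be the coordinatewise (1-block) operation (x * y) i = ρ (x i) (y i). Assume Λ is closed under *, that * is left and right cancellative on Λ, and that property (H3) holds: for every x ∈ Λ, {x * y : y ∈ Λ} = Λ = {y * x : y ∈ Λ}. Let L_Λ = {a ∈ A : ∃ x ∈ Λ, ∃ i ∈ ℤ, x i = a} be the alphabet of Λ. Then ρ maps L_Λ × L_Λ into L_Λ, and (L_Λ, ρ) is a quasigroup: for all a, b ∈ L_Λ there exists a unique c ∈ L_Λ with ρ c a = b, and a unique c' ∈ L_Λ with ρ a c' = b. -/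
theorem statement3 {A : Type*} [Fintype A] [TopologicalSpace A] [DiscreteTopology A]
    (Λ : Set (ℤ → A)) (hne : Λ.Nonempty) (hclosed : IsClosed Λ)
    (hshift : (fun x : ℤ → A => (fun i => x (i + 1) : ℤ → A)) '' Λ = Λ)
    (ρ : A → A → A)
    (hclosedop : ∀ x ∈ Λ, ∀ y ∈ Λ, (fun i => ρ (x i) (y i) : ℤ → A) ∈ Λ)
    (hleft : ∀ x ∈ Λ, ∀ y ∈ Λ, ∀ z ∈ Λ,
      (fun i => ρ (x i) (y i) : ℤ → A) = (fun i => ρ (x i) (z i)) → y = z)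
    (hright : ∀ x ∈ Λ, ∀ y ∈ Λ, ∀ z ∈ Λ,
      (fun i => ρ (y i) (x i) : ℤ → A) = (fun i => ρ (z i) (x i)) → y = z)
    (hH3 : ∀ x ∈ Λ,
      (fun y : ℤ → A => (fun i => ρ (x i) (y i) : ℤ → A)) '' Λ = Λ ∧
      (fun y : ℤ → A => (fun i => ρ (y i) (x i) : ℤ → A)) '' Λ = Λ) :
    (∀ a ∈ {a : A | ∃ x ∈ Λ, ∃ i : ℤ, x i = a},
      ∀ b ∈ {a : A | ∃ x ∈ Λ, ∃ i : ℤ, x i = a},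
        ρ a b ∈ {a : A | ∃ x ∈ Λ, ∃ i : ℤ, x i = a}) ∧
    (∀ a ∈ {a : A | ∃ x ∈ Λ, ∃ i : ℤ, x i = a},
      ∀ b ∈ {a : A | ∃ x ∈ Λ, ∃ i : ℤ, x i = a},
        (∃! c, c ∈ {a : A | ∃ x ∈ Λ, ∃ i : ℤ, x i = a} ∧ ρ c a = b) ∧
        (∃! c', c' ∈ {a : A | ∃ x ∈ Λ, ∃ i : ℤ, x i = a} ∧ ρ a c' = b)) := by
  set L : Set A := {a : A | ∃ x ∈ Λ, ∃ i : ℤ, x i = a} with hLdef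
  -- forward shift invariance
  have hF : ∀ y ∈ Λ, (fun i => y (i + 1) : ℤ → A) ∈ Λ := by
    intro y hy
    rw [← hshift]
    exact ⟨y, hy, rfl⟩
  -- backward shift invariance
  have hB : ∀ y ∈ Λ, ∃ z ∈ Λ, ∀ k : ℤ, z (k + 1) = y k := by
    intro y hy
    rw [← hshift] at hy
    obtain ⟨z, hz, hzy⟩ := hy
    exact ⟨z, hz, fun k => congrFun hzy k⟩
  have fwd : ∀ n : ℕ, ∀ y ∈ Λ, (fun k => y (k + n) : ℤ → A) ∈ Λ := by
    intro n
    induction n with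
    | zero => intro y hy; simpa using hy
    | succ n ih =>
      intro y hy
      have h2 := hF _ (ih y hy)
      convert h2 using 1
      funext k
      congr 1
      push_cast
      ring
  have bwd : ∀ n : ℕ, ∀ y ∈ Λ, ∃ z ∈ Λ, ∀ k : ℤ, z (k + n) = y k := by
    intro n
    induction n with
    | zero => intro y hy; exact ⟨y, hy, fun k => by simp⟩
    | succ n ih =>
      intro y hy
      obtain ⟨w, hw, hwy⟩ := hB y hy
      obtain ⟨z, hz, hzw⟩ := ih w hw
      refine ⟨z, hz, fun k => ?_⟩
      have h1 := hzw (k + 1)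
      have h2 := hwy k
      push_cast
      rw [show k + ((n : ℤ) + 1) = (k + 1) + n by ring, h1, h2]
  -- alignment: any letter of y can be moved to any coordinate
  have align : ∀ y ∈ Λ, ∀ j i : ℤ, ∃ y' ∈ Λ, y' i = y j := by
    intro y hy j i
    rcases le_or_gt i j with h | h
    · refine ⟨_, fwd (j - i).toNat y hy, ?_⟩
      show y (i + ((j - i).toNat : ℤ)) = y j
      congr 1
      omega
    · obtain ⟨z, hz, hzk⟩ := bwd (i - j).toNat y hy
      refine ⟨z, hz, ?_⟩
      rw [← hzk j]
      congr 1
      omega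
  -- closure of the alphabet under ρ
  have hclo : ∀ a ∈ L, ∀ b ∈ L, ρ a b ∈ L := by
    rintro a ⟨x, hx, i, hxi⟩ b ⟨y, hy, j, hyj⟩
    obtain ⟨y', hy', hy'i⟩ := align y hy j i
    exact ⟨_, hclosedop x hx y' hy', i, by rw [hy'i, hxi, hyj]⟩
  -- existence of left division: ∃ c ∈ L, ρ c a = b
  have hexL : ∀ a ∈ L, ∀ b ∈ L, ∃ c ∈ L, ρ c a = b := by
    rintro a ⟨x, hx, i, hxi⟩ b ⟨y, hy, j, hyj⟩
    obtain ⟨y', hy', hy'i⟩ := align y hy j i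
    have := (hH3 x hx).2
    rw [← this] at hy'
    obtain ⟨z, hz, hzy'⟩ := hy'
    refine ⟨z i, ⟨z, hz, i, rfl⟩, ?_⟩
    have := congrFun hzy' i
    simp only at this
    rw [hxi] at this
    rw [this, hy'i, hyj]
  -- existence of right division: ∃ c ∈ L, ρ a c = b
  have hexR : ∀ a ∈ L, ∀ b ∈ L, ∃ c ∈ L, ρ a c = b := by
    rintro a ⟨x, hx, i, hxi⟩ b ⟨y, hy, j, hyj⟩
    obtain ⟨y', hy', hy'i⟩ := align y hy j i
    have := (hH3 x hx).1
    rw [← this] at hy'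
    obtain ⟨z, hz, hzy'⟩ := hy'
    refine ⟨z i, ⟨z, hz, i, rfl⟩, ?_⟩
    have := congrFun hzy' i
    simp only at this
    rw [hxi] at this
    rw [this, hy'i, hyj]
  -- injectivity from surjectivity on the finite alphabet
  have hinjL : ∀ a ∈ L, ∀ c ∈ L, ∀ c' ∈ L, ρ c a = ρ c' a → c = c' := by
    intro a ha c hc c' hc' hcc
    have hg : Function.Surjective (fun c : L => (⟨ρ c a, hclo c c.2 a ha⟩ : L)) := by
      rintro ⟨b, hb⟩
      obtain ⟨d, hd, hdb⟩ := hexL a ha b hb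
      exact ⟨⟨d, hd⟩, Subtype.ext hdb⟩
    have hginj := (Finite.injective_iff_surjective).2 hg
    have := hginj (a₁ := ⟨c, hc⟩) (a₂ := ⟨c', hc'⟩) (Subtype.ext hcc)
    exact congrArg Subtype.val this
  have hinjR : ∀ a ∈ L, ∀ c ∈ L, ∀ c' ∈ L, ρ a c = ρ a c' → c = c' := by
    intro a ha c hc c' hc' hcc
    have hg : Function.Surjective (fun c : L => (⟨ρ a c, hclo a ha c c.2⟩ : L)) := by
      rintro ⟨b, hb⟩
      obtain ⟨d, hd, hdb⟩ := hexR a ha b hb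
      exact ⟨⟨d, hd⟩, Subtype.ext hdb⟩
    have hginj := (Finite.injective_iff_surjective).2 hg
    have := hginj (a₁ := ⟨c, hc⟩) (a₂ := ⟨c', hc'⟩) (Subtype.ext hcc)
    exact congrArg Subtype.val this
  refine ⟨hclo, fun a ha b hb => ⟨?_, ?_⟩⟩
  · obtain ⟨c, hc, hca⟩ := hexL a ha b hb
    exact ⟨c, ⟨hc, hca⟩, fun c' ⟨hc', hc'a⟩ => hinjL a ha c' hc' c hc (hc'a.trans hca.symm)⟩
  · obtain ⟨c, hc, hca⟩ := hexR a ha b hb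
    exact ⟨c, ⟨hc, hca⟩, fun c' ⟨hc', hc'a⟩ => hinjR a ha c' hc' c hc (hc'a.trans hca.symm)⟩
end

section
/- Let Λ ⊆ (ℤ → A) be a shift space over a finite type A, let ρ : A → A → A, and let * be the coordinatewise (1-block) operation (x * y) i = ρ (x i) (y i). Assume Λ is closed under *, that * is left and right cancellative on Λ, and that property (H3) holds: for every x ∈ Λ, {x * y : y ∈ Λ} = Λ = {y * x : y ∈ Λ}. Then Λ is a shift of finite type: there exists N ≥ 0 such that every x : ℤ → A all of whose blocks of length N+1 occur in Λ — i.e., such that for every i ∈ ℤ there exist y ∈ Λ and m ∈ ℤ with x (i + j) = y (m + j) for all 0 ≤ j ≤ N — belongs to Λ. -/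
namespace Statement4Aux

variable {A : Type*}

/-- Restriction of a biinfinite sequence to the window `[0, n)`. -/
def res (n : ℕ) (x : ℤ → A) : Fin n → A := fun j => x ((j : ℕ) : ℤ)

/-- The allowed words of length `n`. -/
def W (Λ : Set (ℤ → A)) (n : ℕ) : Set (Fin n → A) := res n '' Λ

/-- The extension letters of a word `w`. -/
def E (Λ : Set (ℤ → A)) (n : ℕ) (w : Fin n → A) : Set A :=
  {a | Fin.snoc w a ∈ W Λ (n + 1)}

theorem mem_E {Λ : Set (ℤ → A)} {n : ℕ} {w : Fin n → A} {a : A} :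
    a ∈ E Λ n w ↔ Fin.snoc w a ∈ W Λ (n + 1) := Iff.rfl

theorem res_tail (n : ℕ) (x : ℤ → A) :
    Fin.tail (res (n + 1) x) = res n (fun i => x (i + 1)) := by
  funext j
  show x (((j.succ : ℕ) : ℤ)) = x (((j : ℕ) : ℤ) + 1)
  rw [Fin.val_succ]
  push_cast
  ring_nf

theorem res_snoc (n : ℕ) (x : ℤ → A) :
    Fin.snoc (res n x) (x ((n : ℕ) : ℤ)) = res (n + 1) x := by
  funext j
  induction j using Fin.lastCases with
  | last => simp [res]
  | cast i => simp [res]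

theorem tail_snoc (n : ℕ) (w : Fin (n + 1) → A) (a : A) :
    Fin.tail (Fin.snoc w a : Fin (n + 1 + 1) → A) = Fin.snoc (Fin.tail w) a := by
  funext j
  induction j using Fin.lastCases with
  | last =>
    have h : (Fin.last n).succ = Fin.last (n + 1) := Fin.succ_last n
    simp [Fin.tail, h]
  | cast i =>
    have h : (Fin.castSucc i).succ = Fin.castSucc i.succ := Fin.succ_castSucc i
    show (Fin.snoc w a : Fin (n + 1 + 1) → A) (Fin.castSucc i).succ =
      (Fin.snoc (Fin.tail w) a : Fin (n + 1) → A) (Fin.castSucc i)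
    rw [h, Fin.snoc_castSucc, Fin.snoc_castSucc, Fin.tail]

end Statement4Aux

open Statement4Aux

theorem statement4 {A : Type*} [Fintype A] [TopologicalSpace A] [DiscreteTopology A]
    (Λ : Set (ℤ → A)) (hne : Λ.Nonempty) (hclosed : IsClosed Λ)
    (hshift : (fun x : ℤ → A => (fun i => x (i + 1) : ℤ → A)) '' Λ = Λ)
    (ρ : A → A → A)
    (hclosedop : ∀ x ∈ Λ, ∀ y ∈ Λ, (fun i => ρ (x i) (y i) : ℤ → A) ∈ Λ)
    (hleft : ∀ x ∈ Λ, ∀ y ∈ Λ, ∀ z ∈ Λ,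
      (fun i => ρ (x i) (y i) : ℤ → A) = (fun i => ρ (x i) (z i)) → y = z)
    (hright : ∀ x ∈ Λ, ∀ y ∈ Λ, ∀ z ∈ Λ,
      (fun i => ρ (y i) (x i) : ℤ → A) = (fun i => ρ (z i) (x i)) → y = z)
    (hH3 : ∀ x ∈ Λ,
      (fun y : ℤ → A => (fun i => ρ (x i) (y i) : ℤ → A)) '' Λ = Λ ∧
      (fun y : ℤ → A => (fun i => ρ (y i) (x i) : ℤ → A)) '' Λ = Λ) :
    ∃ N : ℕ, ∀ x : ℤ → A,
      (∀ i : ℤ, ∃ y ∈ Λ, ∃ m : ℤ, ∀ j : ℕ, j ≤ N → x (i + (j : ℤ)) = y (m + (j : ℤ))) →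
      x ∈ Λ := by
  classical
  obtain ⟨x₀, hx₀⟩ := hne
  -- shift invariance in both directions
  have hσ : ∀ x ∈ Λ, (fun i => x (i + 1) : ℤ → A) ∈ Λ := by
    intro x hx
    rw [← hshift]
    exact ⟨x, hx, rfl⟩
  have hσ' : ∀ x ∈ Λ, (fun i => x (i - 1) : ℤ → A) ∈ Λ := by
    intro x hx
    have hx' : x ∈ (fun x : ℤ → A => (fun i => x (i + 1) : ℤ → A)) '' Λ := by
      rw [hshift]; exact hx
    obtain ⟨y, hy, hxy⟩ := hx'
    have he : (fun i : ℤ => x (i - 1)) = y := by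
      funext i
      have h2 : y (i - 1 + 1) = x (i - 1) := congrFun hxy (i - 1)
      rw [← h2]
      congr 1
      ring
    rw [he]; exact hy
  have hshiftm : ∀ x ∈ Λ, ∀ m : ℤ, (fun i => x (i + m) : ℤ → A) ∈ Λ := by
    intro x hx m
    induction m using Int.induction_on with
    | zero => simpa using hx
    | succ k ih =>
      have h := hσ _ ih
      have e : (fun i : ℤ => x (i + ((k : ℤ) + 1))) =
          fun i : ℤ => (fun i : ℤ => x (i + (k : ℤ))) (i + 1) := by
        funext i
        show x (i + ((k : ℤ) + 1)) = x (i + 1 + (k : ℤ))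
        congr 1
        ring
      rw [e]; exact h
    | pred k ih =>
      have h := hσ' _ ih
      have e : (fun i : ℤ => x (i + (-(k : ℤ) - 1))) =
          fun i : ℤ => (fun i : ℤ => x (i + -(k : ℤ))) (i - 1) := by
        funext i
        show x (i + (-(k : ℤ) - 1)) = x (i - 1 + -(k : ℤ))
        congr 1
        ring
      rw [e]; exact h
  -- basic word facts
  have hWop : ∀ (n : ℕ) (w v : Fin n → A), w ∈ W Λ n → v ∈ W Λ n →
      (fun j => ρ (w j) (v j)) ∈ W Λ n := by
    rintro n w v ⟨x, hx, rfl⟩ ⟨y, hy, rfl⟩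
    exact ⟨_, hclosedop x hx y hy, rfl⟩
  have hSurjL : ∀ (n : ℕ), ∀ u ∈ W Λ n, ∀ t ∈ W Λ n,
      ∃ v ∈ W Λ n, (fun j => ρ (u j) (v j)) = t := by
    rintro n u ⟨x, hx, rfl⟩ t ⟨z, hz, rfl⟩
    obtain ⟨y, hy, hxy⟩ : z ∈ (fun y : ℤ → A => (fun i => ρ (x i) (y i) : ℤ → A)) '' Λ := by
      rw [(hH3 x hx).1]; exact hz
    refine ⟨res n y, ⟨y, hy, rfl⟩, ?_⟩
    funext j
    exact congrFun hxy _
  have hSurjR : ∀ (n : ℕ), ∀ u ∈ W Λ n, ∀ t ∈ W Λ n,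
      ∃ v ∈ W Λ n, (fun j => ρ (v j) (u j)) = t := by
    rintro n u ⟨x, hx, rfl⟩ t ⟨z, hz, rfl⟩
    obtain ⟨y, hy, hxy⟩ : z ∈ (fun y : ℤ → A => (fun i => ρ (y i) (x i) : ℤ → A)) '' Λ := by
      rw [(hH3 x hx).2]; exact hz
    refine ⟨res n y, ⟨y, hy, rfl⟩, ?_⟩
    funext j
    exact congrFun hxy _
  -- word-level left cancellation via finiteness
  have hCancelL : ∀ (n : ℕ), ∀ u ∈ W Λ n, ∀ v ∈ W Λ n, ∀ v' ∈ W Λ n,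
      (fun j => ρ (u j) (v j)) = (fun j => ρ (u j) (v' j)) → v = v' := by
    intro n u hu v hv v' hv' heq
    let g : ↥(W Λ n) → ↥(W Λ n) := fun p => ⟨fun j => ρ (u j) (p.1 j), hWop n u p.1 hu p.2⟩
    have hg : Function.Surjective g := by
      rintro ⟨t, ht⟩
      obtain ⟨v'', hv'', he⟩ := hSurjL n u hu t ht
      exact ⟨⟨v'', hv''⟩, Subtype.ext he⟩
    have hgi : Function.Injective g := Finite.injective_iff_surjective.mpr hg
    have h3 : (⟨v, hv⟩ : ↥(W Λ n)) = ⟨v', hv'⟩ := hgi (Subtype.ext heq)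
    exact congrArg Subtype.val h3
  have hEfin : ∀ (n : ℕ) (w : Fin n → A), (E Λ n w).Finite := fun n w => Set.toFinite _
  -- all extension sets at a given length have the same cardinality
  have hEle : ∀ (n : ℕ), ∀ w ∈ W Λ n, ∀ w' ∈ W Λ n,
      (E Λ n w).ncard ≤ (E Λ n w').ncard := by
    intro n w hw w' hw'
    obtain ⟨t, ht, hts⟩ := hSurjR n w hw w' hw'
    obtain ⟨xt, hxt, rfl⟩ := ht
    have hu : res (n + 1) xt ∈ W Λ (n + 1) := ⟨xt, hxt, rfl⟩
    have hkey : ∀ a : A, (fun j : Fin (n + 1) => ρ (res (n + 1) xt j) ((Fin.snoc w a : Fin (n+1) → A) j))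
        = Fin.snoc w' (ρ (xt ((n : ℕ) : ℤ)) a) := by
      intro a
      funext j
      induction j using Fin.lastCases with
      | last => simp [res, Fin.snoc_last]
      | cast i =>
        have h1 := congrFun hts i
        simp only [Fin.snoc_castSucc]
        have h2 : res (n + 1) xt i.castSucc = res n xt i := by simp [res]
        rw [h2]
        exact h1
    have hmaps : ∀ a ∈ E Λ n w, ρ (xt ((n : ℕ) : ℤ)) a ∈ E Λ n w' := by
      intro a ha
      have h := hWop (n + 1) _ _ hu ha
      rw [hkey a] at h
      exact h
    have hinj : Set.InjOn (fun a => ρ (xt ((n : ℕ) : ℤ)) a) (E Λ n w) := by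
      intro a ha a' ha' haa
      have h1 : (fun j : Fin (n + 1) => ρ (res (n + 1) xt j) ((Fin.snoc w a : Fin (n+1) → A) j))
          = (fun j : Fin (n + 1) => ρ (res (n + 1) xt j) ((Fin.snoc w a' : Fin (n+1) → A) j)) := by
        rw [hkey a, hkey a']
        simp only at haa
        rw [haa]
      have h2 := hCancelL (n + 1) _ hu _ ha _ ha' h1
      have h3 := congrFun h2 (Fin.last n)
      simpa [Fin.snoc_last] using h3
    calc (E Λ n w).ncard
        = ((fun a => ρ (xt ((n : ℕ) : ℤ)) a) '' E Λ n w).ncard :=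
          (Set.ncard_image_of_injOn hinj).symm
      _ ≤ (E Λ n w').ncard := by
          refine Set.ncard_le_ncard ?_ (hEfin n w')
          rintro b ⟨a, ha, rfl⟩
          exact hmaps a ha
  have hEcard : ∀ (n : ℕ), ∀ w ∈ W Λ n, ∀ w' ∈ W Λ n,
      (E Λ n w).ncard = (E Λ n w').ncard :=
    fun n w hw w' hw' => le_antisymm (hEle n w hw w' hw') (hEle n w' hw' w hw)
  -- monotonicity of extension sets under dropping the first letter
  have hEmono : ∀ (n : ℕ) (w : Fin (n + 1) → A), E Λ (n + 1) w ⊆ E Λ n (Fin.tail w) := by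
    intro n w a ha
    obtain ⟨x, hx, hres⟩ := ha
    show Fin.snoc (Fin.tail w) a ∈ W Λ (n + 1)
    refine ⟨fun i => x (i + 1), hσ x hx, ?_⟩
    calc res (n + 1) (fun i => x (i + 1))
        = Fin.tail (res (n + 1 + 1) x) := (res_tail (n + 1) x).symm
      _ = Fin.tail (Fin.snoc w a : Fin (n + 1 + 1) → A) := by rw [hres]
      _ = Fin.snoc (Fin.tail w) a := tail_snoc n w a
  have hκmono : ∀ n : ℕ, (E Λ (n + 1) (res (n + 1) x₀)).ncard ≤ (E Λ n (res n x₀)).ncard := by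
    intro n
    have h1 : (E Λ (n + 1) (res (n + 1) x₀)).ncard
        ≤ (E Λ n (Fin.tail (res (n + 1) x₀))).ncard :=
      Set.ncard_le_ncard (hEmono n _) (hEfin _ _)
    rw [res_tail n x₀] at h1
    have h3 := hEcard n _ ⟨_, hσ x₀ hx₀, rfl⟩ _ ⟨x₀, hx₀, rfl⟩
    omega
  -- stabilization of the cardinalities
  obtain ⟨N, hstab⟩ : ∃ N : ℕ, ∀ n, N ≤ n →
      (E Λ n (res n x₀)).ncard = (E Λ N (res N x₀)).ncard := by
    have hanti : Antitone (fun n => (E Λ n (res n x₀)).ncard) :=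
      antitone_nat_of_succ_le hκmono
    obtain ⟨N, hN⟩ := Nat.sInf_mem
      (Set.range_nonempty (fun n => (E Λ n (res n x₀)).ncard))
    refine ⟨N, fun n hn => le_antisymm (hanti hn) ?_⟩
    have h4 : (E Λ N (res N x₀)).ncard
        ≤ (E Λ n (res n x₀)).ncard := by
      have h5 : sInf (Set.range (fun n => (E Λ n (res n x₀)).ncard))
          ≤ (E Λ n (res n x₀)).ncard := Nat.sInf_le ⟨n, rfl⟩
      simp only at hN
      omega
    exact h4
  -- the Markov property
  have hMarkov : ∀ n : ℕ, N ≤ n → ∀ w ∈ W Λ (n + 1),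
      E Λ (n + 1) w = E Λ n (Fin.tail w) := by
    intro n hn w hw
    have htw : Fin.tail w ∈ W Λ n := by
      obtain ⟨x, hx, rfl⟩ := hw
      rw [res_tail n x]
      exact ⟨_, hσ x hx, rfl⟩
    have h1 : (E Λ (n + 1) w).ncard = (E Λ (n + 1) (res (n + 1) x₀)).ncard :=
      hEcard (n + 1) w hw _ ⟨x₀, hx₀, rfl⟩
    have h2 : (E Λ n (Fin.tail w)).ncard = (E Λ n (res n x₀)).ncard :=
      hEcard n _ htw _ ⟨x₀, hx₀, rfl⟩
    have h3 := hstab (n + 1) (by omega)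
    have h4 := hstab n hn
    exact Set.eq_of_subset_of_ncard_le (hEmono n w) (by omega) (hEfin _ _)
  -- conclusion
  refine ⟨N, ?_⟩
  intro x hx
  -- every block of x of length ≥ N+1 is allowed
  have claim : ∀ d : ℕ, ∀ i : ℤ,
      (fun j : Fin (N + d + 1) => x (i + ((j : ℕ) : ℤ))) ∈ W Λ (N + d + 1) := by
    intro d
    induction d with
    | zero =>
      intro i
      obtain ⟨y, hy, m, hagree⟩ := hx i
      refine ⟨fun t => y (t + m), hshiftm y hy m, ?_⟩
      funext j
      show y (((j : ℕ) : ℤ) + m) = x (i + ((j : ℕ) : ℤ))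
      have hj : (j : ℕ) ≤ N := by omega
      have := hagree (j : ℕ) hj
      rw [this]
      congr 1
      ring
    | succ d ih =>
      intro i
      -- length (N + d + 1) + 1
      have hu : (fun j : Fin (N + d + 1) => x (i + ((j : ℕ) : ℤ))) ∈ W Λ (N + d + 1) := ih i
      have hsnoc : (fun j : Fin (N + d + 1 + 1) => x (i + ((j : ℕ) : ℤ)))
          = Fin.snoc (fun j : Fin (N + d + 1) => x (i + ((j : ℕ) : ℤ)))
              (x (i + ((N + d + 1 : ℕ) : ℤ))) := by
        funext j
        induction j using Fin.lastCases with
        | last => simp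
        | cast i' => simp
      have htail : Fin.tail (fun j : Fin (N + d + 1) => x (i + ((j : ℕ) : ℤ)))
          = fun j : Fin (N + d) => x ((i + 1) + ((j : ℕ) : ℤ)) := by
        funext j
        show x (i + ((j.succ : ℕ) : ℤ)) = x ((i + 1) + ((j : ℕ) : ℤ))
        congr 1
        push_cast [Fin.val_succ]
        ring
      have hmem : x (i + ((N + d + 1 : ℕ) : ℤ)) ∈
          E Λ (N + d) (Fin.tail (fun j : Fin (N + d + 1) => x (i + ((j : ℕ) : ℤ)))) := by
        rw [htail]
        show Fin.snoc (fun j : Fin (N + d) => x ((i + 1) + ((j : ℕ) : ℤ)))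
            (x (i + ((N + d + 1 : ℕ) : ℤ))) ∈ W Λ (N + d + 1)
        have hsnoc2 : Fin.snoc (fun j : Fin (N + d) => x ((i + 1) + ((j : ℕ) : ℤ)))
            (x (i + ((N + d + 1 : ℕ) : ℤ)))
            = fun j : Fin (N + d + 1) => x ((i + 1) + ((j : ℕ) : ℤ)) := by
          funext j
          induction j using Fin.lastCases with
          | last =>
            simp only [Fin.snoc_last, Fin.val_last]
            congr 1
            push_cast
            ring
          | cast i' => simp
        rw [hsnoc2]
        exact ih (i + 1)
      have hmem2 : x (i + ((N + d + 1 : ℕ) : ℤ)) ∈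
          E Λ (N + d + 1) (fun j : Fin (N + d + 1) => x (i + ((j : ℕ) : ℤ))) := by
        rw [hMarkov (N + d) (by omega) _ hu]
        exact hmem
      show (fun j : Fin (N + d + 1 + 1) => x (i + ((j : ℕ) : ℤ))) ∈ W Λ (N + d + 1 + 1)
      rw [hsnoc]
      exact hmem2
  -- from blocks to membership: approximate x by elements of Λ
  have hagree : ∀ n : ℕ, ∃ z ∈ Λ, ∀ j : ℤ, -(n : ℤ) ≤ j → j ≤ (n : ℤ) → z j = x j := by
    intro n
    obtain ⟨z', hz', hres⟩ := claim (n + n) (-(n : ℤ))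
    refine ⟨fun t => z' (t + (n : ℤ)), hshiftm z' hz' n, ?_⟩
    intro j hj1 hj2
    have hlt : (j + (n : ℤ)).toNat < N + (n + n) + 1 := by omega
    have h6 : z' (((j + (n : ℤ)).toNat : ℕ) : ℤ)
        = x (-(n : ℤ) + (((j + (n : ℤ)).toNat : ℕ) : ℤ)) :=
      congrFun hres (⟨(j + (n : ℤ)).toNat, hlt⟩ : Fin (N + (n + n) + 1))
    have hcast : (((j + (n : ℤ)).toNat : ℕ) : ℤ) = j + (n : ℤ) := by omega
    rw [hcast] at h6
    show z' (j + (n : ℤ)) = x j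
    rw [h6]
    congr 1
    ring
  choose y hyΛ hyx using hagree
  have htend : Filter.Tendsto y Filter.atTop (nhds x) := by
    rw [tendsto_pi_nhds]
    intro i
    have hev : ∀ᶠ n in Filter.atTop, y n i = x i := by
      rw [Filter.eventually_atTop]
      exact ⟨i.natAbs, fun n hn => hyx n i (by omega) (by omega)⟩
    exact Filter.Tendsto.congr' (by filter_upwards [hev] with n hn using hn.symm)
      tendsto_const_nhds
  exact hclosed.mem_of_tendsto htend (Filter.Eventually.of_forall hyΛ)
end

section
/- In the setting of a 1-block quasi-group Markov shift: (i) for all g, h ∈ A, the follower sets F(g) and F(h) have the same cardinality, and the predecessor sets P(g) and P(h) have the same cardinality; (ii) if s, r, t ∈ A satisfy T r s (i.e., s ∈ F(r)) and T s t (i.e., s ∈ P(t)), then for every h ∈ A: s ∙ F(h) = F(r ∙ h), F(h) ∙ s = F(h ∙ r), s ∙ P(h) = P(t ∙ h), and P(h) ∙ s = P(h ∙ t). -/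
/-- The follower set of a letter with respect to a transition relation. -/
def followerSet {A : Type*} (T : A → A → Prop) (a : A) : Set A := {b | T a b}

/-- The predecessor set of a letter with respect to a transition relation. -/
def predecessorSet {A : Type*} (T : A → A → Prop) (a : A) : Set A := {b | T b a}

private lemma key_img {A : Type*} [Fintype A] (f σ : A → A)
    (hf : Function.Injective f) (hσ : Function.Injective σ)
    (S : A → Set A) (hsub : ∀ h, f '' S h ⊆ S (σ h)) :
    ∀ h, f '' S h = S (σ h) := by
  have hle : ∀ h, (S h).ncard ≤ (S (σ h)).ncard := by
    intro h
    calc (S h).ncard = (f '' S h).ncard := (Set.ncard_image_of_injective _ hf).symm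
      _ ≤ (S (σ h)).ncard := Set.ncard_le_ncard (hsub h) (Set.toFinite _)
  have hbij : Function.Bijective σ := Finite.injective_iff_bijective.mp hσ
  have hsum : ∑ h : A, (S h).ncard = ∑ h : A, (S (σ h)).ncard :=
    (Fintype.sum_bijective σ hbij (fun h => (S (σ h)).ncard) (fun h => (S h).ncard)
      (fun h => rfl)).symm
  have heq : ∀ h, (S h).ncard = (S (σ h)).ncard := by
    have := (Finset.sum_eq_sum_iff_of_le (fun i _ => hle i)).mp hsum
    intro h; exact this h (Finset.mem_univ h)
  intro h
  apply Set.eq_of_subset_of_ncard_le (hsub h)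
  rw [Set.ncard_image_of_injective _ hf]
  exact (heq h).ge

theorem statement6 {A : Type*} [Fintype A] [Nonempty A]
    (op : A → A → A)
    (hleft : ∀ a b c : A, op a b = op a c → b = c)
    (hright : ∀ a b c : A, op b a = op c a → b = c)
    (T : A → A → Prop)
    (hsucc : ∀ a : A, ∃ b, T a b)
    (hpred : ∀ a : A, ∃ c, T c a)
    (hcompat : ∀ a a' b b' : A, T a b → T a' b' → T (op a a') (op b b')) :
    (∀ g h : A, (followerSet T g).ncard = (followerSet T h).ncard ∧
      (predecessorSet T g).ncard = (predecessorSet T h).ncard) ∧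
    (∀ s r t : A, T r s → T s t → ∀ h : A,
      (fun b => op s b) '' followerSet T h = followerSet T (op r h) ∧
      (fun b => op b s) '' followerSet T h = followerSet T (op h r) ∧
      (fun b => op s b) '' predecessorSet T h = predecessorSet T (op t h) ∧
      (fun b => op b s) '' predecessorSet T h = predecessorSet T (op h t)) := by
  have hLinj : ∀ s : A, Function.Injective (fun b => op s b) :=
    fun s a b h => hleft s a b h
  have hRinj : ∀ s : A, Function.Injective (fun b => op b s) :=
    fun s a b h => hright s a b h
  -- main image lemmas
  have FL : ∀ s r : A, T r s → ∀ h : A,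
      (fun b => op s b) '' followerSet T h = followerSet T (op r h) := by
    intro s r hrs
    exact key_img _ _ (hLinj s) (hLinj r) (followerSet T)
      (fun h => by rintro _ ⟨b, hb, rfl⟩; exact hcompat r h s b hrs hb)
  have FR : ∀ s r : A, T r s → ∀ h : A,
      (fun b => op b s) '' followerSet T h = followerSet T (op h r) := by
    intro s r hrs
    exact key_img _ _ (hRinj s) (hRinj r) (followerSet T)
      (fun h => by rintro _ ⟨b, hb, rfl⟩; exact hcompat h r b s hb hrs)
  have PL : ∀ s t : A, T s t → ∀ h : A,
      (fun b => op s b) '' predecessorSet T h = predecessorSet T (op t h) := by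
    intro s t hst
    exact key_img _ _ (hLinj s) (hLinj t) (predecessorSet T)
      (fun h => by rintro _ ⟨b, hb, rfl⟩; exact hcompat s b t h hst hb)
  have PR : ∀ s t : A, T s t → ∀ h : A,
      (fun b => op b s) '' predecessorSet T h = predecessorSet T (op h t) := by
    intro s t hst
    exact key_img _ _ (hRinj s) (hRinj t) (predecessorSet T)
      (fun h => by rintro _ ⟨b, hb, rfl⟩; exact hcompat b s h t hb hst)
  constructor
  · intro g h
    have hsurj : Function.Surjective (fun x => op x h) :=
      (Finite.injective_iff_surjective.mp (fun a b hh => hright h a b hh))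
    constructor
    · obtain ⟨r, hr⟩ := hsurj g
      obtain ⟨s, hrs⟩ := hsucc r
      have hr' : op r h = g := hr
      have := FL s r hrs h
      rw [hr'] at this
      rw [← this, Set.ncard_image_of_injective _ (hLinj s)]
    · obtain ⟨t, ht⟩ := hsurj g
      obtain ⟨s, hst⟩ := hpred t
      have ht' : op t h = g := ht
      have := PL s t hst h
      rw [ht'] at this
      rw [← this, Set.ncard_image_of_injective _ (hLinj s)]
  · intro s r t hrs hst h
    exact ⟨FL s r hrs h, FR s r hrs h, PL s t hst h, PR s t hst h⟩
end

section
/- In the setting of a 1-block quasi-group Markov shift, for all a, b ∈ A the set products of follower and predecessor sets satisfy F(a) ∙ F(b) = F(a ∙ b) and P(a) ∙ P(b) = P(a ∙ b). -/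
theorem statement7 {A : Type*} [Fintype A] [Nonempty A]
    (op : A → A → A)
    (hleft : ∀ a b c : A, op a b = op a c → b = c)
    (hright : ∀ a b c : A, op b a = op c a → b = c)
    (T : A → A → Prop)
    (hsucc : ∀ a : A, ∃ b, T a b)
    (hpred : ∀ a : A, ∃ c, T c a)
    (hcompat : ∀ a a' b b' : A, T a b → T a' b' → T (op a a') (op b b')) :
    ∀ a b : A,
      Set.image2 op (followerSet T a) (followerSet T b) = followerSet T (op a b) ∧
      Set.image2 op (predecessorSet T a) (predecessorSet T b) = predecessorSet T (op a b) := by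
  intro a b
  have hS : Finite {p : A × A // T p.1 p.2} := Subtype.finite
  constructor
  · ext c
    simp only [Set.mem_image2, followerSet, Set.mem_setOf_eq]
    constructor
    · rintro ⟨x, hx, y, hy, rfl⟩
      exact hcompat a b x y hx hy
    · intro hc
      obtain ⟨c0, hc0⟩ := hsucc a
      -- left translation by (a, c0) on the subtype
      let f : {p : A × A // T p.1 p.2} → {p : A × A // T p.1 p.2} :=
        fun t => ⟨(op a t.1.1, op c0 t.1.2), hcompat a t.1.1 c0 t.1.2 hc0 t.2⟩
      have hinj : Function.Injective f := by
        rintro ⟨⟨u, v⟩, hu⟩ ⟨⟨u', v'⟩, hv⟩ h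
        simp only [f, Subtype.mk.injEq, Prod.mk.injEq] at h
        exact Subtype.ext (Prod.ext (hleft a u u' h.1) (hleft c0 v v' h.2))
      have hsurj := (Finite.injective_iff_surjective).mp hinj
      obtain ⟨⟨⟨x, y⟩, hxy⟩, ht⟩ := hsurj ⟨(op a b, c), hc⟩
      simp only [f, Subtype.mk.injEq, Prod.mk.injEq] at ht
      have hx : x = b := hleft a x b ht.1
      subst hx
      exact ⟨c0, hc0, y, hxy, ht.2⟩
  · ext c
    simp only [Set.mem_image2, predecessorSet, Set.mem_setOf_eq]
    constructor
    · rintro ⟨x, hx, y, hy, rfl⟩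
      exact hcompat x y a b hx hy
    · intro hc
      obtain ⟨d0, hd0⟩ := hpred b
      let g : {p : A × A // T p.1 p.2} → {p : A × A // T p.1 p.2} :=
        fun t => ⟨(op t.1.1 d0, op t.1.2 b), hcompat t.1.1 d0 t.1.2 b t.2 hd0⟩
      have hinj : Function.Injective g := by
        rintro ⟨⟨u, v⟩, hu⟩ ⟨⟨u', v'⟩, hv⟩ h
        simp only [g, Subtype.mk.injEq, Prod.mk.injEq] at h
        exact Subtype.ext (Prod.ext (hright d0 u u' h.1) (hright b v v' h.2))
      have hsurj := (Finite.injective_iff_surjective).mp hinj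
      obtain ⟨⟨⟨x, u⟩, hxu⟩, ht⟩ := hsurj ⟨(c, op a b), hc⟩
      simp only [g, Subtype.mk.injEq, Prod.mk.injEq] at ht
      have hu : u = a := hright b u a ht.2
      subst hu
      exact ⟨x, hxu, d0, hd0, ht.1⟩
end

section
/- In the setting of a 1-block quasi-group Markov shift, the family of follower sets L^F = {F(a) : a ∈ A}, equipped with the set product, is a quasigroup: it is closed under set product, for all a, b ∈ A there exist x, x' ∈ A with F(a) ∙ F(x) = F(b) and F(x') ∙ F(a) = F(b), and cancellation holds: F(a) ∙ F(c) = F(b) ∙ F(c) implies F(a) = F(b), and F(c) ∙ F(a) = F(c) ∙ F(b) implies F(a) = F(b). The same statements hold for the family of predecessor sets L^P = {P(a) : a ∈ A}. -/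
section Master
variable {A : Type*} [Fintype A]
  {op : A → A → A}
  (hleft : ∀ a b c : A, op a b = op a c → b = c)
  (hright : ∀ a b c : A, op b a = op c a → b = c)
  {T : A → A → Prop}
  (hsucc : ∀ a : A, ∃ b, T a b)
  (hcompat : ∀ a a' b b' : A, T a b → T a' b' → T (op a a') (op b b'))

set_option linter.unusedSectionVars false
include hleft hright hsucc hcompat

local notation "F" => followerSet T

lemma rsub {a a' : A} {e : A} (he : e ∈ F a') :
    (fun x => op x e) '' F a ⊆ F (op a a') := by
  rintro _ ⟨x, hx, rfl⟩
  exact hcompat a a' x e hx he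

lemma lsub {a a' : A} {e : A} (he : e ∈ F a) :
    (op e) '' F a' ⊆ F (op a a') := by
  rintro _ ⟨x, hx, rfl⟩
  exact hcompat a a' e x he hx

lemma ncard_le_r (a a' : A) : (F a).ncard ≤ (F (op a a')).ncard := by
  obtain ⟨e, he⟩ := hsucc a'
  calc (F a).ncard = ((fun x => op x e) '' F a).ncard :=
        (Set.ncard_image_of_injective _ (fun b c h => hright e b c h)).symm
    _ ≤ (F (op a a')).ncard :=
        Set.ncard_le_ncard (rsub hleft hright hsucc hcompat he) (Set.toFinite _)

lemma ncard_le_l (a a' : A) : (F a').ncard ≤ (F (op a a')).ncard := by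
  obtain ⟨e, he⟩ := hsucc a
  calc (F a').ncard = ((op e) '' F a').ncard :=
        (Set.ncard_image_of_injective _ (fun b c h => hleft e b c h)).symm
    _ ≤ (F (op a a')).ncard :=
        Set.ncard_le_ncard (lsub hleft hright hsucc hcompat he) (Set.toFinite _)

lemma ncard_const (z a : A) : (F a).ncard ≤ (F z).ncard := by
  obtain ⟨x, hx⟩ := Finite.injective_iff_surjective.mp
    (fun b c h => hright a b c h : Function.Injective (fun x => op x a)) z
  calc (F a).ncard ≤ (F (op x a)).ncard := ncard_le_l hleft hright hsucc hcompat x a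
    _ = (F z).ncard := by rw [show op x a = z from hx]

lemma key_r {a a' e : A} (he : e ∈ F a') :
    (fun x => op x e) '' F a = F (op a a') := by
  refine Set.eq_of_subset_of_ncard_le (rsub hleft hright hsucc hcompat he) ?_ (Set.toFinite _)
  rw [Set.ncard_image_of_injective _ (fun b c h => hright e b c h)]
  exact ncard_const hleft hright hsucc hcompat a (op a a')

lemma key_l {a a' e : A} (he : e ∈ F a) :
    (op e) '' F a' = F (op a a') := by
  refine Set.eq_of_subset_of_ncard_le (lsub hleft hright hsucc hcompat he) ?_ (Set.toFinite _)
  rw [Set.ncard_image_of_injective _ (fun b c h => hleft e b c h)]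
  exact ncard_const hleft hright hsucc hcompat a' (op a a')

lemma image2_F (a a' : A) : Set.image2 op (F a) (F a') = F (op a a') := by
  obtain ⟨e, he⟩ := hsucc a'
  apply Set.Subset.antisymm
  · rintro _ ⟨x, hx, y, hy, rfl⟩
    exact hcompat a a' x y hx hy
  · rw [← key_r hleft hright hsucc hcompat he]
    rintro _ ⟨x, hx, rfl⟩
    exact ⟨x, hx, e, he, rfl⟩

theorem master :
    (∀ a b : A, ∃ c : A, Set.image2 op (F a) (F b) = F c) ∧
    (∀ a b : A,
      (∃ x : A, Set.image2 op (F a) (F x) = F b) ∧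
      (∃ x' : A, Set.image2 op (F x') (F a) = F b)) ∧
    (∀ a b c : A,
      (Set.image2 op (F a) (F c) = Set.image2 op (F b) (F c) → F a = F b) ∧
      (Set.image2 op (F c) (F a) = Set.image2 op (F c) (F b) → F a = F b)) := by
  refine ⟨fun a b => ⟨op a b, image2_F hleft hright hsucc hcompat a b⟩, ?_, ?_⟩
  · intro a b
    constructor
    · obtain ⟨x, hx⟩ := Finite.injective_iff_surjective.mp
        (fun u v h => hleft a u v h : Function.Injective (op a)) b
      exact ⟨x, by rw [image2_F hleft hright hsucc hcompat, hx]⟩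
    · obtain ⟨x, hx⟩ := Finite.injective_iff_surjective.mp
        (fun u v h => hright a u v h : Function.Injective (fun y => op y a)) b
      exact ⟨x, by rw [image2_F hleft hright hsucc hcompat, show op x a = b from hx]⟩
  · intro a b c
    obtain ⟨e, he⟩ := hsucc c
    constructor
    · intro h
      rw [image2_F hleft hright hsucc hcompat, image2_F hleft hright hsucc hcompat] at h
      have h2 : (fun x => op x e) '' F a = (fun x => op x e) '' F b := by
        rw [key_r hleft hright hsucc hcompat he, key_r hleft hright hsucc hcompat he, h]
      exact Set.image_injective.mpr (fun u v hh => hright e u v hh) h2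
    · intro h
      rw [image2_F hleft hright hsucc hcompat, image2_F hleft hright hsucc hcompat] at h
      have h2 : (op e) '' F a = (op e) '' F b := by
        rw [key_l hleft hright hsucc hcompat he, key_l hleft hright hsucc hcompat he, h]
      exact Set.image_injective.mpr (fun u v hh => hleft e u v hh) h2

end Master

theorem statement8 {A : Type*} [Fintype A] [Nonempty A]
    (op : A → A → A)
    (hleft : ∀ a b c : A, op a b = op a c → b = c)
    (hright : ∀ a b c : A, op b a = op c a → b = c)
    (T : A → A → Prop)
    (hsucc : ∀ a : A, ∃ b, T a b)
    (hpred : ∀ a : A, ∃ c, T c a)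
    (hcompat : ∀ a a' b b' : A, T a b → T a' b' → T (op a a') (op b b')) :
    ((∀ a b : A, ∃ c : A,
        Set.image2 op (followerSet T a) (followerSet T b) = followerSet T c) ∧
      (∀ a b : A,
        (∃ x : A, Set.image2 op (followerSet T a) (followerSet T x) = followerSet T b) ∧
        (∃ x' : A, Set.image2 op (followerSet T x') (followerSet T a) = followerSet T b)) ∧
      (∀ a b c : A,
        (Set.image2 op (followerSet T a) (followerSet T c) =
            Set.image2 op (followerSet T b) (followerSet T c) →
          followerSet T a = followerSet T b) ∧
        (Set.image2 op (followerSet T c) (followerSet T a) =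
            Set.image2 op (followerSet T c) (followerSet T b) →
          followerSet T a = followerSet T b))) ∧
    ((∀ a b : A, ∃ c : A,
        Set.image2 op (predecessorSet T a) (predecessorSet T b) = predecessorSet T c) ∧
      (∀ a b : A,
        (∃ x : A, Set.image2 op (predecessorSet T a) (predecessorSet T x) = predecessorSet T b) ∧
        (∃ x' : A, Set.image2 op (predecessorSet T x') (predecessorSet T a) = predecessorSet T b)) ∧
      (∀ a b c : A,
        (Set.image2 op (predecessorSet T a) (predecessorSet T c) =
            Set.image2 op (predecessorSet T b) (predecessorSet T c) →
          predecessorSet T a = predecessorSet T b) ∧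
        (Set.image2 op (predecessorSet T c) (predecessorSet T a) =
            Set.image2 op (predecessorSet T c) (predecessorSet T b) →
          predecessorSet T a = predecessorSet T b))) := by
  exact ⟨master hleft hright hsucc hcompat,
    master (T := fun x y => T y x) hleft hright hpred
      (fun a a' b b' h1 h2 => hcompat b b' a a' h1 h2)⟩
end

section
/- In the setting of a 1-block quasi-group Markov shift, the follower sets are pairwise disjoint or equal: for all a, b ∈ A, F(a) ∩ F(b) is nonempty if and only if F(a) = F(b); similarly, P(a) ∩ P(b) is nonempty if and only if P(a) = P(b). -/
lemma followerSet_aux {A : Type*} [Finite A]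
    (op : A → A → A)
    (hleft : ∀ a b c : A, op a b = op a c → b = c)
    (hright : ∀ a b c : A, op b a = op c a → b = c)
    (T : A → A → Prop)
    (hsucc : ∀ a : A, ∃ b, T a b)
    (hcompat : ∀ a a' b b' : A, T a b → T a' b' → T (op a a') (op b b')) :
    ∀ a b : A,
      (followerSet T a ∩ followerSet T b).Nonempty ↔ followerSet T a = followerSet T b := by
  -- left multiplication is surjective
  have hlsurj : ∀ a t : A, ∃ a', op a a' = t := by
    intro a t
    exact Finite.injective_iff_surjective.mp (fun x y h => hleft a x y h) t
  -- all follower sets have the same cardinality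
  have hcardle : ∀ a t : A, (followerSet T a).ncard ≤ (followerSet T t).ncard := by
    intro a t
    obtain ⟨a', ha'⟩ := hlsurj a t
    obtain ⟨d, hd⟩ := hsucc a'
    have hinj : Function.Injective (fun x => op x d) := fun x y h => hright d x y h
    have hsub : (fun x => op x d) '' followerSet T a ⊆ followerSet T t := by
      rintro _ ⟨x, hx, rfl⟩
      have := hcompat a a' x d hx hd
      rwa [ha'] at this
    calc (followerSet T a).ncard
        = ((fun x => op x d) '' followerSet T a).ncard :=
          (Set.ncard_image_of_injective _ hinj).symm
      _ ≤ (followerSet T t).ncard := Set.ncard_le_ncard hsub (Set.toFinite _)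
  have hcard : ∀ a t : A, (followerSet T a).ncard = (followerSet T t).ncard :=
    fun a t => le_antisymm (hcardle a t) (hcardle t a)
  -- image description of follower sets
  have himg : ∀ a v c : A, c ∈ followerSet T a →
      op c '' followerSet T v = followerSet T (op a v) := by
    intro a v c hc
    have hsub : op c '' followerSet T v ⊆ followerSet T (op a v) := by
      rintro _ ⟨y, hy, rfl⟩
      exact hcompat a v c y hc hy
    have hinj : Function.Injective (op c) := fun x y h => hleft c x y h
    have h1 : (followerSet T (op a v)).ncard ≤ (op c '' followerSet T v).ncard := by
      rw [Set.ncard_image_of_injective _ hinj]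
      exact (hcard (op a v) v).le
    exact Set.eq_of_subset_of_ncard_le hsub h1 (Set.toFinite _)
  -- key step
  have hstep : ∀ x y : A, (followerSet T x ∩ followerSet T y).Nonempty →
      ∀ v, followerSet T (op x v) = followerSet T (op y v) := by
    rintro x y ⟨c, hcx, hcy⟩ v
    rw [← himg x v c hcx, himg y v c hcy]
  intro a b
  constructor
  · intro hne
    obtain ⟨e, he⟩ := hlsurj a b
    set g : A → A := fun x => op x e with hg
    have hga : g a = b := he
    -- F (g a) = F (g (g a))
    have hgb : followerSet T (g b) = followerSet T b := by
      have h := hstep a b hne e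
      rw [show op a e = b from he] at h
      exact h.symm
    have hFbne : (followerSet T b).Nonempty := hsucc b
    -- ∀ k, F (g^[k+1] a) = F b
    have hchain : ∀ k : ℕ, followerSet T (g^[k+1] a) = followerSet T b := by
      intro k
      induction k with
      | zero => simp [hga]
      | succ k ih =>
        have hne' : (followerSet T (g^[k+1] a) ∩ followerSet T b).Nonempty := by
          rw [ih, Set.inter_self]; exact hFbne
        have := hstep (g^[k+1] a) b hne' e
        rw [Function.iterate_succ_apply' g (k+1) a]
        exact this.trans hgb
    -- find m ≥ 1 with g^[m] a = a
    have hginj : Function.Injective g := fun x y h => hright e x y h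
    obtain ⟨m, n, hmn, hEq⟩ :=
      Finite.exists_ne_map_eq_of_infinite (fun k : ℕ => g^[k] a)
    wlog hlt : m < n generalizing m n
    · exact this n m hmn.symm hEq.symm (hmn.lt_or_gt.resolve_left hlt)
    have hiter : g^[m] (g^[n - m] a) = g^[m] a := by
      rw [← Function.iterate_add_apply, Nat.add_sub_cancel' hlt.le]
      exact hEq.symm
    have hcycle : g^[n - m] a = a := (hginj.iterate m) hiter
    obtain ⟨k, hk⟩ : ∃ k, n - m = k + 1 :=
      ⟨n - m - 1, by omega⟩
    have := hchain k
    rw [← hk, hcycle] at this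
    exact this
  · intro h
    rw [h, Set.inter_self]
    exact hsucc b

theorem statement9 {A : Type*} [Fintype A] [Nonempty A]
    (op : A → A → A)
    (hleft : ∀ a b c : A, op a b = op a c → b = c)
    (hright : ∀ a b c : A, op b a = op c a → b = c)
    (T : A → A → Prop)
    (hsucc : ∀ a : A, ∃ b, T a b)
    (hpred : ∀ a : A, ∃ c, T c a)
    (hcompat : ∀ a a' b b' : A, T a b → T a' b' → T (op a a') (op b b')) :
    ∀ a b : A,
      ((followerSet T a ∩ followerSet T b).Nonempty ↔ followerSet T a = followerSet T b) ∧
      ((predecessorSet T a ∩ predecessorSet T b).Nonempty ↔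
        predecessorSet T a = predecessorSet T b) := by
  intro a b
  refine ⟨followerSet_aux op hleft hright T hsucc hcompat a b, ?_⟩
  exact followerSet_aux op hleft hright (fun x y => T y x) hpred
    (fun a a' b b' h h' => hcompat b b' a a' h h') a b
end

section
/- In the setting of a 1-block quasi-group Markov shift: (a) for every a ∈ A and all b, b' ∈ F(a), one has P(b) = P(b'), so the map τ : L^F → L^P sending F(a) to P(b) for any b ∈ F(a) is well defined; (b) τ is a bijection from L^F = {F(a) : a ∈ A} onto L^P = {P(a) : a ∈ A} and satisfies τ(F₁ ∙ F₂) = τ(F₁) ∙ τ(F₂) for all F₁, F₂ ∈ L^F (an isomorphism of the set-product quasigroups); (c) in particular, for all a, b ∈ A, the cardinality of F(a) equals the cardinality of P(b). -/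
section Aux
variable {A : Type*}

/-- Left division stays in the graph: if `T a b` and `T c d` then there are `u, v`
with `a∙u = c`, `b∙v = d`, `T u v`. -/
lemma qg_ldiv [Finite A] (op : A → A → A)
    (hleft : ∀ a b c : A, op a b = op a c → b = c)
    (T : A → A → Prop)
    (hcompat : ∀ a a' b b' : A, T a b → T a' b' → T (op a a') (op b b'))
    {a b c d : A} (hab : T a b) (hcd : T c d) :
    ∃ u v, op a u = c ∧ op b v = d ∧ T u v := by
  set f : {p : A × A // T p.1 p.2} → {p : A × A // T p.1 p.2} :=
    fun p => ⟨(op a p.1.1, op b p.1.2), hcompat _ _ _ _ hab p.2⟩ with hf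
  have hinj : Function.Injective f := by
    rintro ⟨⟨u, v⟩, h⟩ ⟨⟨u', v'⟩, h'⟩ heq
    simp only [hf, Subtype.mk.injEq, Prod.mk.injEq] at heq
    exact Subtype.ext (Prod.ext (hleft _ _ _ heq.1) (hleft _ _ _ heq.2))
  obtain ⟨⟨⟨u, v⟩, huv⟩, h⟩ := (Finite.injective_iff_surjective.mp hinj) ⟨(c, d), hcd⟩
  simp only [hf, Subtype.mk.injEq, Prod.mk.injEq] at h
  exact ⟨u, v, h.1, h.2, huv⟩

lemma qg_rdiv [Finite A] (op : A → A → A)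
    (hright : ∀ a b c : A, op b a = op c a → b = c)
    (T : A → A → Prop)
    (hcompat : ∀ a a' b b' : A, T a b → T a' b' → T (op a a') (op b b'))
    {a b c d : A} (hab : T a b) (hcd : T c d) :
    ∃ u v, op u a = c ∧ op v b = d ∧ T u v :=
  qg_ldiv (fun x y => op y x) hright T
    (fun a a' b b' h h' => hcompat a' a b' b h' h) hab hcd

/-- The rectangle property, via the Mal'cev term for quasigroups. -/
lemma qg_rect [Finite A] (op : A → A → A)
    (hleft : ∀ a b c : A, op a b = op a c → b = c)
    (hright : ∀ a b c : A, op b a = op c a → b = c)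
    (T : A → A → Prop)
    (hcompat : ∀ a a' b b' : A, T a b → T a' b' → T (op a a') (op b b'))
    {a b b' c : A} (hab : T a b) (hab' : T a b') (hcb : T c b) : T c b' := by
  obtain ⟨e₀, w₀, he₀, hw₀, h₀⟩ := qg_ldiv op hleft T hcompat hab hab
  obtain ⟨u, v, hu, hv, huv⟩ := qg_rdiv op hright T hcompat h₀ hcb
  obtain ⟨e, w, he, hw, hew⟩ := qg_ldiv op hleft T hcompat hab hab'
  have hee : e = e₀ := hleft a e e₀ (he.trans he₀.symm)
  have hvb : v = b := hright w₀ v b (hv.trans hw₀.symm)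
  have h := hcompat u e v w huv hew
  rwa [hee, hu, hvb, hw] at h

/-- Dual rectangle property. -/
lemma qg_rect' [Finite A] (op : A → A → A)
    (hleft : ∀ a b c : A, op a b = op a c → b = c)
    (hright : ∀ a b c : A, op b a = op c a → b = c)
    (T : A → A → Prop)
    (hcompat : ∀ a a' b b' : A, T a b → T a' b' → T (op a a') (op b b'))
    {a b b' c : A} (hba : T b a) (hba' : T b' a) (hbc : T b c) : T b' c :=
  qg_rect op hleft hright (fun x y => T y x)
    (fun a a' b b' h h' => hcompat b b' a a' h h') hba hba' hbc

end Aux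

theorem statement10 {A : Type*} [Fintype A] [Nonempty A]
    (op : A → A → A)
    (hleft : ∀ a b c : A, op a b = op a c → b = c)
    (hright : ∀ a b c : A, op b a = op c a → b = c)
    (T : A → A → Prop)
    (hsucc : ∀ a : A, ∃ b, T a b)
    (hpred : ∀ a : A, ∃ c, T c a)
    (hcompat : ∀ a a' b b' : A, T a b → T a' b' → T (op a a') (op b b')) :
    (∀ a : A, ∀ b ∈ followerSet T a, ∀ b' ∈ followerSet T a,
      predecessorSet T b = predecessorSet T b') ∧
    (∃ τ : Set A → Set A,
      (∀ a b : A, T a b → τ (followerSet T a) = predecessorSet T b) ∧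
      Set.BijOn τ {S : Set A | ∃ a : A, S = followerSet T a}
        {S : Set A | ∃ a : A, S = predecessorSet T a} ∧
      (∀ a b : A, τ (Set.image2 op (followerSet T a) (followerSet T b)) =
        Set.image2 op (τ (followerSet T a)) (τ (followerSet T b)))) ∧
    (∀ a b : A, (followerSet T a).ncard = (predecessorSet T b).ncard) := by
  classical
  have rect : ∀ {a b b' c : A}, T a b → T a b' → T c b → T c b' :=
    fun hab hab' hcb => qg_rect op hleft hright T hcompat hab hab' hcb
  have rect' : ∀ {a b b' c : A}, T b a → T b' a → T b c → T b' c :=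
    fun hba hba' hbc => qg_rect' op hleft hright T hcompat hba hba' hbc
  -- part (a)
  have partA : ∀ a : A, ∀ b ∈ followerSet T a, ∀ b' ∈ followerSet T a,
      predecessorSet T b = predecessorSet T b' := by
    intro a b hb b' hb'
    ext c
    exact ⟨fun hc => rect hb hb' hc, fun hc => rect hb' hb hc⟩
  refine ⟨partA, ?_, ?_⟩
  · -- part (b)
    set τ : Set A → Set A := fun S => {c | ∃ b ∈ S, T c b} with hτ
    have prop1 : ∀ a b : A, T a b → τ (followerSet T a) = predecessorSet T b := by
      intro a b hab
      ext c
      constructor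
      · rintro ⟨b', hb', hcb'⟩
        exact rect hb' hab hcb'
      · intro hcb
        exact ⟨b, hab, hcb⟩
    -- product decompositions
    have Fprod : ∀ a b : A, followerSet T (op a b) =
        Set.image2 op (followerSet T a) (followerSet T b) := by
      intro a b
      ext y
      constructor
      · intro hy
        obtain ⟨y₁, hy₁⟩ := hsucc a
        obtain ⟨u, v, hu, hv, huv⟩ := qg_ldiv op hleft T hcompat hy₁ hy
        have hub : u = b := hleft a u b hu
        exact ⟨y₁, hy₁, v, hub ▸ huv, hv⟩
      · rintro ⟨y₁, h₁, y₂, h₂, rfl⟩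
        exact hcompat a b y₁ y₂ h₁ h₂
    have Pprod : ∀ a b : A, predecessorSet T (op a b) =
        Set.image2 op (predecessorSet T a) (predecessorSet T b) := by
      intro a b
      ext x
      constructor
      · intro hx
        obtain ⟨c₁, hc₁⟩ := hpred a
        obtain ⟨u, v, hu, hv, huv⟩ := qg_ldiv op hleft T hcompat hc₁ hx
        have hvb : v = b := hleft a v b hv
        exact ⟨c₁, hc₁, u, hvb ▸ huv, hu⟩
      · rintro ⟨x₁, h₁, x₂, h₂, rfl⟩
        exact hcompat x₁ x₂ a b h₁ h₂
    refine ⟨τ, prop1, ⟨?_, ?_, ?_⟩, ?_⟩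
    · -- MapsTo
      rintro S ⟨a, rfl⟩
      obtain ⟨b, hb⟩ := hsucc a
      exact ⟨b, prop1 a b hb⟩
    · -- InjOn
      rintro S₁ ⟨a₁, rfl⟩ S₂ ⟨a₂, rfl⟩ heq
      obtain ⟨b₁, hb₁⟩ := hsucc a₁
      obtain ⟨b₂, hb₂⟩ := hsucc a₂
      rw [prop1 a₁ b₁ hb₁, prop1 a₂ b₂ hb₂] at heq
      have ha₁' : a₁ ∈ predecessorSet T b₂ := heq ▸ (show a₁ ∈ predecessorSet T b₁ from hb₁)
      have ha₁ : T a₁ b₂ := ha₁'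
      ext y
      exact ⟨fun hy => rect' ha₁ hb₂ hy, fun hy => rect' hb₂ ha₁ hy⟩
    · -- SurjOn
      rintro S ⟨c, rfl⟩
      obtain ⟨a, ha⟩ := hpred c
      exact ⟨followerSet T a, ⟨a, rfl⟩, (prop1 a c ha).symm ▸ rfl⟩
    · -- multiplicativity
      intro a b
      obtain ⟨b', hb'⟩ := hsucc a
      obtain ⟨b'', hb''⟩ := hsucc b
      rw [← Fprod a b, prop1 (op a b) (op b' b'') (hcompat a b b' b'' hb' hb''),
        Pprod b' b'', prop1 a b' hb', prop1 b b'' hb'']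
  · -- part (c)
    have cardF : ∀ a : A, (followerSet T a).ncard
        = (Finset.univ.filter (fun b => T a b)).card := by
      intro a
      have : followerSet T a = ↑(Finset.univ.filter (fun b => T a b)) := by
        ext x; simp [followerSet]
      rw [this, Set.ncard_coe_finset]
    have cardP : ∀ a : A, (predecessorSet T a).ncard
        = (Finset.univ.filter (fun b => T b a)).card := by
      intro a
      have : predecessorSet T a = ↑(Finset.univ.filter (fun b => T b a)) := by
        ext x; simp [predecessorSet]
      rw [this, Set.ncard_coe_finset]
    have hFmono : ∀ a c : A, (followerSet T a).ncard ≤ (followerSet T c).ncard := by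
      intro a c
      obtain ⟨a', ha'⟩ :=
        (Finite.injective_iff_surjective.mp (fun x y h => hleft a x y h)) c
      obtain ⟨y', hy'⟩ := hsucc a'
      have himg : (fun y => op y y') '' followerSet T a ⊆ followerSet T c := by
        rintro _ ⟨y, hy, rfl⟩
        have h2 := hcompat a a' y y' hy hy'
        rwa [ha'] at h2
      calc (followerSet T a).ncard
          = ((fun y => op y y') '' followerSet T a).ncard :=
            (Set.ncard_image_of_injective _ (fun x y h => hright y' x y h)).symm
        _ ≤ (followerSet T c).ncard := Set.ncard_le_ncard himg (Set.toFinite _)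
    have hPmono : ∀ a c : A, (predecessorSet T a).ncard ≤ (predecessorSet T c).ncard := by
      intro a c
      obtain ⟨a', ha'⟩ :=
        (Finite.injective_iff_surjective.mp (fun x y h => hleft a x y h)) c
      obtain ⟨y', hy'⟩ := hpred a'
      have himg : (fun y => op y y') '' predecessorSet T a ⊆ predecessorSet T c := by
        rintro _ ⟨y, hy, rfl⟩
        have h2 := hcompat y y' a a' hy hy'
        rwa [ha'] at h2
      calc (predecessorSet T a).ncard
          = ((fun y => op y y') '' predecessorSet T a).ncard :=
            (Set.ncard_image_of_injective _ (fun x y h => hright y' x y h)).symm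
        _ ≤ (predecessorSet T c).ncard := Set.ncard_le_ncard himg (Set.toFinite _)
    intro a b
    -- double counting of edges
    set G : Finset (A × A) := Finset.univ.filter (fun p : A × A => T p.1 p.2) with hG
    have hfst : G.card = ∑ c : A, (followerSet T c).ncard := by
      rw [Finset.card_eq_sum_card_fiberwise
        (f := Prod.fst) (t := Finset.univ) (fun x _ => Finset.mem_univ _)]
      refine Finset.sum_congr rfl (fun c _ => ?_)
      rw [cardF c]
      apply Finset.card_bij (fun p _ => p.2)
      · rintro ⟨x, y⟩ hp
        simp only [hG, Finset.mem_filter, Finset.mem_univ, true_and] at hp ⊢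
        obtain ⟨h1, h2⟩ := hp
        subst h2
        exact h1
      · rintro ⟨x, y⟩ hp ⟨x', y'⟩ hp' h
        simp only [hG, Finset.mem_filter, Finset.mem_univ, true_and] at hp hp'
        simp only at h
        subst h
        rw [hp.2, hp'.2]
      · intro y hy
        simp only [Finset.mem_filter, Finset.mem_univ, true_and] at hy
        refine ⟨(c, y), ?_, rfl⟩
        simp [hG, hy]
    have hsnd : G.card = ∑ c : A, (predecessorSet T c).ncard := by
      rw [Finset.card_eq_sum_card_fiberwise
        (f := Prod.snd) (t := Finset.univ) (fun x _ => Finset.mem_univ _)]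
      refine Finset.sum_congr rfl (fun c _ => ?_)
      rw [cardP c]
      apply Finset.card_bij (fun p _ => p.1)
      · rintro ⟨x, y⟩ hp
        simp only [hG, Finset.mem_filter, Finset.mem_univ, true_and] at hp ⊢
        obtain ⟨h1, h2⟩ := hp
        subst h2
        exact h1
      · rintro ⟨x, y⟩ hp ⟨x', y'⟩ hp' h
        simp only [hG, Finset.mem_filter, Finset.mem_univ, true_and] at hp hp'
        simp only at h
        subst h
        rw [hp.2, hp'.2]
      · intro x hx
        simp only [Finset.mem_filter, Finset.mem_univ, true_and] at hx
        refine ⟨(x, c), ?_, rfl⟩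
        simp [hG, hx]
    have hFconst : ∀ c : A, (followerSet T c).ncard = (followerSet T a).ncard :=
      fun c => le_antisymm (hFmono c a) (hFmono a c)
    have hPconst : ∀ c : A, (predecessorSet T c).ncard = (predecessorSet T b).ncard :=
      fun c => le_antisymm (hPmono c b) (hPmono b c)
    have h1 : G.card = Fintype.card A * (followerSet T a).ncard := by
      rw [hfst, Finset.sum_congr rfl (fun c _ => hFconst c), Finset.sum_const,
        smul_eq_mul, Finset.card_univ]
    have h2 : G.card = Fintype.card A * (predecessorSet T b).ncard := by
      rw [hsnd, Finset.sum_congr rfl (fun c _ => hPconst c), Finset.sum_const,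
        smul_eq_mul, Finset.card_univ]
    exact Nat.eq_of_mul_eq_mul_left Fintype.card_pos (h1 ▸ h2)
end

section
/- In the setting of a 1-block quasi-group Markov shift, with classes h(a) = {b ∈ A | F(b) = F(a) and P(b) = P(a)} and H = {h(a) : a ∈ A}: for all a, b ∈ A, h(a) ∙ h(b) = h(a ∙ b) = a ∙ h(b) = h(a) ∙ b; moreover, for every a ∈ A, the cardinality of h(a) times the cardinality of H equals the cardinality of A. -/
/-- The class of a letter: all letters with the same follower set and the same
predecessor set. -/
def cls {A : Type*} (T : A → A → Prop) (a : A) : Set A :=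
  {b | followerSet T b = followerSet T a ∧ predecessorSet T b = predecessorSet T a}

/-- If a pointwise inequality along a bijection sums trivially, it's an equality. -/
lemma sumKeyAux {A : Type*} [Fintype A] (σ : A → A) (hσ : Function.Bijective σ)
    (g : A → ℕ) (h : ∀ x, g x ≤ g (σ x)) : ∀ x, g (σ x) = g x := by
  have hsum : ∑ x, g (σ x) = ∑ x, g x :=
    Fintype.sum_bijective σ hσ (fun x => g (σ x)) g (fun _ => rfl) |>.symm ▸
      (Fintype.sum_bijective σ hσ (fun x => g (σ x)) g (fun _ => rfl))
  intro x
  exact ((Finset.sum_eq_sum_iff_of_le (fun i _ => h i)).mp hsum.symm x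
    (Finset.mem_univ x)).symm

/-- Core lemma: for `u` a follower of `a`, left multiplication by `u` maps the
follower set of `b` onto the follower set of `op a b`. -/
lemma coreAux {A : Type*} [Fintype A] (op : A → A → A)
    (hleft : ∀ a b c : A, op a b = op a c → b = c)
    (T : A → A → Prop)
    (hsucc : ∀ a : A, ∃ b, T a b)
    (hcompat : ∀ a a' b b' : A, T a b → T a' b' → T (op a a') (op b b')) :
    ∀ a b u : A, T a u → op u '' followerSet T b = followerSet T (op a b) := by
  have hinj : ∀ a : A, Function.Injective (op a) := fun a x y h => hleft a x y h
  have hbij : ∀ a : A, Function.Bijective (op a) := fun a =>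
    Finite.injective_iff_bijective.mp (hinj a)
  have hsub : ∀ a b u : A, T a u →
      op u '' followerSet T b ⊆ followerSet T (op a b) := by
    rintro a b u hu _ ⟨d, hd, rfl⟩
    exact hcompat a b u d hu hd
  have hle : ∀ a b : A,
      (followerSet T b).ncard ≤ (followerSet T (op a b)).ncard := by
    intro a b
    obtain ⟨u, hu⟩ := hsucc a
    calc (followerSet T b).ncard = (op u '' followerSet T b).ncard :=
          (Set.ncard_image_of_injective _ (hinj u)).symm
      _ ≤ (followerSet T (op a b)).ncard :=
          Set.ncard_le_ncard (hsub a b u hu) (Set.toFinite _)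
  have heq : ∀ a b : A,
      (followerSet T (op a b)).ncard = (followerSet T b).ncard := fun a b =>
    sumKeyAux (op a) (hbij a) (fun x => (followerSet T x).ncard) (hle a) b
  intro a b u hu
  refine (Set.eq_of_subset_of_ncard_le (hsub a b u hu) ?_).symm ▸ rfl
  rw [heq a b, Set.ncard_image_of_injective _ (hinj u)]

theorem statement11 {A : Type*} [Fintype A] [Nonempty A]
    (op : A → A → A)
    (hleft : ∀ a b c : A, op a b = op a c → b = c)
    (hright : ∀ a b c : A, op b a = op c a → b = c)
    (T : A → A → Prop)
    (hsucc : ∀ a : A, ∃ b, T a b)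
    (hpred : ∀ a : A, ∃ c, T c a)
    (hcompat : ∀ a a' b b' : A, T a b → T a' b' → T (op a a') (op b b')) :
    (∀ a b : A,
      Set.image2 op (cls T a) (cls T b) = cls T (op a b) ∧
      (fun x => op a x) '' cls T b = cls T (op a b) ∧
      (fun x => op x b) '' cls T a = cls T (op a b)) ∧
    (∀ a : A,
      (cls T a).ncard * ({S : Set A | ∃ c : A, S = cls T c}).ncard = Fintype.card A) := by
  classical
  have hinjL : ∀ a : A, Function.Injective (op a) := fun a x y h => hleft a x y h
  have hinjR : ∀ b : A, Function.Injective (fun x => op x b) := fun b x y h =>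
    hright b x y h
  have hbijL : ∀ a : A, Function.Bijective (op a) := fun a =>
    Finite.injective_iff_bijective.mp (hinjL a)
  have hbijR : ∀ b : A, Function.Bijective (fun x => op x b) := fun b =>
    Finite.injective_iff_bijective.mp (hinjR b)
  -- the four core image lemmas
  have coreF : ∀ a b u : A, T a u →
      op u '' followerSet T b = followerSet T (op a b) :=
    coreAux op hleft T hsucc hcompat
  have coreP : ∀ a b u : A, T u a →
      op u '' predecessorSet T b = predecessorSet T (op a b) :=
    coreAux op hleft (fun x y => T y x) hpred
      (fun a a' b b' h h' => hcompat b b' a a' h h')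
  have coreF' : ∀ a b v : A, T b v →
      (fun x => op x v) '' followerSet T a = followerSet T (op a b) :=
    fun a b v hv =>
    coreAux (fun x y => op y x) hright T hsucc
      (fun p q r s h h' => hcompat q p s r h' h) b a v hv
  have coreP' : ∀ a b v : A, T v b →
      (fun x => op x v) '' predecessorSet T a = predecessorSet T (op a b) :=
    fun a b v hv =>
    coreAux (fun x y => op y x) hright (fun x y => T y x) hpred
      (fun p q r s h h' => hcompat s r q p h' h) b a v hv
  -- step lemmas
  have hstepL : ∀ a b b' : A, b' ∈ cls T b → op a b' ∈ cls T (op a b) := by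
    rintro a b b' ⟨hF, hP⟩
    obtain ⟨u, hu⟩ := hsucc a
    obtain ⟨w, hw⟩ := hpred a
    exact ⟨by rw [← coreF a b' u hu, ← coreF a b u hu, hF],
      by rw [← coreP a b' w hw, ← coreP a b w hw, hP]⟩
  have hstepL' : ∀ a b b' : A, op a b' ∈ cls T (op a b) → b' ∈ cls T b := by
    rintro a b b' ⟨hF, hP⟩
    obtain ⟨u, hu⟩ := hsucc a
    obtain ⟨w, hw⟩ := hpred a
    constructor
    · apply Set.image_injective.mpr (hinjL u)
      rw [coreF a b' u hu, coreF a b u hu]; exact hF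
    · apply Set.image_injective.mpr (hinjL w)
      rw [coreP a b' w hw, coreP a b w hw]; exact hP
  have hstepR : ∀ a b a' : A, a' ∈ cls T a → op a' b ∈ cls T (op a b) := by
    rintro a b a' ⟨hF, hP⟩
    obtain ⟨v, hv⟩ := hsucc b
    obtain ⟨w, hw⟩ := hpred b
    exact ⟨by rw [← coreF' a' b v hv, ← coreF' a b v hv, hF],
      by rw [← coreP' a' b w hw, ← coreP' a b w hw, hP]⟩
  have hstepR' : ∀ a b a' : A, op a' b ∈ cls T (op a b) → a' ∈ cls T a := by
    rintro a b a' ⟨hF, hP⟩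
    obtain ⟨v, hv⟩ := hsucc b
    obtain ⟨w, hw⟩ := hpred b
    constructor
    · apply Set.image_injective.mpr (hinjR v)
      rw [coreF' a' b v hv, coreF' a b v hv]; exact hF
    · apply Set.image_injective.mpr (hinjR w)
      rw [coreP' a' b w hw, coreP' a b w hw]; exact hP
  have clsEq : ∀ x y : A, x ∈ cls T y → cls T x = cls T y := by
    rintro x y ⟨hF, hP⟩
    unfold cls
    rw [hF, hP]
  have memSelf : ∀ x : A, x ∈ cls T x := fun x => ⟨rfl, rfl⟩
  have eqL : ∀ a b : A, (fun x => op a x) '' cls T b = cls T (op a b) := by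
    intro a b
    apply Set.Subset.antisymm
    · rintro _ ⟨b', hb', rfl⟩
      exact hstepL a b b' hb'
    · intro c hc
      obtain ⟨b', rfl⟩ := (hbijL a).2 c
      exact ⟨b', hstepL' a b b' hc, rfl⟩
  have eqR : ∀ a b : A, (fun x => op x b) '' cls T a = cls T (op a b) := by
    intro a b
    apply Set.Subset.antisymm
    · rintro _ ⟨a', ha', rfl⟩
      exact hstepR a b a' ha'
    · intro c hc
      obtain ⟨a', rfl⟩ := (hbijR b).2 c
      exact ⟨a', hstepR' a b a' hc, rfl⟩
  have eq2 : ∀ a b : A, Set.image2 op (cls T a) (cls T b) = cls T (op a b) := by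
    intro a b
    apply Set.Subset.antisymm
    · rintro _ ⟨a', ha', b', hb', rfl⟩
      have h1 : op a' b' ∈ cls T (op a' b) := hstepL a' b b' hb'
      have h2 : cls T (op a' b) = cls T (op a b) := clsEq _ _ (hstepR a b a' ha')
      rw [h2] at h1
      exact h1
    · intro c hc
      rw [← eqL a b] at hc
      obtain ⟨b', hb', rfl⟩ := hc
      exact ⟨a, memSelf a, b', hb', rfl⟩
  refine ⟨fun a b => ⟨eq2 a b, eqL a b, eqR a b⟩, ?_⟩
  -- cardinality part
  have ncardConst : ∀ c c' : A, (cls T c).ncard = (cls T c').ncard := by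
    have h1 : ∀ a b : A, (cls T (op a b)).ncard = (cls T b).ncard := by
      intro a b
      rw [← eqL a b, Set.ncard_image_of_injective _ (hinjL a)]
    intro c c'
    obtain ⟨a, ha⟩ := (hbijR c').2 c
    simp only at ha
    rw [← ha, h1 a c']
  intro a
  set Φ : Finset (Set A) := Finset.univ.image (fun c => cls T c) with hΦ
  have hH : {S : Set A | ∃ c : A, S = cls T c} = ↑Φ := by
    ext S
    simp [hΦ, eq_comm]
  have hfiber : ∀ c : A,
      (cls T c : Set A) = ↑(Finset.univ.filter fun x => cls T x = cls T c) := by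
    intro c
    ext x
    simp only [Finset.coe_filter, Finset.mem_univ, true_and, Set.mem_setOf_eq]
    exact ⟨fun h => clsEq x c h, fun h => h ▸ memSelf x⟩
  have hcard : Fintype.card A =
      ∑ S ∈ Φ, (Finset.univ.filter fun x => cls T x = S).card := by
    rw [← Finset.card_univ, hΦ]
    exact Finset.card_eq_sum_card_image (fun c => cls T c) Finset.univ
  have hterm : ∀ S ∈ Φ,
      (Finset.univ.filter fun x => cls T x = S).card = (cls T a).ncard := by
    intro S hS
    obtain ⟨c, _, rfl⟩ := Finset.mem_image.mp hS
    rw [← ncardConst c a]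
    conv_rhs => rw [hfiber c]
    rw [Set.ncard_coe_finset]
  rw [hcard, Finset.sum_congr rfl hterm, Finset.sum_const, smul_eq_mul, hH,
    Set.ncard_coe_finset, Nat.mul_comm]
end

section
/- In the setting of a 1-block quasi-group Markov shift, the family of classes H = {h(a) : a ∈ A}, equipped with the set product, is a quasigroup: it is closed under set product, for all a, b ∈ A there exist x, x' ∈ A with h(a) ∙ h(x) = h(b) and h(x') ∙ h(a) = h(b), and cancellation holds: h(a) ∙ h(c) = h(b) ∙ h(c) implies h(a) = h(b), and h(c) ∙ h(a) = h(c) ∙ h(b) implies h(a) = h(b). -/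
lemma revcompat {A : Type*} [Fintype A] (op : A → A → A) (T : A → A → Prop)
    (hleft : ∀ a b c : A, op a b = op a c → b = c)
    (hright : ∀ a b c : A, op b a = op c a → b = c)
    (hcompat : ∀ a a' b b' : A, T a b → T a' b' → T (op a a') (op b b')) :
    (∀ x y a b, T x y → T a b → ∃ a' b', T a' b' ∧ op a a' = x ∧ op b b' = y) ∧
    (∀ x y a' b', T x y → T a' b' → ∃ a b, T a b ∧ op a a' = x ∧ op b b' = y) := by
  classical
  set E : Finset (A × A) := Finset.univ.filter (fun p => T p.1 p.2) with hEdef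
  have memE : ∀ p : A × A, p ∈ E ↔ T p.1 p.2 := fun p => by simp [hEdef]
  set Φ : (A × A) × (A × A) → A × A :=
    fun pq => (op pq.1.1 pq.2.1, op pq.1.2 pq.2.2) with hΦdef
  set fib : A × A → Finset ((A × A) × (A × A)) :=
    fun e => (E ×ˢ E).filter (fun pq => Φ pq = e) with hfibdef
  have hmaps : ∀ pq ∈ E ×ˢ E, Φ pq ∈ E := by
    intro pq hpq
    rw [Finset.mem_product] at hpq
    exact (memE _).2 (hcompat _ _ _ _ ((memE _).1 hpq.1) ((memE _).1 hpq.2))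
  have hfibmem : ∀ e pq, pq ∈ fib e ↔ (pq.1 ∈ E ∧ pq.2 ∈ E) ∧ Φ pq = e := by
    intro e pq
    rw [hfibdef]
    simp [Finset.mem_filter, Finset.mem_product]
  have hinj1 : ∀ e : A × A, Set.InjOn Prod.fst (↑(fib e) : Set ((A × A) × (A × A))) := by
    intro e
    rintro ⟨⟨a1, b1⟩, ⟨a1', b1'⟩⟩ h1 ⟨⟨a2, b2⟩, ⟨a2', b2'⟩⟩ h2 hfst
    replace h1 := (hfibmem _ _).1 (Finset.mem_coe.1 h1)
    replace h2 := (hfibmem _ _).1 (Finset.mem_coe.1 h2)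
    injection hfst with ha hb; subst ha; subst hb
    have e12 : Φ ((a1, b1), (a1', b1')) = Φ ((a1, b1), (a2', b2')) := h1.2.trans h2.2.symm
    simp only [hΦdef, Prod.mk.injEq] at e12
    have h3 : a1' = a2' := hleft _ _ _ e12.1
    have h4 : b1' = b2' := hleft _ _ _ e12.2
    simp [h3, h4]
  have hinj2 : ∀ e : A × A, Set.InjOn Prod.snd (↑(fib e) : Set ((A × A) × (A × A))) := by
    intro e
    rintro ⟨⟨a1, b1⟩, ⟨a1', b1'⟩⟩ h1 ⟨⟨a2, b2⟩, ⟨a2', b2'⟩⟩ h2 hsnd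
    replace h1 := (hfibmem _ _).1 (Finset.mem_coe.1 h1)
    replace h2 := (hfibmem _ _).1 (Finset.mem_coe.1 h2)
    injection hsnd with ha hb; subst ha; subst hb
    have e12 : Φ ((a1, b1), (a1', b1')) = Φ ((a2, b2), (a1', b1')) := h1.2.trans h2.2.symm
    simp only [hΦdef, Prod.mk.injEq] at e12
    have h3 : a1 = a2 := hright _ _ _ e12.1
    have h4 : b1 = b2 := hright _ _ _ e12.2
    simp [h3, h4]
  have hfst_mem : ∀ e, ∀ pq ∈ fib e, pq.1 ∈ E := fun e pq hpq => ((hfibmem e pq).1 hpq).1.1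
  have hsnd_mem : ∀ e, ∀ pq ∈ fib e, pq.2 ∈ E := fun e pq hpq => ((hfibmem e pq).1 hpq).1.2
  have hcard1 : ∀ e ∈ E, (fib e).card ≤ E.card := fun e _ =>
    Finset.card_le_card_of_injOn Prod.fst (hfst_mem e) (hinj1 e)
  have hsum : (E ×ˢ E).card = ∑ e ∈ E, (fib e).card :=
    Finset.card_eq_sum_card_fiberwise hmaps
  have hsum' : ∑ e ∈ E, (fib e).card = ∑ e ∈ E, E.card := by
    rw [← hsum, Finset.sum_const, smul_eq_mul, Finset.card_product]
  have hfibcard : ∀ e ∈ E, (fib e).card = E.card :=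
    fun e he => (Finset.sum_eq_sum_iff_of_le hcard1).1 hsum' e he
  have key1 : ∀ e ∈ E, ∀ p ∈ E, ∃ q, (p, q) ∈ fib e := by
    intro e he p hp
    have himg : (fib e).image Prod.fst = E := by
      apply Finset.eq_of_subset_of_card_le
      · intro x hx
        obtain ⟨pq, hpq, rfl⟩ := Finset.mem_image.1 hx
        exact hfst_mem e pq hpq
      · rw [Finset.card_image_of_injOn (hinj1 e), hfibcard e he]
    obtain ⟨pq, hpq, hfst⟩ := Finset.mem_image.1 (himg ▸ hp)
    exact ⟨pq.2, by rwa [← hfst, Prod.mk.eta]⟩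
  have key2 : ∀ e ∈ E, ∀ q ∈ E, ∃ p, (p, q) ∈ fib e := by
    intro e he q hq
    have himg : (fib e).image Prod.snd = E := by
      apply Finset.eq_of_subset_of_card_le
      · intro x hx
        obtain ⟨pq, hpq, rfl⟩ := Finset.mem_image.1 hx
        exact hsnd_mem e pq hpq
      · rw [Finset.card_image_of_injOn (hinj2 e),
          ← Finset.card_image_of_injOn (hinj1 e), Finset.card_image_of_injOn (hinj1 e),
          hfibcard e he]
    obtain ⟨pq, hpq, hsnd⟩ := Finset.mem_image.1 (himg ▸ hq)
    exact ⟨pq.1, by rwa [← hsnd, Prod.mk.eta]⟩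
  constructor
  · intro x y a b hxy hab
    obtain ⟨q, hq⟩ := key1 (x, y) ((memE _).2 hxy) (a, b) ((memE _).2 hab)
    obtain ⟨⟨_, hqE⟩, hΦq⟩ := (hfibmem _ _).1 hq
    simp only [hΦdef, Prod.mk.injEq] at hΦq
    exact ⟨q.1, q.2, (memE q).1 hqE, hΦq.1, hΦq.2⟩
  · intro x y a' b' hxy hab
    obtain ⟨p, hp⟩ := key2 (x, y) ((memE _).2 hxy) (a', b') ((memE _).2 hab)
    obtain ⟨⟨hpE, _⟩, hΦp⟩ := (hfibmem _ _).1 hp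
    simp only [hΦdef, Prod.mk.injEq] at hΦp
    exact ⟨p.1, p.2, (memE p).1 hpE, hΦp.1, hΦp.2⟩

theorem statement12 {A : Type*} [Fintype A] [Nonempty A]
    (op : A → A → A)
    (hleft : ∀ a b c : A, op a b = op a c → b = c)
    (hright : ∀ a b c : A, op b a = op c a → b = c)
    (T : A → A → Prop)
    (hsucc : ∀ a : A, ∃ b, T a b)
    (hpred : ∀ a : A, ∃ c, T c a)
    (hcompat : ∀ a a' b b' : A, T a b → T a' b' → T (op a a') (op b b')) :
    (∀ a b : A, ∃ c : A, Set.image2 op (cls T a) (cls T b) = cls T c) ∧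
    (∀ a b : A,
      (∃ x : A, Set.image2 op (cls T a) (cls T x) = cls T b) ∧
      (∃ x' : A, Set.image2 op (cls T x') (cls T a) = cls T b)) ∧
    (∀ a b c : A,
      (Set.image2 op (cls T a) (cls T c) = Set.image2 op (cls T b) (cls T c) →
        cls T a = cls T b) ∧
      (Set.image2 op (cls T c) (cls T a) = Set.image2 op (cls T c) (cls T b) →
        cls T a = cls T b)) := by
  classical
  obtain ⟨rev1, rev2⟩ := revcompat op T hleft hright hcompat
  have surjL : ∀ a : A, Function.Surjective (op a) := fun a =>
    Finite.injective_iff_surjective.mp (fun x y h => hleft a x y h)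
  have surjR : ∀ a : A, Function.Surjective (fun x => op x a) := fun a =>
    Finite.injective_iff_surjective.mp (fun x y h => hright a x y h)
  -- decomposition lemmas
  have F_left : ∀ a c u : A, T a u →
      followerSet T (op a c) = op u '' followerSet T c := by
    intro a c u hau
    ext y
    constructor
    · intro hy
      obtain ⟨a', b', ha'b', hx, hy'⟩ := rev1 (op a c) y a u hy hau
      have hc : a' = c := hleft a a' c hx
      exact ⟨b', hc ▸ ha'b', hy'⟩
    · rintro ⟨v, hv, rfl⟩
      exact hcompat a c u v hau hv
  have F_right : ∀ a c v : A, T c v →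
      followerSet T (op a c) = (fun u => op u v) '' followerSet T a := by
    intro a c v hcv
    ext y
    constructor
    · intro hy
      obtain ⟨a0, b0, ha0b0, hx, hy'⟩ := rev2 (op a c) y c v hy hcv
      have ha : a0 = a := hright c a0 a hx
      exact ⟨b0, ha ▸ ha0b0, hy'⟩
    · rintro ⟨u, hu, rfl⟩
      exact hcompat a c u v hu hcv
  have P_left : ∀ a c u : A, T u a →
      predecessorSet T (op a c) = op u '' predecessorSet T c := by
    intro a c u hua
    ext w
    constructor
    · intro hw
      obtain ⟨a', b', ha'b', hx, hy'⟩ := rev1 w (op a c) u a hw hua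
      have hc : b' = c := hleft a b' c hy'
      exact ⟨a', hc ▸ ha'b', hx⟩
    · rintro ⟨v, hv, rfl⟩
      exact hcompat u v a c hua hv
  have P_right : ∀ a c v : A, T v c →
      predecessorSet T (op a c) = (fun u => op u v) '' predecessorSet T a := by
    intro a c v hvc
    ext w
    constructor
    · intro hw
      obtain ⟨a0, b0, ha0b0, hx, hy'⟩ := rev2 w (op a c) v c hw hvc
      have ha : b0 = a := hright c b0 a hy'
      exact ⟨a0, ha ▸ ha0b0, hx⟩
    · rintro ⟨u, hu, rfl⟩
      exact hcompat u v a c hu hvc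
  -- product respects classes
  have mul_equiv : ∀ a a' c c' : A,
      followerSet T a' = followerSet T a → predecessorSet T a' = predecessorSet T a →
      followerSet T c' = followerSet T c → predecessorSet T c' = predecessorSet T c →
      followerSet T (op a' c') = followerSet T (op a c) ∧
      predecessorSet T (op a' c') = predecessorSet T (op a c) := by
    intro a a' c c' hFa hPa hFc hPc
    obtain ⟨u, hu⟩ := hsucc a
    have hu' : T a' u := by rw [show T a' u ↔ u ∈ followerSet T a' from Iff.rfl, hFa]; exact hu
    obtain ⟨v, hv⟩ := hpred c
    have hv' : T v c' := by rw [show T v c' ↔ v ∈ predecessorSet T c' from Iff.rfl, hPc]; exact hv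
    constructor
    · rw [F_left a c u hu, F_left a' c' u hu', hFc]
    · rw [P_right a c v hv, P_right a' c' v hv', hPa]
  -- the main identity
  have main : ∀ a c : A, Set.image2 op (cls T a) (cls T c) = cls T (op a c) := by
    intro a c
    ext w
    constructor
    · rintro ⟨u, hu, v, hv, rfl⟩
      exact mul_equiv a u c v hu.1 hu.2 hv.1 hv.2
    · intro hw
      obtain ⟨hFw, hPw⟩ := hw
      obtain ⟨v, rfl⟩ := surjL a w
      obtain ⟨u, hu⟩ := hsucc a
      obtain ⟨u0, hu0⟩ := hpred a
      have hF : op u '' followerSet T v = op u '' followerSet T c := by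
        rw [← F_left a v u hu, ← F_left a c u hu]; exact hFw
      have hP : op u0 '' predecessorSet T v = op u0 '' predecessorSet T c := by
        rw [← P_left a v u0 hu0, ← P_left a c u0 hu0]; exact hPw
      have hFv : followerSet T v = followerSet T c :=
        Set.image_injective.2 (fun x y h => hleft u x y h) hF
      have hPv : predecessorSet T v = predecessorSet T c :=
        Set.image_injective.2 (fun x y h => hleft u0 x y h) hP
      exact ⟨a, ⟨rfl, rfl⟩, v, ⟨hFv, hPv⟩, rfl⟩
  -- cancellation at the level of representatives
  have cancel_right : ∀ a b c : A,
      followerSet T (op a c) = followerSet T (op b c) →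
      predecessorSet T (op a c) = predecessorSet T (op b c) →
      followerSet T a = followerSet T b ∧ predecessorSet T a = predecessorSet T b := by
    intro a b c hF hP
    obtain ⟨v, hv⟩ := hsucc c
    obtain ⟨v0, hv0⟩ := hpred c
    have hF' : (fun u => op u v) '' followerSet T a = (fun u => op u v) '' followerSet T b := by
      rw [← F_right a c v hv, ← F_right b c v hv]; exact hF
    have hP' : (fun u => op u v0) '' predecessorSet T a
        = (fun u => op u v0) '' predecessorSet T b := by
      rw [← P_right a c v0 hv0, ← P_right b c v0 hv0]; exact hP
    exact ⟨Set.image_injective.2 (fun x y h => hright v x y h) hF',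
      Set.image_injective.2 (fun x y h => hright v0 x y h) hP'⟩
  have cancel_left : ∀ a b c : A,
      followerSet T (op c a) = followerSet T (op c b) →
      predecessorSet T (op c a) = predecessorSet T (op c b) →
      followerSet T a = followerSet T b ∧ predecessorSet T a = predecessorSet T b := by
    intro a b c hF hP
    obtain ⟨u, hu⟩ := hsucc c
    obtain ⟨u0, hu0⟩ := hpred c
    have hF' : op u '' followerSet T a = op u '' followerSet T b := by
      rw [← F_left c a u hu, ← F_left c b u hu]; exact hF
    have hP' : op u0 '' predecessorSet T a = op u0 '' predecessorSet T b := by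
      rw [← P_left c a u0 hu0, ← P_left c b u0 hu0]; exact hP
    exact ⟨Set.image_injective.2 (fun x y h => hleft u x y h) hF',
      Set.image_injective.2 (fun x y h => hleft u0 x y h) hP'⟩
  have cls_eq : ∀ a b : A, followerSet T a = followerSet T b →
      predecessorSet T a = predecessorSet T b → cls T a = cls T b := by
    intro a b hF hP
    unfold cls
    rw [hF, hP]
  refine ⟨fun a b => ⟨op a b, main a b⟩, fun a b => ?_, fun a b c => ?_⟩
  · constructor
    · obtain ⟨x, hx⟩ := surjL a b
      exact ⟨x, by rw [main a x, hx]⟩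
    · obtain ⟨x', hx'⟩ := surjR a b
      exact ⟨x', by rw [main x' a]; simp only at hx'; rw [hx']⟩
  · constructor
    · intro h
      rw [main a c, main b c] at h
      have hmem : op a c ∈ cls T (op b c) := h ▸ (⟨rfl, rfl⟩ : op a c ∈ cls T (op a c))
      obtain ⟨hF, hP⟩ := cancel_right a b c hmem.1 hmem.2
      exact cls_eq a b hF hP
    · intro h
      rw [main c a, main c b] at h
      have hmem : op c a ∈ cls T (op c b) := h ▸ (⟨rfl, rfl⟩ : op c a ∈ cls T (op c a))
      obtain ⟨hF, hP⟩ := cancel_left a b c hmem.1 hmem.2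
      exact cls_eq a b hF hP
end

section
/- In the setting of a 1-block quasi-group Markov shift, with a fixed element e ∈ A, left inverses a⁻ (the unique element with a⁻ ∙ a = e), and a section S : H → A with S(C) ∈ C for all C ∈ H: for every a ∈ A one has S(h(a))⁻ ∙ a ∈ h(e), and the map φ : A → Set A × A defined by φ(a) = (h(a), S(h(a))⁻ ∙ a) is injective with image exactly {(C, h) | C ∈ H, h ∈ h(e)}; i.e., φ is a bijection from A onto H × h(e). -/
section Aux

variable {A : Type*} [Fintype A] {op : A → A → A} {T : A → A → Prop}

/-- Left division inside the edge set: `T` is a sub-quasigroup of `A × A`. -/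
lemma qdiv (hleft : ∀ a b c : A, op a b = op a c → b = c)
    (hcompat : ∀ a a' b b' : A, T a b → T a' b' → T (op a a') (op b b'))
    {m n c d : A} (hmn : T m n) (hcd : T c d) :
    ∃ u v, T u v ∧ op m u = c ∧ op n v = d := by
  classical
  let f : {p : A × A // T p.1 p.2} → {p : A × A // T p.1 p.2} :=
    fun p => ⟨(op m p.1.1, op n p.1.2), hcompat _ _ _ _ hmn p.2⟩
  have hinj : Function.Injective f := by
    rintro ⟨⟨u, v⟩, h⟩ ⟨⟨u', v'⟩, h'⟩ heq
    simp only [f, Subtype.mk.injEq, Prod.mk.injEq] at heq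
    exact Subtype.ext (Prod.ext (hleft _ _ _ heq.1) (hleft _ _ _ heq.2))
  have hsurj : Function.Surjective f := Finite.surjective_of_injective hinj
  obtain ⟨⟨⟨u, v⟩, h⟩, hp⟩ := hsurj ⟨(c, d), hcd⟩
  have hp' : (op m u, op n v) = (c, d) := congrArg Subtype.val hp
  exact ⟨u, v, h, (Prod.mk.injEq _ _ _ _).mp hp' |>.1,
    (Prod.mk.injEq _ _ _ _).mp hp' |>.2⟩

lemma followerSet_op (hleft : ∀ a b c : A, op a b = op a c → b = c)
    (hcompat : ∀ a a' b b' : A, T a b → T a' b' → T (op a a') (op b b'))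
    {x u : A} (hxu : T x u) (a : A) :
    followerSet T (op x a) = (op u) '' followerSet T a := by
  ext z
  constructor
  · intro hz
    obtain ⟨u', v', h, h1, h2⟩ := qdiv hleft hcompat hxu hz
    have : u' = a := hleft _ _ _ h1
    exact ⟨v', by rwa [this] at h, h2⟩
  · rintro ⟨w, hw, rfl⟩
    exact hcompat _ _ _ _ hxu hw

lemma predecessorSet_op (hleft : ∀ a b c : A, op a b = op a c → b = c)
    (hcompat : ∀ a a' b b' : A, T a b → T a' b' → T (op a a') (op b b'))
    {q x : A} (hqx : T q x) (a : A) :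
    predecessorSet T (op x a) = (op q) '' predecessorSet T a := by
  ext z
  constructor
  · intro hz
    obtain ⟨u', v', h, h1, h2⟩ := qdiv hleft hcompat hqx hz
    have : v' = a := hleft _ _ _ h2
    exact ⟨u', by rwa [this] at h, h1.symm ▸ rfl⟩
  · rintro ⟨r, hr, rfl⟩
    exact hcompat _ _ _ _ hqx hr

/-- Left multiplication preserves and reflects the classes. -/
lemma cls_op_iff (hleft : ∀ a b c : A, op a b = op a c → b = c)
    (hsucc : ∀ a : A, ∃ b, T a b) (hpred : ∀ a : A, ∃ c, T c a)
    (hcompat : ∀ a a' b b' : A, T a b → T a' b' → T (op a a') (op b b'))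
    (x a b : A) :
    a ∈ cls T b ↔ op x a ∈ cls T (op x b) := by
  obtain ⟨u, hxu⟩ := hsucc x
  obtain ⟨q, hqx⟩ := hpred x
  have hu : Function.Injective (op u) := fun _ _ h => hleft _ _ _ h
  have hq : Function.Injective (op q) := fun _ _ h => hleft _ _ _ h
  simp only [cls, Set.mem_setOf_eq,
    followerSet_op hleft hcompat hxu, predecessorSet_op hleft hcompat hqx]
  constructor
  · rintro ⟨h1, h2⟩; exact ⟨by rw [h1], by rw [h2]⟩
  · rintro ⟨h1, h2⟩
    exact ⟨Set.image_injective.mpr hu h1, Set.image_injective.mpr hq h2⟩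

lemma cls_eq_of_mem {a b : A} (h : a ∈ cls T b) : cls T a = cls T b := by
  obtain ⟨h1, h2⟩ := h
  ext c
  simp only [cls, Set.mem_setOf_eq, h1, h2]

end Aux

theorem statement13 {A : Type*} [Fintype A] [Nonempty A]
    (op : A → A → A)
    (hleft : ∀ a b c : A, op a b = op a c → b = c)
    (hright : ∀ a b c : A, op b a = op c a → b = c)
    (T : A → A → Prop)
    (hsucc : ∀ a : A, ∃ b, T a b)
    (hpred : ∀ a : A, ∃ c, T c a)
    (hcompat : ∀ a a' b b' : A, T a b → T a' b' → T (op a a') (op b b'))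
    (e : A) (inv : A → A) (hinv : ∀ a : A, op (inv a) a = e)
    (S : Set A → A)
    (hS : ∀ C ∈ {C : Set A | ∃ a : A, C = cls T a}, S C ∈ C) :
    (∀ a : A, op (inv (S (cls T a))) a ∈ cls T e) ∧
    Function.Injective
      (fun a : A => ((cls T a, op (inv (S (cls T a))) a) : Set A × A)) ∧
    Set.range (fun a : A => ((cls T a, op (inv (S (cls T a))) a) : Set A × A)) =
      {p : Set A × A | (∃ c : A, p.1 = cls T c) ∧ p.2 ∈ cls T e} := by
  -- the section element of the class of `a`
  have hSmem : ∀ a : A, S (cls T a) ∈ cls T a := fun a => hS _ ⟨a, rfl⟩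
  have hmem_symm : ∀ a b : A, a ∈ cls T b → b ∈ cls T a := by
    intro a b h
    rw [cls_eq_of_mem h]
    exact ⟨rfl, rfl⟩
  have hmain : ∀ a : A, op (inv (S (cls T a))) a ∈ cls T e := by
    intro a
    set s := S (cls T a) with hs
    have hsa : a ∈ cls T s := hmem_symm _ _ (hSmem a)
    have := (cls_op_iff hleft hsucc hpred hcompat (inv s) a s).mp hsa
    rwa [hinv s] at this
  refine ⟨hmain, ?_, ?_⟩
  · intro a b hab
    simp only [Prod.mk.injEq] at hab
    obtain ⟨h1, h2⟩ := hab
    rw [h1] at h2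
    exact hleft _ _ _ h2
  · ext ⟨C, h⟩
    simp only [Set.mem_range, Set.mem_setOf_eq, Prod.mk.injEq]
    constructor
    · rintro ⟨a, ha1, ha2⟩
      exact ⟨⟨a, ha1.symm⟩, ha2 ▸ hmain a⟩
    · rintro ⟨⟨c, rfl⟩, hh⟩
      set s := S (cls T c) with hs
      have hinj : Function.Injective (op (inv s)) := fun _ _ h => hleft _ _ _ h
      obtain ⟨a, ha⟩ := Finite.surjective_of_injective hinj h
      have hcls : a ∈ cls T s := by
        apply (cls_op_iff hleft hsucc hpred hcompat (inv s) a s).mpr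
        rw [hinv s, ha]
        exact hh
      have hca : cls T a = cls T c := by
        rw [cls_eq_of_mem hcls, cls_eq_of_mem (hSmem c)]
      exact ⟨a, hca, by rw [hca, ← hs, ha]⟩
end

section
/- In the setting of a 1-block quasi-group Markov shift, define Σ^F = {Y : ℤ → Set A | ∀ i, Y i ∈ L^F and ∃ g ∈ Y i, F(g) = Y (i+1)}, where L^F = {F(a) : a ∈ A}, and define θ : Σ → (ℤ → Set A) by θ(x) i = F(x i). Then: (i) θ maps Σ onto Σ^F, commutes with the shift maps (θ(σ x) = σ(θ x)), and is a homomorphism: θ(x * y) i = θ(x) i ∙ θ(y) i (set product) for all x, y ∈ Σ and i ∈ ℤ; (ii) if for some e ∈ A the class h(e) = {b ∈ A | F(b) = F(e) and P(b) = P(e)} equals the singleton {e}, then θ is injective, hence a shift-commuting bijection from Σ onto Σ^F. -/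
section Aux

variable {A : Type*} [Finite A] (op : A → A → A)

/-- Left division inside the relation `T`: `T` is closed under componentwise left division. -/
lemma tdiv_left
    (hleft : ∀ a b c : A, op a b = op a c → b = c)
    (T : A → A → Prop)
    (hcompat : ∀ a a' b b' : A, T a b → T a' b' → T (op a a') (op b b'))
    {a b c d : A} (hab : T a b) (hcd : T c d) :
    ∃ u v, T u v ∧ op a u = c ∧ op b v = d := by
  let S := {p : A × A // T p.1 p.2}
  let Φ : S → S := fun p => ⟨(op a p.1.1, op b p.1.2), hcompat _ _ _ _ hab p.2⟩
  have hinj : Function.Injective Φ := by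
    intro p q h
    have h' : (op a p.1.1, op b p.1.2) = (op a q.1.1, op b q.1.2) := congrArg Subtype.val h
    rw [Prod.mk.injEq] at h'
    apply Subtype.ext
    exact Prod.ext (hleft a _ _ h'.1) (hleft b _ _ h'.2)
  have hsurj : Function.Surjective Φ := Finite.surjective_of_injective hinj
  obtain ⟨⟨⟨u, v⟩, huv⟩, hΦ⟩ := hsurj ⟨(c, d), hcd⟩
  have h' : (op a u, op b v) = (c, d) := congrArg Subtype.val hΦ
  exact ⟨u, v, huv, (Prod.mk.injEq _ _ _ _).mp h' |>.1, (Prod.mk.injEq _ _ _ _).mp h' |>.2⟩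

/-- Right division inside the relation `T`. -/
lemma tdiv_right
    (hright : ∀ a b c : A, op b a = op c a → b = c)
    (T : A → A → Prop)
    (hcompat : ∀ a a' b b' : A, T a b → T a' b' → T (op a a') (op b b'))
    {a b c d : A} (hab : T a b) (hcd : T c d) :
    ∃ u v, T u v ∧ op u a = c ∧ op v b = d := by
  let S := {p : A × A // T p.1 p.2}
  let Φ : S → S := fun p => ⟨(op p.1.1 a, op p.1.2 b), hcompat _ _ _ _ p.2 hab⟩
  have hinj : Function.Injective Φ := by
    intro p q h
    have h' : (op p.1.1 a, op p.1.2 b) = (op q.1.1 a, op q.1.2 b) := congrArg Subtype.val h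
    rw [Prod.mk.injEq] at h'
    apply Subtype.ext
    exact Prod.ext (hright a _ _ h'.1) (hright b _ _ h'.2)
  have hsurj : Function.Surjective Φ := Finite.surjective_of_injective hinj
  obtain ⟨⟨⟨u, v⟩, huv⟩, hΦ⟩ := hsurj ⟨(c, d), hcd⟩
  have h' : (op u a, op v b) = (c, d) := congrArg Subtype.val hΦ
  exact ⟨u, v, huv, (Prod.mk.injEq _ _ _ _).mp h' |>.1, (Prod.mk.injEq _ _ _ _).mp h' |>.2⟩

/-- Key lemma: two letters with a common predecessor have the same predecessor set. -/
lemma strong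
    (hleft : ∀ a b c : A, op a b = op a c → b = c)
    (hright : ∀ a b c : A, op b a = op c a → b = c)
    (T : A → A → Prop)
    (hcompat : ∀ a a' b b' : A, T a b → T a' b' → T (op a a') (op b b'))
    {b g g' c : A} (h1 : T b g) (h2 : T b g') (h3 : T c g) : T c g' := by
  obtain ⟨u₁, u₂, hu, hbu, hgu⟩ := tdiv_left op hleft T hcompat h1 h1
  obtain ⟨u₁', w, hw, hbu', hgw⟩ := tdiv_left op hleft T hcompat h1 h2
  have e1 : u₁' = u₁ := hleft b _ _ (hbu'.trans hbu.symm)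
  subst e1
  obtain ⟨s₁, s₂, hs, hsu, hsu2⟩ := tdiv_right op hright T hcompat hu h3
  have e2 : s₂ = g := hright u₂ s₂ g (hsu2.trans hgu.symm)
  have hc := hcompat s₁ u₁' s₂ w hs hw
  rw [hsu, e2, hgw] at hc
  exact hc

/-- Dual key lemma: two letters with a common successor have the same follower set. -/
lemma strong'
    (hleft : ∀ a b c : A, op a b = op a c → b = c)
    (hright : ∀ a b c : A, op b a = op c a → b = c)
    (T : A → A → Prop)
    (hcompat : ∀ a a' b b' : A, T a b → T a' b' → T (op a a') (op b b'))
    {b g g' c : A} (h1 : T g b) (h2 : T g' b) (h3 : T g c) : T g' c :=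
  strong op hleft hright (fun x y => T y x)
    (fun a a' b' b'' hab ha'b' => hcompat b' b'' a a' hab ha'b') h1 h2 h3

/-- Product formula for follower sets. -/
lemma fprod
    (hleft : ∀ a b c : A, op a b = op a c → b = c)
    (T : A → A → Prop)
    (hsucc : ∀ a : A, ∃ b, T a b)
    (hcompat : ∀ a a' b b' : A, T a b → T a' b' → T (op a a') (op b b'))
    (a a' : A) :
    followerSet T (op a a') = Set.image2 op (followerSet T a) (followerSet T a') := by
  ext h
  constructor
  · intro hh
    obtain ⟨b, hb⟩ := hsucc a
    obtain ⟨u, v, huv, hau, hbv⟩ := tdiv_left op hleft T hcompat hb hh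
    have e : u = a' := hleft a _ _ hau
    subst e
    exact ⟨b, hb, v, huv, hbv⟩
  · rintro ⟨s, hs, t, ht, rfl⟩
    exact hcompat a a' s t hs ht

/-- Transport of the singleton-class condition to every letter. -/
lemma cls_all
    (hleft : ∀ a b c : A, op a b = op a c → b = c)
    (hright : ∀ a b c : A, op b a = op c a → b = c)
    (T : A → A → Prop)
    (hsucc : ∀ a : A, ∃ b, T a b)
    (hpred : ∀ a : A, ∃ c, T c a)
    (hcompat : ∀ a a' b b' : A, T a b → T a' b' → T (op a a') (op b b'))
    (e : A) (he : cls T e = {e}) (a : A) : cls T a = {a} := by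
  apply subset_antisymm
  · intro c hc
    obtain ⟨hcF, hcP⟩ := hc
    obtain ⟨d, hd⟩ : ∃ d, op d a = e :=
      Finite.surjective_of_injective (f := fun x => op x a)
        (fun x y h => hright a x y h) e
    obtain ⟨s, hds⟩ := hsucc d
    obtain ⟨t, hct⟩ := hsucc c
    have hat : T a t := by
      have : t ∈ followerSet T c := hct
      rw [hcF] at this; exact this
    obtain ⟨z, hzd⟩ := hpred d
    obtain ⟨r, hrc⟩ := hpred c
    have hra : T r a := by
      have : r ∈ predecessorSet T c := hrc
      rw [hcP] at this; exact this
    have h1 : T (op d c) (op s t) := hcompat d c s t hds hct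
    have h2 : T (op d a) (op s t) := hcompat d a s t hds hat
    have h3 : T (op z r) (op d c) := hcompat z r d c hzd hrc
    have h4 : T (op z r) (op d a) := hcompat z r d a hzd hra
    have hF : followerSet T (op d c) = followerSet T (op d a) := by
      ext w
      exact ⟨fun hw => strong' op hleft hright T hcompat h1 h2 hw,
        fun hw => strong' op hleft hright T hcompat h2 h1 hw⟩
    have hP : predecessorSet T (op d c) = predecessorSet T (op d a) := by
      ext w
      exact ⟨fun hw => strong op hleft hright T hcompat h3 h4 hw,
        fun hw => strong op hleft hright T hcompat h4 h3 hw⟩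
    have hmem : op d c ∈ cls T e := by
      rw [← hd]
      exact ⟨hF, hP⟩
    rw [he] at hmem
    have : op d c = op d a := by rw [hd]; exact hmem
    have := hleft d c a this
    simp [this]
  · intro c hc
    rw [Set.mem_singleton_iff] at hc
    subst hc
    exact ⟨rfl, rfl⟩

end Aux

theorem statement15 {A : Type*} [Fintype A] [Nonempty A]
    (op : A → A → A)
    (hleft : ∀ a b c : A, op a b = op a c → b = c)
    (hright : ∀ a b c : A, op b a = op c a → b = c)
    (T : A → A → Prop)
    (hsucc : ∀ a : A, ∃ b, T a b)
    (hpred : ∀ a : A, ∃ c, T c a)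
    (hcompat : ∀ a a' b b' : A, T a b → T a' b' → T (op a a') (op b b')) :
    ((fun x : ℤ → A => (fun i => followerSet T (x i) : ℤ → Set A)) ''
        {x : ℤ → A | ∀ i : ℤ, T (x i) (x (i + 1))} =
      {Y : ℤ → Set A | ∀ i : ℤ, (∃ a : A, Y i = followerSet T a) ∧
        ∃ g ∈ Y i, followerSet T g = Y (i + 1)}) ∧
    (∀ x ∈ {x : ℤ → A | ∀ i : ℤ, T (x i) (x (i + 1))},
      (fun i : ℤ => followerSet T ((fun j => x (j + 1)) i)) =
        fun i : ℤ => followerSet T (x (i + 1))) ∧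
    (∀ x ∈ {x : ℤ → A | ∀ i : ℤ, T (x i) (x (i + 1))},
      ∀ y ∈ {x : ℤ → A | ∀ i : ℤ, T (x i) (x (i + 1))},
      ∀ i : ℤ, followerSet T (op (x i) (y i)) =
        Set.image2 op (followerSet T (x i)) (followerSet T (y i))) ∧
    (∀ e : A, cls T e = {e} →
      Set.InjOn (fun x : ℤ → A => (fun i => followerSet T (x i) : ℤ → Set A))
        {x : ℤ → A | ∀ i : ℤ, T (x i) (x (i + 1))}) := by
  refine ⟨?_, ?_, ?_, ?_⟩
  · -- surjectivity onto Σ^F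
    ext Y
    constructor
    · rintro ⟨x, hx, rfl⟩ i
      exact ⟨⟨x i, rfl⟩, x (i + 1), hx i, rfl⟩
    · intro hY
      choose g hg1 hg2 using fun i => (hY i).2
      refine ⟨fun i => g (i - 1), fun i => ?_, ?_⟩
      · show T (g (i - 1)) (g (i + 1 - 1))
        rw [show (i : ℤ) + 1 - 1 = i by ring]
        have h2 := hg2 (i - 1)
        rw [show (i : ℤ) - 1 + 1 = i by ring] at h2
        have h1 := hg1 i
        rw [← h2] at h1
        exact h1
      · funext i
        show followerSet T (g (i - 1)) = Y i
        have h2 := hg2 (i - 1)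
        rwa [show (i : ℤ) - 1 + 1 = i by ring] at h2
  · -- shift commuting
    intro x _
    rfl
  · -- homomorphism
    intro x _ y _ i
    exact fprod op hleft T hsucc hcompat (x i) (y i)
  · -- injectivity
    intro e he x hx y hy hxy
    have hF : ∀ i, followerSet T (x i) = followerSet T (y i) := fun i => congrFun hxy i
    funext i
    have hb : T (x (i - 1)) (x i) := by
      have := hx (i - 1)
      rwa [show (i : ℤ) - 1 + 1 = i by ring] at this
    have hb' : T (x (i - 1)) (y i) := by
      have h := hy (i - 1)
      rw [show (i : ℤ) - 1 + 1 = i by ring] at h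
      have hm : y i ∈ followerSet T (y (i - 1)) := h
      rw [← hF (i - 1)] at hm
      exact hm
    have hPx : predecessorSet T (x i) = predecessorSet T (y i) := by
      ext c
      exact ⟨fun hc => strong op hleft hright T hcompat hb hb' hc,
        fun hc => strong op hleft hright T hcompat hb' hb hc⟩
    have hmem : x i ∈ cls T (y i) := ⟨hF i, hPx⟩
    rw [cls_all op hleft hright T hsucc hpred hcompat e he (y i)] at hmem
    exact hmem
end

section
/- Let (Σ,*) be a 1-block quasi-group Markov shift over a nonempty finite alphabet A. Then there exist n ≥ 1, a finite type B, a nonempty finite shift-invariant subset 𝔽 ⊆ (ℤ → B), a map π : A → B × Fin n, k ≥ 1, and a local rule ρ : (Fin k → B × Fin n) → (Fin k → B × Fin n) → B × Fin n such that the 1-block code ψ : Σ → (ℤ → B) × (ℤ → Fin n), ψ(x) = (fun i => (π (x i)).1, fun i => (π (x i)).2), is injective with image exactly {(f, y) | f ∈ 𝔽, y : ℤ → Fin n}; ψ commutes with the shifts, ψ(σ x) = (σ (ψ x).1, σ (ψ x).2); and the transported operation is a k-block operation with memory k−1 and anticipation 0: for all x, y ∈ Σ and j ∈ ℤ, π((x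 * y) j) = ρ (fun m => π (x (j - (k - 1) + m))) (fun m => π (y (j - (k - 1) + m))). In particular (Σ,*,σ) is isomorphic by a 1-block code to the product of a finite quasigroup shift 𝔽 with a full shift on n symbols, carrying a k-block quasigroup operation with memory k−1 and anticipation 0. -/
/-- The 1-block code induced by a recoding `π : A → B × Fin n` of the alphabet. -/
def psiCode {A B : Type*} {n : ℕ} (π : A → B × Fin n) (x : ℤ → A) :
    (ℤ → B) × (ℤ → Fin n) :=
  ((fun i => (π (x i)).1), (fun i => (π (x i)).2))

open scoped Classical
set_option linter.unusedSectionVars false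

section QG

universe u

/-- The Markov shift associated to a transition relation. -/
def SigmaSet {A : Type u} (T : A → A → Prop) : Set (ℤ → A) :=
  {x : ℤ → A | ∀ i : ℤ, T (x i) (x (i + 1))}

/-- The inductive statement: there is a 1-block recoding with all desired properties,
together with a window-decoding property. -/
def AuxProp {A : Type u} (T : A → A → Prop) : Prop :=
  ∃ (n : ℕ), 1 ≤ n ∧
    ∃ (B : Type) (_ : Fintype B) (𝔽 : Set (ℤ → B)) (π : A → B × Fin n) (k : ℕ),
      1 ≤ k ∧ 𝔽.Nonempty ∧ 𝔽.Finite ∧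
      (fun f : ℤ → B => (fun i => f (i + 1) : ℤ → B)) '' 𝔽 = 𝔽 ∧
      Set.InjOn (psiCode π) (SigmaSet T) ∧
      psiCode π '' (SigmaSet T) = {p : (ℤ → B) × (ℤ → Fin n) | p.1 ∈ 𝔽} ∧
      ∀ x ∈ SigmaSet T, ∀ y ∈ SigmaSet T, ∀ j : ℤ,
        (∀ m : ℕ, m < k → π (x (j - (m : ℤ))) = π (y (j - (m : ℤ)))) → x j = y j

variable {A : Type u}

section Lemmas

variable [Fintype A] {op : A → A → A} {T : A → A → Prop}

/-- Left division in a finite cancellative magma. -/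
lemma ldiv (hleft : ∀ a b c : A, op a b = op a c → b = c) (a c : A) : ∃ x, op a x = c :=
  (Finite.injective_iff_surjective.mp (fun _ _ h => hleft a _ _ h)) c

/-- Right division in a finite cancellative magma. -/
lemma rdiv (hright : ∀ a b c : A, op b a = op c a → b = c) (a c : A) : ∃ x, op x a = c :=
  (Finite.injective_iff_surjective.mp (fun _ _ h => hright a _ _ h)) c

/-- Left division inside the transition relation. -/
lemma ldivT (hleft : ∀ a b c : A, op a b = op a c → b = c)
    (hcompat : ∀ a a' b b' : A, T a b → T a' b' → T (op a a') (op b b'))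
    {a b c d : A} (hab : T a b) (hcd : T c d) :
    ∃ p q, T p q ∧ op a p = c ∧ op b q = d := by
  let TT := {u : A × A // T u.1 u.2}
  have : Finite TT := Subtype.finite
  let f : TT → TT := fun u => ⟨(op a u.1.1, op b u.1.2), hcompat _ _ _ _ hab u.2⟩
  have hinj : Function.Injective f := by
    intro u v huv
    have h1 : op a u.1.1 = op a v.1.1 := congrArg (fun w : TT => w.1.1) huv
    have h2 : op b u.1.2 = op b v.1.2 := congrArg (fun w : TT => w.1.2) huv
    exact Subtype.ext (Prod.ext (hleft _ _ _ h1) (hleft _ _ _ h2))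
  obtain ⟨⟨⟨p, q⟩, hpq⟩, hf⟩ := Finite.injective_iff_surjective.mp hinj ⟨(c, d), hcd⟩
  exact ⟨p, q, hpq, congrArg (fun w : TT => w.1.1) hf, congrArg (fun w : TT => w.1.2) hf⟩

/-- Right division inside the transition relation. -/
lemma rdivT (hright : ∀ a b c : A, op b a = op c a → b = c)
    (hcompat : ∀ a a' b b' : A, T a b → T a' b' → T (op a a') (op b b'))
    {a b c d : A} (hab : T a b) (hcd : T c d) :
    ∃ p q, T p q ∧ op p a = c ∧ op q b = d := by
  let TT := {u : A × A // T u.1 u.2}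
  have : Finite TT := Subtype.finite
  let f : TT → TT := fun u => ⟨(op u.1.1 a, op u.1.2 b), hcompat _ _ _ _ u.2 hab⟩
  have hinj : Function.Injective f := by
    intro u v huv
    have h1 : op u.1.1 a = op v.1.1 a := congrArg (fun w : TT => w.1.1) huv
    have h2 : op u.1.2 b = op v.1.2 b := congrArg (fun w : TT => w.1.2) huv
    exact Subtype.ext (Prod.ext (hright _ _ _ h1) (hright _ _ _ h2))
  obtain ⟨⟨⟨p, q⟩, hpq⟩, hf⟩ := Finite.injective_iff_surjective.mp hinj ⟨(c, d), hcd⟩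
  exact ⟨p, q, hpq, congrArg (fun w : TT => w.1.1) hf, congrArg (fun w : TT => w.1.2) hf⟩

/-- Difunctionality (the rectangle property) of the transition relation. -/
lemma rect (hleft : ∀ a b c : A, op a b = op a c → b = c)
    (hright : ∀ a b c : A, op b a = op c a → b = c)
    (hcompat : ∀ a a' b b' : A, T a b → T a' b' → T (op a a') (op b b'))
    {a b a' b' : A} (h1 : T a b) (h2 : T a' b) (h3 : T a' b') : T a b' := by
  obtain ⟨α, β, hT1, e1, e2⟩ := ldivT hleft hcompat h2 h2
  obtain ⟨α', β', hT2, e3, e4⟩ := ldivT hleft hcompat h2 h3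
  have hαα : α' = α := hleft a' α' α (e3.trans e1.symm)
  obtain ⟨γ, δ, hT3, e5, e6⟩ := rdivT hright hcompat hT1 h1
  have hδ : δ = b := hright β δ b (e6.trans e2.symm)
  have := hcompat γ α' δ β' hT3 hT2
  rw [hαα, hδ, e5, e4] at this
  exact this
-- continuing (will concatenate)
variable [Fintype A] {op : A → A → A} {T : A → A → Prop}

/-- Two letters with a common successor have the same successor set. -/
lemma sameS (hleft : ∀ a b c : A, op a b = op a c → b = c)
    (hright : ∀ a b c : A, op b a = op c a → b = c)
    (hcompat : ∀ a a' b b' : A, T a b → T a' b' → T (op a a') (op b b'))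
    {a a' b : A} (h1 : T a b) (h2 : T a' b) : ∀ c, T a c ↔ T a' c :=
  fun _ => ⟨fun h => rect hleft hright hcompat h2 h1 h,
            fun h => rect hleft hright hcompat h1 h2 h⟩

/-- Two letters with a common predecessor have the same predecessor set. -/
lemma sameP (hleft : ∀ a b c : A, op a b = op a c → b = c)
    (hright : ∀ a b c : A, op b a = op c a → b = c)
    (hcompat : ∀ a a' b b' : A, T a b → T a' b' → T (op a a') (op b b'))
    {a b b' : A} (h1 : T a b) (h2 : T a b') : ∀ c, T c b ↔ T c b' :=
  fun _ => ⟨fun h => rect hleft hright hcompat h h1 h2,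
            fun h => rect hleft hright hcompat h h2 h1⟩

/-- "same successor set" is a congruence. -/
lemma congS (hleft : ∀ a b c : A, op a b = op a c → b = c)
    (hright : ∀ a b c : A, op b a = op c a → b = c)
    (hsucc : ∀ a : A, ∃ b, T a b)
    (hcompat : ∀ a a' b b' : A, T a b → T a' b' → T (op a a') (op b b'))
    {a a' b b' : A} (ha : ∀ c, T a c ↔ T a' c) (hb : ∀ c, T b c ↔ T b' c) :
    ∀ c, T (op a b) c ↔ T (op a' b') c := by
  obtain ⟨ca, hca⟩ := hsucc a
  obtain ⟨cb, hcb⟩ := hsucc b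
  exact sameS hleft hright hcompat (hcompat _ _ _ _ hca hcb)
    (hcompat _ _ _ _ ((ha ca).mp hca) ((hb cb).mp hcb))

/-- "same predecessor set" is a congruence. -/
lemma congP (hleft : ∀ a b c : A, op a b = op a c → b = c)
    (hright : ∀ a b c : A, op b a = op c a → b = c)
    (hpred : ∀ a : A, ∃ c, T c a)
    (hcompat : ∀ a a' b b' : A, T a b → T a' b' → T (op a a') (op b b'))
    {a a' b b' : A} (ha : ∀ c, T c a ↔ T c a') (hb : ∀ c, T c b ↔ T c b') :
    ∀ c, T c (op a b) ↔ T c (op a' b') := by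
  obtain ⟨ca, hca⟩ := hpred a
  obtain ⟨cb, hcb⟩ := hpred b
  exact sameP hleft hright hcompat (hcompat _ _ _ _ hca hcb)
    (hcompat _ _ _ _ ((ha ca).mp hca) ((hb cb).mp hcb))

/-- The meet class of a letter: letters with the same successor and predecessor sets. -/
noncomputable def meetF (T : A → A → Prop) [Fintype A] (a : A) : Finset A :=
  Finset.univ.filter (fun b => (∀ c, T a c ↔ T b c) ∧ (∀ c, T c a ↔ T c b))

lemma self_mem_meetF (a : A) : a ∈ meetF T a := by
  simp [meetF]

lemma mem_meetF_iff {a b : A} :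
    b ∈ meetF T a ↔ (∀ c, T a c ↔ T b c) ∧ (∀ c, T c a ↔ T c b) := by
  simp [meetF]

lemma meetF_eq_of_mem {a b : A} (h : b ∈ meetF T a) : meetF T b = meetF T a := by
  rw [mem_meetF_iff] at h
  ext c
  rw [mem_meetF_iff, mem_meetF_iff]
  constructor
  · rintro ⟨h1, h2⟩
    exact ⟨fun z => (h.1 z).trans (h1 z), fun z => (h.2 z).trans (h2 z)⟩
  · rintro ⟨h1, h2⟩
    exact ⟨fun z => ((h.1 z).symm).trans (h1 z), fun z => ((h.2 z).symm).trans (h2 z)⟩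

/-- All meet classes have the same cardinality. -/
lemma meetF_card_le (hleft : ∀ a b c : A, op a b = op a c → b = c)
    (hright : ∀ a b c : A, op b a = op c a → b = c)
    (hsucc : ∀ a : A, ∃ b, T a b) (hpred : ∀ a : A, ∃ c, T c a)
    (hcompat : ∀ a a' b b' : A, T a b → T a' b' → T (op a a') (op b b'))
    (a a' : A) : (meetF T a).card ≤ (meetF T a').card := by
  obtain ⟨x, hx⟩ := ldiv hleft a a'
  refine Finset.card_le_card_of_injOn (fun y => op y x) ?_ ?_
  · intro y hy
    rw [Finset.mem_coe, mem_meetF_iff] at hy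
    rw [Finset.mem_coe, mem_meetF_iff]
    constructor
    · intro c
      rw [← hx]
      exact congS hleft hright hsucc hcompat hy.1 (fun _ => Iff.rfl) c
    · intro c
      rw [← hx]
      exact congP hleft hright hpred hcompat hy.2 (fun _ => Iff.rfl) c
  · intro y _ z _ h
    exact hright x y z h

lemma meetF_card_eq (hleft : ∀ a b c : A, op a b = op a c → b = c)
    (hright : ∀ a b c : A, op b a = op c a → b = c)
    (hsucc : ∀ a : A, ∃ b, T a b) (hpred : ∀ a : A, ∃ c, T c a)
    (hcompat : ∀ a a' b b' : A, T a b → T a' b' → T (op a a') (op b b'))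
    (a a' : A) : (meetF T a).card = (meetF T a').card :=
  le_antisymm (meetF_card_le hleft hright hsucc hpred hcompat a a')
    (meetF_card_le hleft hright hsucc hpred hcompat a' a)

/-- Auxiliary congruence for labels built from `Fintype.equivFinOfCardEq`. -/
lemma finlabel_congr {s t : Finset A} (h : s = t) {d : ℕ}
    (hs : Fintype.card s = d) (ht : Fintype.card t = d) (x : A) (hx : x ∈ s) (hx' : x ∈ t) :
    (Fintype.equivFinOfCardEq hs ⟨x, hx⟩ : Fin d) = Fintype.equivFinOfCardEq ht ⟨x, hx'⟩ := by
  subst h; rfl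

/-- Base case: a deterministic transition relation. -/
lemma base_case [Fintype A] [Nonempty A] {T : A → A → Prop}
    (hsucc : ∀ a : A, ∃ b, T a b) (hpred : ∀ a : A, ∃ c, T c a)
    (hdet : ∀ a b b' : A, T a b → T a b' → b = b') : AuxProp T := by
  classical
  -- the transition function
  set F : A → A := fun a => (hsucc a).choose with hF_def
  have hF : ∀ a, T a (F a) := fun a => (hsucc a).choose_spec
  have hTF : ∀ a b, T a b ↔ b = F a := by
    intro a b
    exact ⟨fun h => hdet a b (F a) h (hF a), fun h => h ▸ hF a⟩
  have hFsurj : Function.Surjective F := by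
    intro b
    obtain ⟨c, hc⟩ := hpred b
    exact ⟨c, ((hTF c b).mp hc).symm⟩
  have hFbij : Function.Bijective F := ⟨Finite.injective_iff_surjective.mpr hFsurj, hFsurj⟩
  set E : Equiv.Perm A := Equiv.ofBijective F hFbij with hE_def
  have hEF : ∀ a, E a = F a := fun a => rfl
  -- orbit description of Σ
  have horbit : ∀ x ∈ SigmaSet T, ∀ i : ℤ, x i = (E ^ i) (x 0) := by
    intro x hx i
    induction i using Int.induction_on with
    | zero => simp
    | succ i ih =>
        have h1 : x ((i : ℤ) + 1) = F (x i) := (hTF _ _).mp (hx i)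
        rw [h1, ih, ← hEF, ← Equiv.Perm.mul_apply, ← zpow_one_add, add_comm]
    | pred i ih =>
        have h1 : x (-(i : ℤ) - 1 + 1) = F (x (-(i : ℤ) - 1)) := (hTF _ _).mp (hx _)
        have h2 : (-(i : ℤ) - 1) + 1 = -(i : ℤ) := by ring
        rw [h2] at h1
        have h3 : E (x (-(i : ℤ) - 1)) = (E ^ (-(i : ℤ))) (x 0) := by
          rw [hEF, ← h1, ih]
        have h4 : E ((E ^ (-(i : ℤ) - 1)) (x 0)) = (E ^ (-(i : ℤ))) (x 0) := by
          rw [← Equiv.Perm.mul_apply, ← zpow_one_add]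
          congr 1
          ring
        exact E.injective (h3.trans h4.symm)
  have hmemSig : ∀ a : A, (fun i : ℤ => (E ^ i) a) ∈ SigmaSet T := by
    intro a i
    show T ((E ^ i) a) ((E ^ (i + 1)) a)
    rw [hTF, ← hEF, ← Equiv.Perm.mul_apply, ← zpow_one_add, add_comm]
  set e : A ≃ Fin (Fintype.card A) := Fintype.equivFin A with he_def
  refine ⟨1, le_refl 1, Fin (Fintype.card A), inferInstance,
    Set.range (fun a : A => fun i : ℤ => e ((E ^ i) a)),
    fun a => (e a, 0), 1, le_refl 1, ⟨_, Set.mem_range_self (Classical.arbitrary A)⟩,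
    Set.finite_range _, ?_, ?_, ?_, ?_⟩
  · -- shift invariance
    ext f
    constructor
    · rintro ⟨g, ⟨a, rfl⟩, rfl⟩
      refine ⟨E a, ?_⟩
      funext i
      show e ((E ^ (i : ℤ)) (E a)) = e ((E ^ ((i : ℤ) + 1)) a)
      congr 1
      rw [← Equiv.Perm.mul_apply, ← zpow_add_one]
    · rintro ⟨a, rfl⟩
      refine ⟨fun i => e ((E ^ i) (E.symm a)), ⟨E.symm a, rfl⟩, ?_⟩
      funext i
      show e ((E ^ ((i : ℤ) + 1)) (E.symm a)) = e ((E ^ (i : ℤ)) a)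
      congr 1
      rw [zpow_add_one, Equiv.Perm.mul_apply, Equiv.apply_symm_apply]
  · -- injectivity
    intro x hx y hy hxy
    funext i
    have h1 : (fun i => (((fun a => ((e a : Fin (Fintype.card A)), (0 : Fin 1))) (x i)).1)) =
        (fun i => (((fun a => ((e a : Fin (Fintype.card A)), (0 : Fin 1))) (y i)).1)) :=
      congrArg Prod.fst hxy
    have h2 : e (x i) = e (y i) := congrFun h1 i
    exact e.injective h2
  · -- image
    ext p
    constructor
    · rintro ⟨x, hx, rfl⟩
      refine ⟨x 0, ?_⟩
      funext i
      simp only [psiCode]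
      congr 1
      exact (horbit x hx i).symm
    · intro hp
      obtain ⟨a, ha⟩ := hp
      refine ⟨fun i => (E ^ i) a, hmemSig a, ?_⟩
      have h2 : p.2 = fun _ : ℤ => (0 : Fin 1) := by
        funext i; exact Subsingleton.elim _ _
      rw [show p = (p.1, p.2) from rfl, ← ha, h2]
      rfl
  · -- window decoding
    intro x _ y _ j hw
    have h0 := hw 0 (by norm_num)
    simp only [Nat.cast_zero, sub_zero] at h0
    have : e (x j) = e (y j) := congrArg Prod.fst h0
    exact e.injective this

set_option maxHeartbeats 1000000 in
/-- Main induction on the size of the alphabet. -/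
theorem auxThm : ∀ (N : ℕ) (A : Type u) [Fintype A] [Nonempty A] (op : A → A → A),
    (∀ a b c : A, op a b = op a c → b = c) →
    (∀ a b c : A, op b a = op c a → b = c) →
    ∀ (T : A → A → Prop),
    (∀ a : A, ∃ b, T a b) →
    (∀ a : A, ∃ c, T c a) →
    (∀ a a' b b' : A, T a b → T a' b' → T (op a a') (op b b')) →
    Fintype.card A ≤ N → AuxProp T := by
  intro N
  induction N using Nat.strong_induction_on with
  | _ N IH =>
    intro A instA instNe op hleft hright T hsucc hpred hcompat hcard
    by_cases hbd : ∀ b a a' : A, T a b → T a' b → a = a'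
    · -- backward deterministic: then also forward deterministic, use the base case
      have hdet : ∀ a b b' : A, T a b → T a b' → b = b' := by
        have hG : ∀ b : A, T ((hpred b).choose) b := fun b => (hpred b).choose_spec
        have hTG : ∀ a b : A, T a b → a = (hpred b).choose := fun a b h => hbd b a _ h (hG b)
        have hGsurj : Function.Surjective (fun b => (hpred b).choose : A → A) := by
          intro a
          obtain ⟨b, hb⟩ := hsucc a
          exact ⟨b, (hTG a b hb).symm⟩
        have hGinj := Finite.injective_iff_surjective.mpr hGsurj
        intro a b b' hb hb'
        exact hGinj ((hTG a b hb).symm.trans (hTG a b' hb'))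
      exact base_case hsucc hpred hdet
    · push_neg at hbd
      obtain ⟨b₀, a₁, a₂, h1, h2, hne12⟩ := hbd
      -- quotient by the "same successor set" congruence
      letI sA : Setoid A := ⟨fun a a' => ∀ c, T a c ↔ T a' c,
        ⟨fun _ _ => Iff.rfl, fun h c => (h c).symm, fun h h' c => (h c).trans (h' c)⟩⟩
      letI : DecidableEq (Quotient sA) := Classical.decEq _
      letI : DecidableRel ((· ≈ ·) : A → A → Prop) := fun _ _ => Classical.propDecidable _
      letI instU : Fintype (Quotient sA) := Quotient.fintype sA
      have hcardU : Fintype.card (Quotient sA) < Fintype.card A :=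
        Fintype.card_lt_of_surjective_not_injective (Quotient.mk sA) Quotient.mk_surjective
          (fun hi => hne12 (hi (Quotient.sound (sameS hleft hright hcompat h1 h2))))
      -- quotient operation
      let opU : Quotient sA → Quotient sA → Quotient sA :=
        Quotient.map₂ op (fun a a' haa' b b' hbb' => congS hleft hright hsucc hcompat haa' hbb')
      have opU_mk : ∀ a b : A, opU ⟦a⟧ ⟦b⟧ = ⟦op a b⟧ := fun a b => rfl
      have hleftU : ∀ u v v' : Quotient sA, opU u v = opU u v' → v = v' := by
        intro u
        have hsurj : Function.Surjective (opU u) := by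
          intro c
          obtain ⟨a, rfl⟩ := Quotient.exists_rep u
          obtain ⟨z, rfl⟩ := Quotient.exists_rep c
          obtain ⟨x, hx⟩ := ldiv hleft a z
          exact ⟨⟦x⟧, (opU_mk a x).trans (congrArg (Quotient.mk sA) hx)⟩
        exact fun v v' h => Finite.injective_iff_surjective.mpr hsurj h
      have hrightU : ∀ u v v' : Quotient sA, opU v u = opU v' u → v = v' := by
        intro u
        have hsurj : Function.Surjective (fun v => opU v u) := by
          intro c
          obtain ⟨a, rfl⟩ := Quotient.exists_rep u
          obtain ⟨z, rfl⟩ := Quotient.exists_rep c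
          obtain ⟨x, hx⟩ := rdiv hright a z
          exact ⟨⟦x⟧, (opU_mk x a).trans (congrArg (Quotient.mk sA) hx)⟩
        exact fun v v' h => Finite.injective_iff_surjective.mpr hsurj h
      -- quotient transition relation
      let TU : Quotient sA → Quotient sA → Prop :=
        fun u v => ∃ a b : A, T a b ∧ ⟦a⟧ = u ∧ ⟦b⟧ = v
      have hsuccU : ∀ u : Quotient sA, ∃ v, TU u v := by
        intro u
        obtain ⟨a, rfl⟩ := Quotient.exists_rep u
        obtain ⟨b, hb⟩ := hsucc a
        exact ⟨⟦b⟧, a, b, hb, rfl, rfl⟩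
      have hpredU : ∀ u : Quotient sA, ∃ v, TU v u := by
        intro u
        obtain ⟨a, rfl⟩ := Quotient.exists_rep u
        obtain ⟨b, hb⟩ := hpred a
        exact ⟨⟦b⟧, b, a, hb, rfl, rfl⟩
      have hcompatU : ∀ u u' v v' : Quotient sA, TU u v → TU u' v' → TU (opU u u') (opU v v') := by
        rintro u u' v v' ⟨a, b, hab, rfl, rfl⟩ ⟨a', b', hab', rfl, rfl⟩
        exact ⟨op a a', op b b', hcompat _ _ _ _ hab hab', (opU_mk a a').symm, (opU_mk b b').symm⟩
      -- apply the induction hypothesis to the quotient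
      haveI : Nonempty (Quotient sA) := ⟨⟦a₁⟧⟩
      obtain ⟨nU, hnU, B, instB, Fset, πU, kU, hkU, hFne, hFfin, hFshift, hinjU, himgU, hwinU⟩ :=
        IH (Fintype.card (Quotient sA)) (lt_of_lt_of_le hcardU hcard) (Quotient sA)
          opU hleftU hrightU TU hsuccU hpredU hcompatU (le_refl _)
      -- meet-class labels
      have hd : ∀ a : A, (meetF T a).card = (meetF T a₁).card :=
        fun a => meetF_card_eq hleft hright hsucc hpred hcompat a a₁
      set d := (meetF T a₁).card with hd_def
      have hcardcoe : ∀ a : A, Fintype.card (meetF T a) = d := by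
        intro a; rw [Fintype.card_coe]; exact hd a
      have hd1 : 1 ≤ d := Finset.card_pos.mpr ⟨a₁, self_mem_meetF a₁⟩
      let w : A → Fin d := fun a => Fintype.equivFinOfCardEq (hcardcoe a) ⟨a, self_mem_meetF a⟩
      have w_inj : ∀ a b : A, b ∈ meetF T a → w a = w b → a = b := by
        intro a b hb hw
        have heq : w b = Fintype.equivFinOfCardEq (hcardcoe a) ⟨b, hb⟩ :=
          finlabel_congr (meetF_eq_of_mem hb) (hcardcoe b) (hcardcoe a) b (self_mem_meetF b) hb
        rw [heq] at hw
        have := (Fintype.equivFinOfCardEq (hcardcoe a)).injective hw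
        exact congrArg Subtype.val this
      have w_surj : ∀ (a : A) (l : Fin d), ∃ b ∈ meetF T a, w b = l := by
        intro a l
        set b' := (Fintype.equivFinOfCardEq (hcardcoe a)).symm l with hb'_def
        refine ⟨b'.1, b'.2, ?_⟩
        have heq : w b'.1 = Fintype.equivFinOfCardEq (hcardcoe a) ⟨b'.1, b'.2⟩ :=
          finlabel_congr (meetF_eq_of_mem b'.2) (hcardcoe b'.1) (hcardcoe a) b'.1
            (self_mem_meetF _) b'.2
        rw [heq, show (⟨b'.1, b'.2⟩ : {z // z ∈ meetF T a}) = b' from rfl, hb'_def]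
        exact (Fintype.equivFinOfCardEq (hcardcoe a)).apply_symm_apply l
      -- the new coding map
      let π : A → B × Fin (nU * d) := fun a => ((πU ⟦a⟧).1, finProdFinEquiv ((πU ⟦a⟧).2, w a))
      have hπ_split : ∀ a b : A, π a = π b → πU ⟦a⟧ = πU ⟦b⟧ ∧ w a = w b := by
        intro a b h
        have h' : ((πU ⟦a⟧).1, finProdFinEquiv ((πU ⟦a⟧).2, w a)) =
            ((πU ⟦b⟧).1, finProdFinEquiv ((πU ⟦b⟧).2, w b)) := h
        obtain ⟨h1, h2⟩ := Prod.mk.inj h'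
        have h3 := finProdFinEquiv.injective h2
        obtain ⟨h4, h5⟩ := Prod.mk.inj h3
        exact ⟨Prod.ext h1 h4, h5⟩
      have hq : ∀ x ∈ SigmaSet T, (fun i => (⟦x i⟧ : Quotient sA)) ∈ SigmaSet TU :=
        fun x hx i => ⟨x i, x (i + 1), hx i, rfl, rfl⟩
      have hkey : ∀ x ∈ SigmaSet T, ∀ y ∈ SigmaSet T, ∀ j : ℤ,
          (⟦x j⟧ : Quotient sA) = ⟦y j⟧ → (⟦x (j - 1)⟧ : Quotient sA) = ⟦y (j - 1)⟧ →
          w (x j) = w (y j) → x j = y j := by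
        intro x hx y hy j hj hj1 hw
        have hxx : T (x (j - 1)) (x j) := by
          have h := hx (j - 1); rw [show j - 1 + 1 = j by ring] at h; exact h
        have hyy : T (y (j - 1)) (y j) := by
          have h := hy (j - 1); rw [show j - 1 + 1 = j by ring] at h; exact h
        have hSx : ∀ c, T (x (j - 1)) c ↔ T (y (j - 1)) c := Quotient.exact hj1
        have hxy : T (x (j - 1)) (y j) := (hSx _).mpr hyy
        have hP : ∀ c, T c (x j) ↔ T c (y j) := sameP hleft hright hcompat hxx hxy
        have hS : ∀ c, T (x j) c ↔ T (y j) c := Quotient.exact hj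
        exact w_inj _ _ (mem_meetF_iff.mpr ⟨hS, hP⟩) hw
      refine ⟨nU * d, Nat.one_le_iff_ne_zero.mpr (Nat.mul_ne_zero (by omega) (by omega)),
        B, instB, Fset, π, kU + 1, by omega, hFne, hFfin, hFshift, ?_, ?_, ?_⟩
      · -- injectivity
        intro x hx y hy hxy
        have hπi : ∀ i : ℤ, π (x i) = π (y i) := by
          intro i
          exact Prod.ext (congrFun (congrArg Prod.fst hxy) i) (congrFun (congrArg Prod.snd hxy) i)
        have hsplit := fun i => hπ_split _ _ (hπi i)
        have hqeq : psiCode πU (fun i => (⟦x i⟧ : Quotient sA)) =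
            psiCode πU (fun i => (⟦y i⟧ : Quotient sA)) :=
          Prod.ext (funext fun i => congrArg Prod.fst (hsplit i).1)
            (funext fun i => congrArg Prod.snd (hsplit i).1)
        have hquv := hinjU (hq x hx) (hq y hy) hqeq
        funext j
        exact hkey x hx y hy j (congrFun hquv j) (congrFun hquv (j - 1)) (hsplit j).2
      · -- image
        ext p
        constructor
        · rintro ⟨x, hx, rfl⟩
          have hmem : psiCode πU (fun i => (⟦x i⟧ : Quotient sA)) ∈
              psiCode πU '' SigmaSet TU := Set.mem_image_of_mem _ (hq x hx)
          rw [himgU] at hmem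
          exact hmem
        · intro hp
          have hp' : ((p.1, fun i => (finProdFinEquiv.symm (p.2 i)).1) :
              (ℤ → B) × (ℤ → Fin nU)) ∈ {q : (ℤ → B) × (ℤ → Fin nU) | q.1 ∈ Fset} := hp
          rw [← himgU] at hp'
          obtain ⟨xb, hxb, hψxb⟩ := hp'
          have hstep : ∀ i : ℤ, ∃ c : A, (⟦c⟧ : Quotient sA) = xb i ∧
              w c = (finProdFinEquiv.symm (p.2 i)).2 ∧
              ∀ a : A, (⟦a⟧ : Quotient sA) = xb (i - 1) → T a c := by
            intro i
            have hTUi : TU (xb (i - 1)) (xb i) := by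
              have h := hxb (i - 1); rw [show i - 1 + 1 = i by ring] at h; exact h
            obtain ⟨a', b', hab', ha', hb'⟩ := hTUi
            obtain ⟨c, hcmem, hcw⟩ := w_surj b' (finProdFinEquiv.symm (p.2 i)).2
            rw [mem_meetF_iff] at hcmem
            refine ⟨c, ?_, hcw, ?_⟩
            · rw [← hb']; exact (Quotient.sound hcmem.1).symm
            · intro a ha
              have hsame : ∀ z, T a z ↔ T a' z := Quotient.exact (ha.trans ha'.symm)
              exact (hcmem.2 a).mp ((hsame b').mpr hab')
          refine ⟨fun i => (hstep i).choose, ?_, ?_⟩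
          · intro i
            apply ((hstep (i + 1)).choose_spec.2.2)
            rw [show i + 1 - 1 = i by ring]
            exact (hstep i).choose_spec.1
          · apply Prod.ext
            · funext i
              show (πU ⟦(hstep i).choose⟧).1 = p.1 i
              rw [(hstep i).choose_spec.1]
              exact congrFun (congrArg Prod.fst hψxb) i
            · funext i
              show finProdFinEquiv ((πU ⟦(hstep i).choose⟧).2, w ((hstep i).choose)) = p.2 i
              rw [(hstep i).choose_spec.1, (hstep i).choose_spec.2.1]
              have h2 : (πU (xb i)).2 = (finProdFinEquiv.symm (p.2 i)).1 :=
                congrFun (congrArg Prod.snd hψxb) i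
              rw [h2, Prod.mk.eta]
              exact finProdFinEquiv.apply_symm_apply (p.2 i)
      · -- window decoding
        intro x hx y hy j hwnd
        have hπU : ∀ m : ℕ, m < kU + 1 →
            πU ⟦x (j - (m : ℤ))⟧ = πU ⟦y (j - (m : ℤ))⟧ ∧
            w (x (j - (m : ℤ))) = w (y (j - (m : ℤ))) :=
          fun m hm => hπ_split _ _ (hwnd m hm)
        have hj : (⟦x j⟧ : Quotient sA) = ⟦y j⟧ := by
          apply hwinU (fun i => (⟦x i⟧ : Quotient sA)) (hq x hx)
            (fun i => (⟦y i⟧ : Quotient sA)) (hq y hy) j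
          intro m hm
          exact (hπU m (by omega)).1
        have hj1 : (⟦x (j - 1)⟧ : Quotient sA) = ⟦y (j - 1)⟧ := by
          apply hwinU (fun i => (⟦x i⟧ : Quotient sA)) (hq x hx)
            (fun i => (⟦y i⟧ : Quotient sA)) (hq y hy) (j - 1)
          intro m hm
          have h := (hπU (m + 1) (by omega)).1
          have harg : j - ((m + 1 : ℕ) : ℤ) = j - 1 - (m : ℤ) := by push_cast; ring
          rw [harg] at h
          exact h
        have h0 := (hπU 0 (by omega)).2
        rw [Nat.cast_zero, sub_zero] at h0
        exact hkey x hx y hy j hj hj1 h0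

end Lemmas

end QG

set_option maxHeartbeats 1000000 in
theorem statement16 {A : Type*} [Fintype A] [Nonempty A]
    (op : A → A → A)
    (hleft : ∀ a b c : A, op a b = op a c → b = c)
    (hright : ∀ a b c : A, op b a = op c a → b = c)
    (T : A → A → Prop)
    (hsucc : ∀ a : A, ∃ b, T a b)
    (hpred : ∀ a : A, ∃ c, T c a)
    (hcompat : ∀ a a' b b' : A, T a b → T a' b' → T (op a a') (op b b')) :
    ∃ (n : ℕ), 1 ≤ n ∧
      ∃ (B : Type) (_ : Fintype B) (𝔽 : Set (ℤ → B)) (π : A → B × Fin n) (k : ℕ),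
        1 ≤ k ∧ 𝔽.Nonempty ∧ 𝔽.Finite ∧
        (fun f : ℤ → B => (fun i => f (i + 1) : ℤ → B)) '' 𝔽 = 𝔽 ∧
        ∃ ρ : (Fin k → B × Fin n) → (Fin k → B × Fin n) → B × Fin n,
          Set.InjOn (psiCode π) {x : ℤ → A | ∀ i : ℤ, T (x i) (x (i + 1))} ∧
          psiCode π '' {x : ℤ → A | ∀ i : ℤ, T (x i) (x (i + 1))} =
            {p : (ℤ → B) × (ℤ → Fin n) | p.1 ∈ 𝔽} ∧
          (∀ x ∈ {x : ℤ → A | ∀ i : ℤ, T (x i) (x (i + 1))},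
            psiCode π (fun i => x (i + 1)) =
              ((fun i => (psiCode π x).1 (i + 1)), (fun i => (psiCode π x).2 (i + 1)))) ∧
          (∀ x ∈ {x : ℤ → A | ∀ i : ℤ, T (x i) (x (i + 1))},
            ∀ y ∈ {x : ℤ → A | ∀ i : ℤ, T (x i) (x (i + 1))},
            ∀ j : ℤ, π (op (x j) (y j)) =
              ρ (fun m => π (x (j - ((k - 1 : ℕ) : ℤ) + (m : ℤ))))
                (fun m => π (y (j - ((k - 1 : ℕ) : ℤ) + (m : ℤ))))) := by
  classical
  obtain ⟨n, hn, B, instB, Fset, π, k, hk, hFne, hFfin, hFshift, hinj, himg, hwin⟩ :=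
    auxThm (Fintype.card A) A op hleft hright T hsucc hpred hcompat (le_refl _)
  have hBne : Nonempty (B × Fin n) := ⟨(hFne.some 0, ⟨0, hn⟩)⟩
  -- translates of points of the shift stay in the shift
  have hshiftmem : ∀ x ∈ SigmaSet T, ∀ t : ℤ, (fun i => x (i + t)) ∈ SigmaSet T := by
    intro x hx t i
    have h := hx (i + t)
    rw [show i + t + 1 = i + 1 + t by ring] at h
    exact h
  -- the local rule
  set c : ℤ := ((k - 1 : ℕ) : ℤ) with hc
  let ρ : (Fin k → B × Fin n) → (Fin k → B × Fin n) → B × Fin n := fun W₁ W₂ =>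
    if h : (∃ x, x ∈ SigmaSet T ∧ ∀ m : Fin k, π (x ((m : ℤ) - c)) = W₁ m) ∧
           (∃ y, y ∈ SigmaSet T ∧ ∀ m : Fin k, π (y ((m : ℤ) - c)) = W₂ m)
    then π (op (h.1.choose 0) (h.2.choose 0))
    else Classical.choice hBne
  -- a decoding fact: the window of values determines the letter at the right edge
  have hdec : ∀ z ∈ SigmaSet T, ∀ x' ∈ SigmaSet T,
      (∀ m : Fin k, π (z ((m : ℤ) - c)) = π (x' ((m : ℤ) - c))) → z 0 = x' 0 := by
    intro z hz x' hx' hagree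
    apply hwin z hz x' hx' 0
    intro m hm
    have h := hagree ⟨k - 1 - m, by omega⟩
    have harg : ((⟨k - 1 - m, by omega⟩ : Fin k) : ℤ) - c = 0 - (m : ℤ) := by
      rw [hc]
      have h1 : ((⟨k - 1 - m, by omega⟩ : Fin k) : ℤ) = ((k - 1 - m : ℕ) : ℤ) := rfl
      rw [h1]
      omega
    rw [harg] at h
    exact h
  refine ⟨n, hn, B, instB, Fset, π, k, hk, hFne, hFfin, hFshift, ρ, hinj, himg, ?_, ?_⟩
  · intro x _
    rfl
  · intro x hx y hy j
    have hcond : (∃ x', x' ∈ SigmaSet T ∧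
          ∀ m : Fin k, π (x' ((m : ℤ) - c)) = π (x (j - c + (m : ℤ)))) ∧
        (∃ y', y' ∈ SigmaSet T ∧
          ∀ m : Fin k, π (y' ((m : ℤ) - c)) = π (y (j - c + (m : ℤ)))) := by
      constructor
      · refine ⟨fun i => x (i + j), hshiftmem x hx j, fun m => ?_⟩
        show π (x ((m : ℤ) - c + j)) = π (x (j - c + (m : ℤ)))
        rw [show (m : ℤ) - c + j = j - c + (m : ℤ) by ring]
      · refine ⟨fun i => y (i + j), hshiftmem y hy j, fun m => ?_⟩
        show π (y ((m : ℤ) - c + j)) = π (y (j - c + (m : ℤ)))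
        rw [show (m : ℤ) - c + j = j - c + (m : ℤ) by ring]
    have hrw : ρ (fun m => π (x (j - c + (m : ℤ)))) (fun m => π (y (j - c + (m : ℤ)))) =
        π (op (hcond.1.choose 0) (hcond.2.choose 0)) := dif_pos hcond
    have hz0 : hcond.1.choose 0 = x j := by
      have hspec := hcond.1.choose_spec
      have h := hdec (hcond.1.choose) hspec.1 (fun i => x (i + j)) (hshiftmem x hx j) ?_
      · simpa using h
      · intro m
        show π (hcond.1.choose ((m : ℤ) - c)) = π (x ((m : ℤ) - c + j))
        rw [show (m : ℤ) - c + j = j - c + (m : ℤ) by ring]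
        exact hspec.2 m
    have hw0 : hcond.2.choose 0 = y j := by
      have hspec := hcond.2.choose_spec
      have h := hdec (hcond.2.choose) hspec.1 (fun i => y (i + j)) (hshiftmem y hy j) ?_
      · simpa using h
      · intro m
        show π (hcond.2.choose ((m : ℤ) - c)) = π (y ((m : ℤ) - c + j))
        rw [show (m : ℤ) - c + j = j - c + (m : ℤ) by ring]
        exact hspec.2 m
    rw [hrw, hz0, hw0]
end
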